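/- arXiv:math/0610987 — 10 statements merged into one kernel-verified Lean document; each statement's English description precedes it below -/
import Mathlib

section
/- QR factorization for bounded invertible operators: every bounded invertible operator A on ℓ²(ℕ) can be written uniquely as A = QR where Q is unitary and R is bounded, upper triangular with strictly positive diagonal entries (with respect to the standard basis). Moreover Qδ₀ = Aδ₀ / ‖Aδ₀‖. -/
open scoped InnerProductSpace

noncomputable section

abbrev L2N : Type := lp (fun _ : ℕ => ℂ) 2

def delta (n : ℕ) : L2N := lp.single 2 n (1 : ℂ)

def PosUpperTriangular (R : L2N →L[ℂ] L2N) : Prop :=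
  (∀ r s : ℕ, s < r → ⟪delta r, R (delta s)⟫_ℂ = 0) ∧
    (∀ r : ℕ, 0 < (⟪delta r, R (delta r)⟫_ℂ).re ∧ (⟪delta r, R (delta r)⟫_ℂ).im = 0)

lemma delta_orthonormal : Orthonormal ℂ delta := by
  rw [orthonormal_iff_ite]
  intro i j
  rw [delta, delta, lp.inner_single_left]
  by_cases h : i = j
  · subst h; simp [lp.single_apply_self]
  · rw [lp.single_apply_ne 2 j _ h]; simp [h]

lemma inner_delta_apply (n : ℕ) (x : L2N) : ⟪delta n, x⟫_ℂ = x n := by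
  rw [delta, lp.inner_single_left]
  simp [RCLike.inner_apply]

lemma span_delta_orthogonal_eq_bot :
    (Submodule.span ℂ (Set.range delta))ᗮ = ⊥ := by
  rw [Submodule.eq_bot_iff]
  intro x hx
  refine lp.ext (funext fun n => ?_)
  have h := (Submodule.mem_orthogonal _ x).mp hx (delta n) (Submodule.subset_span ⟨n, rfl⟩)
  rw [inner_delta_apply] at h
  exact h

lemma dense_span_delta :
    Dense ((Submodule.span ℂ (Set.range delta) : Submodule ℂ L2N) : Set L2N) := by
  have h := Submodule.orthogonal_orthogonal_eq_closure (Submodule.span ℂ (Set.range delta))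
  rw [span_delta_orthogonal_eq_bot, Submodule.bot_orthogonal_eq_top] at h
  rw [dense_iff_closure_eq, ← Submodule.topologicalClosure_coe, ← h, Submodule.top_coe]

end
noncomputable section
open Submodule Finset InnerProductSpace

variable (A : L2N ≃L[ℂ] L2N)

def AD : ℕ → L2N := fun n => A (delta n)

lemma AD_li : LinearIndependent ℂ (AD A) := by
  have h := delta_orthonormal.linearIndependent
  have := h.map' A.toLinearEquiv.toLinearMap A.toLinearEquiv.ker
  exact this

lemma AD_orthogonal_eq_bot : (span ℂ (Set.range (AD A)))ᗮ = ⊥ := by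
  rw [Submodule.eq_bot_iff]
  intro x hx
  set φ : L2N →L[ℂ] ℂ := (innerSL ℂ x).comp (A : L2N →L[ℂ] L2N) with hφ
  have hzero : φ = 0 := by
    apply ContinuousLinearMap.ext_on dense_span_delta
    rintro _ ⟨n, rfl⟩
    have h := (Submodule.mem_orthogonal _ x).mp hx (AD A n) (Submodule.subset_span ⟨n, rfl⟩)
    show ⟪x, A (delta n)⟫_ℂ = 0
    rw [← inner_conj_symm]
    rw [show ⟪A (delta n), x⟫_ℂ = 0 from h]
    simp
  have h2 : φ (A.symm x) = 0 := by rw [hzero]; rfl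
  have h3 : ⟪x, x⟫_ℂ = 0 := by
    simpa [hφ] using h2
  exact inner_self_eq_zero.mp h3

def gsn : ℕ → L2N := gramSchmidtNormed ℂ (AD A)

lemma gsn_orthonormal : Orthonormal ℂ (gsn A) := gramSchmidtNormed_orthonormal (AD_li A)

lemma gsn_orthogonal_eq_bot : (span ℂ (Set.range (gsn A)))ᗮ = ⊥ := by
  rw [gsn, span_gramSchmidtNormed_range, span_gramSchmidt]
  exact AD_orthogonal_eq_bot A

end
noncomputable section
open Submodule Finset InnerProductSpace

variable (A : L2N ≃L[ℂ] L2N)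

def bA : HilbertBasis ℕ ℂ L2N :=
  HilbertBasis.mkOfOrthogonalEqBot (gsn_orthonormal A) (gsn_orthogonal_eq_bot A)

def Q0 : L2N ≃ₗᵢ[ℂ] L2N := (bA A).repr.symm

lemma Q0_delta (n : ℕ) : Q0 A (delta n) = gsn A n := by
  have h1 : (bA A).repr.symm (lp.single 2 n (1:ℂ)) = bA A n := (bA A).repr_symm_single n
  have h2 : ⇑(bA A) = gsn A := HilbertBasis.coe_mkOfOrthogonalEqBot _ _
  rw [Q0, delta, h1, h2]

end
section
open Submodule Finset InnerProductSpace

variable (A : L2N ≃L[ℂ] L2N)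

lemma gdef (n : ℕ) : gramSchmidt ℂ (AD A) n
    = AD A n - ∑ i ∈ Finset.range n, ⟪gsn A i, AD A n⟫_ℂ • gsn A i := by
  have hterm : ∀ i : ℕ, ⟪gsn A i, AD A n⟫_ℂ • gsn A i
      = (⟪gramSchmidt ℂ (AD A) i, AD A n⟫_ℂ / (‖gramSchmidt ℂ (AD A) i‖ : ℂ)^2)
          • gramSchmidt ℂ (AD A) i := by
    intro i
    rw [gsn, gramSchmidtNormed, inner_smul_left, smul_smul]
    congr 1
    rw [map_inv₀, RCLike.conj_ofReal]
    ring_nf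
    exact mul_comm _ _
  have h := (gramSchmidt_def'' ℂ (AD A) n).symm
  rw [show Finset.Iio n = Finset.range n from Nat.Iio_eq_range n] at h
  rw [eq_sub_iff_add_eq]
  simp only [hterm]
  exact h

lemma key (Q R : L2N →L[ℂ] L2N) (hQ : Q ∈ unitary (L2N →L[ℂ] L2N))
    (hR : PosUpperTriangular R) (hA : (A : L2N →L[ℂ] L2N) = Q ∘L R) :
    ∀ n, Q (delta n) = gsn A n := by
  intro n
  induction n using Nat.strong_induction_on with
  | _ n IH =>
  have hRn : R (delta n) = ∑ k ∈ Finset.range (n+1), ⟪delta k, R (delta n)⟫_ℂ • delta k := by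
    refine lp.ext (funext fun j => ?_)
    rw [lp.coeFn_sum, Finset.sum_apply]
    have hterm : ∀ k, (⟪delta k, R (delta n)⟫_ℂ • delta k : L2N) j
        = if j = k then ⟪delta k, R (delta n)⟫_ℂ else 0 := by
      intro k
      rw [lp.coeFn_smul, Pi.smul_apply, delta, lp.single_apply]
      by_cases h : j = k
      · subst h; simp [lp.single_apply_self]
      · simp [h, lp.single_apply_ne 2 k _ h]
    simp only [hterm]
    rw [Finset.sum_ite_eq (Finset.range (n+1)) j]
    by_cases hj : j ∈ Finset.range (n+1)
    · rw [if_pos hj, inner_delta_apply]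
    · rw [if_neg hj]
      have hjn : n < j := by simpa using Nat.lt_of_succ_le (not_lt.mp (by simpa using hj))
      have := hR.1 j n hjn
      rw [inner_delta_apply] at this
      exact this
  have hsum : (A : L2N →L[ℂ] L2N) (delta n)
      = ∑ k ∈ Finset.range (n+1), ⟪delta k, R (delta n)⟫_ℂ • Q (delta k) := by
    have h1 : (A : L2N →L[ℂ] L2N) (delta n) = Q (R (delta n)) := by rw [hA]; rfl
    rw [h1]
    conv_lhs => rw [hRn]
    rw [map_sum]
    simp only [map_smul]
  have hc : ∀ k, ⟪delta k, R (delta n)⟫_ℂ = ⟪Q (delta k), (A : L2N →L[ℂ] L2N) (delta n)⟫_ℂ := by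
    intro k
    rw [hA]
    show _ = ⟪Q (delta k), Q (R (delta n))⟫_ℂ
    rw [ContinuousLinearMap.inner_map_map_of_mem_unitary hQ]
  have hAD : (A : L2N →L[ℂ] L2N) (delta n) = AD A n := rfl
  have hmain : ⟪delta n, R (delta n)⟫_ℂ • Q (delta n) = gramSchmidt ℂ (AD A) n := by
    rw [gdef, ← hAD]
    rw [Finset.sum_range_succ] at hsum
    have h2 : ∑ k ∈ Finset.range n, ⟪delta k, R (delta n)⟫_ℂ • Q (delta k)
        = ∑ k ∈ Finset.range n, ⟪gsn A k, (A : L2N →L[ℂ] L2N) (delta n)⟫_ℂ • gsn A k := by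
      refine Finset.sum_congr rfl fun k hk => ?_
      rw [hc k, IH k (Finset.mem_range.mp hk)]
    rw [h2] at hsum
    rw [eq_sub_iff_add_eq, add_comm]
    exact hsum.symm
  set c := ⟪delta n, R (delta n)⟫_ℂ with hcdef
  have hcre : c = ((c.re : ℝ) : ℂ) := by
    refine Complex.ext rfl ?_
    exact (hR.2 n).2
  have hcpos : 0 < c.re := (hR.2 n).1
  have hQn : ‖Q (delta n)‖ = 1 := by
    rw [ContinuousLinearMap.norm_map_of_mem_unitary hQ]
    exact delta_orthonormal.1 n
  have hnorm : c.re = ‖gramSchmidt ℂ (AD A) n‖ := by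
    have := congrArg norm hmain
    rw [norm_smul, hQn, mul_one] at this
    rw [← this, hcre]
    simp [Complex.norm_real, abs_of_pos hcpos]
  have hc0 : c ≠ 0 := by
    rw [hcre]
    exact_mod_cast (Complex.ofReal_ne_zero.mpr hcpos.ne')
  calc Q (delta n) = c⁻¹ • (c • Q (delta n)) := by rw [smul_smul, inv_mul_cancel₀ hc0, one_smul]
    _ = c⁻¹ • gramSchmidt ℂ (AD A) n := by rw [hmain]
    _ = gsn A n := by
        rw [gsn, gramSchmidtNormed]
        congr 1
        rw [← hnorm, inv_inj]
        exact_mod_cast hcre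

end
section
open Submodule Finset InnerProductSpace

variable (A : L2N ≃L[ℂ] L2N)

lemma AD_expand (s : ℕ) : AD A s = gramSchmidt ℂ (AD A) s
    + ∑ i ∈ Finset.range s, ⟪gsn A i, AD A s⟫_ℂ • gsn A i := by
  rw [gdef A s]; abel

lemma inner_gsn_AD_of_lt {r s : ℕ} (h : s < r) : ⟪gsn A r, AD A s⟫_ℂ = 0 := by
  rw [AD_expand A s, inner_add_right, inner_sum]
  have h1 : ⟪gsn A r, gramSchmidt ℂ (AD A) s⟫_ℂ = 0 := by
    rw [gsn, gramSchmidtNormed, inner_smul_left,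
      gramSchmidt_orthogonal ℂ (AD A) (Nat.lt_irrefl _ ∘ (· ▸ h)), mul_zero]
  have h2 : ∀ i ∈ Finset.range s, ⟪gsn A r, ⟪gsn A i, AD A s⟫_ℂ • gsn A i⟫_ℂ = 0 := by
    intro i hi
    have his : i < s := Finset.mem_range.mp hi
    rw [inner_smul_right, (gsn_orthonormal A).2 (by omega : r ≠ i), mul_zero]
  rw [h1, Finset.sum_congr rfl h2, Finset.sum_const_zero, add_zero]

lemma inner_gsn_AD_self (r : ℕ) :
    ⟪gsn A r, AD A r⟫_ℂ = ((‖gramSchmidt ℂ (AD A) r‖ : ℝ) : ℂ) := by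
  rw [AD_expand A r, inner_add_right, inner_sum]
  have h2 : ∀ i ∈ Finset.range r, ⟪gsn A r, ⟪gsn A i, AD A r⟫_ℂ • gsn A i⟫_ℂ = 0 := by
    intro i hi
    have hir : i < r := Finset.mem_range.mp hi
    rw [inner_smul_right, (gsn_orthonormal A).2 (by omega : r ≠ i), mul_zero]
  rw [Finset.sum_congr rfl h2, Finset.sum_const_zero, add_zero]
  rw [gsn, gramSchmidtNormed, inner_smul_left, map_inv₀, RCLike.conj_ofReal]
  rw [inner_self_eq_norm_sq_to_K]
  have hne : gramSchmidt ℂ (AD A) r ≠ 0 := gramSchmidt_ne_zero r (AD_li A)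
  have hnorm : (‖gramSchmidt ℂ (AD A) r‖ : ℂ) ≠ 0 := by
    exact_mod_cast norm_ne_zero_iff.mpr hne
  field_simp
  rfl

lemma gs_pos (r : ℕ) : 0 < ‖gramSchmidt ℂ (AD A) r‖ :=
  norm_pos_iff.mpr (gramSchmidt_ne_zero r (AD_li A))

lemma existsQR : ∃ Q R : L2N →L[ℂ] L2N, Q ∈ unitary (L2N →L[ℂ] L2N) ∧
    PosUpperTriangular R ∧ (A : L2N →L[ℂ] L2N) = Q ∘L R := by
  refine ⟨((Q0 A : L2N →L[ℂ] L2N)),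
    ((Q0 A).symm : L2N →L[ℂ] L2N) ∘L (A : L2N →L[ℂ] L2N), ?_, ?_, ?_⟩
  · exact (Unitary.linearIsometryEquiv.symm (Q0 A)).property
  · have hinner : ∀ r s : ℕ,
        ⟪delta r, (((Q0 A).symm : L2N →L[ℂ] L2N) ∘L (A : L2N →L[ℂ] L2N)) (delta s)⟫_ℂ
          = ⟪gsn A r, AD A s⟫_ℂ := by
      intro r s
      show ⟪delta r, (Q0 A).symm ((A : L2N →L[ℂ] L2N) (delta s))⟫_ℂ = _
      rw [← (Q0 A).inner_map_map, (Q0 A).apply_symm_apply, Q0_delta]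
      rfl
    constructor
    · intro r s hrs
      rw [hinner, inner_gsn_AD_of_lt A hrs]
    · intro r
      rw [hinner, inner_gsn_AD_self]
      constructor
      · simpa using gs_pos A r
      · simp
  · refine ContinuousLinearMap.ext fun x => ?_
    show (A : L2N →L[ℂ] L2N) x = Q0 A ((Q0 A).symm ((A : L2N →L[ℂ] L2N) x))
    rw [(Q0 A).apply_symm_apply]

end
/-- QR factorization: every bounded invertible operator `A` on `ℓ²(ℕ)` factors uniquely as
`A = QR` with `Q` unitary and `R` bounded positive upper triangular; moreover
`Qδ₀ = Aδ₀ / ‖Aδ₀‖`. -/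
theorem stmt_3 (A : L2N ≃L[ℂ] L2N) :
    (∃! p : (L2N →L[ℂ] L2N) × (L2N →L[ℂ] L2N),
        p.1 ∈ unitary (L2N →L[ℂ] L2N) ∧ PosUpperTriangular p.2 ∧
          (A : L2N →L[ℂ] L2N) = p.1 ∘L p.2) ∧
      ∀ p : (L2N →L[ℂ] L2N) × (L2N →L[ℂ] L2N),
        p.1 ∈ unitary (L2N →L[ℂ] L2N) → PosUpperTriangular p.2 →
        (A : L2N →L[ℂ] L2N) = p.1 ∘L p.2 →
        p.1 (delta 0) = ‖A (delta 0)‖⁻¹ • A (delta 0) := by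
  constructor
  · obtain ⟨Q, R, hQ, hR, hQR⟩ := existsQR A
    refine ⟨(Q, R), ⟨hQ, hR, hQR⟩, ?_⟩
    rintro ⟨Q', R'⟩ ⟨hQ', hR', hQR'⟩
    have hQeq : Q' = Q := by
      refine ContinuousLinearMap.ext_on dense_span_delta ?_
      rintro _ ⟨n, rfl⟩
      rw [key A Q' R' hQ' hR' hQR' n, key A Q R hQ hR hQR n]
    have hReq : R' = R := by
      have e1 : R' = star Q' * (A : L2N →L[ℂ] L2N) := by
        rw [hQR']
        show R' = star Q' * (Q' * R')
        rw [← mul_assoc, Unitary.star_mul_self_of_mem hQ', one_mul]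
      have e2 : R = star Q * (A : L2N →L[ℂ] L2N) := by
        rw [hQR]
        show R = star Q * (Q * R)
        rw [← mul_assoc, Unitary.star_mul_self_of_mem hQ, one_mul]
      rw [e1, e2, hQeq]
    exact Prod.ext hQeq hReq
  · intro p h1 h2 h3
    have hk := key A p.1 p.2 h1 h2 h3 0
    rw [hk, gsn, InnerProductSpace.gramSchmidtNormed]
    have hg0 : InnerProductSpace.gramSchmidt ℂ (AD A) 0 = AD A 0 := by
      rw [InnerProductSpace.gramSchmidt_def]; simp [Nat.Iio_eq_range]
    rw [hg0]
    show (‖AD A 0‖ : ℂ)⁻¹ • AD A 0 = ‖A (delta 0)‖⁻¹ • A (delta 0)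
    rw [RCLike.real_smul_eq_coe_smul (K := ℂ)]
    norm_cast
end

section
/- Let A be a bounded normal operator with a simple eigenvalue z₀ (with eigenvector φ) such that z₀ ∉ C := cvh(spec(A)\{z₀}), let z₁ ∈ C achieve the distance from z₀ to C, let P be an orthogonal projection, and let w₁ ≠ w₂ be two eigenvalues of PAP restricted to ran P. Then |w₁ − z₀| + |w₂ − z₀| ≥ |z₁ − z₀|. In particular, PAP↾ran P has at most one eigenvalue in the open disc {w : |w − z₀| < |z₁ − z₀|/2}. -/
open ContinuousLinearMap
open scoped ComplexInnerProductSpace ComplexConjugate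

lemma stmt5_aux_nonneg {H : Type*} [NormedAddCommGroup H] [InnerProductSpace ℂ H]
    [CompleteSpace H] (A : H →L[ℂ] H) (hA : IsStarNormal A) (g : ℂ → ℂ)
    (hgc : ContinuousOn g (spectrum ℂ A))
    (hg : ∀ z ∈ spectrum ℂ A, ∃ r : ℝ, 0 ≤ r ∧ g z = r) (f : H) :
    0 ≤ (⟪f, (cfc g A) f⟫).re := by
  set s : ℂ → ℂ := fun z => ((Real.sqrt (g z).re : ℝ) : ℂ) with hs
  have hsc : ContinuousOn s (spectrum ℂ A) :=
    Complex.continuous_ofReal.comp_continuousOn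
      (Real.continuous_sqrt.comp_continuousOn (Complex.continuous_re.comp_continuousOn hgc))
  have h1 : cfc g A = star (cfc s A) * cfc s A := by
    rw [← cfc_star s A,
      ← cfc_mul (fun x => star (s x)) s A (continuous_star.comp_continuousOn hsc) hsc]
    apply cfc_congr
    intro z hz
    obtain ⟨r, hr0, hr⟩ := hg z hz
    simp only [hs, hr, Complex.ofReal_re]
    rw [Complex.star_def, Complex.conj_ofReal, ← Complex.ofReal_mul, Real.mul_self_sqrt hr0]
  rw [h1]
  have h2 : (star (cfc s A) * cfc s A) f = (adjoint (cfc s A)) ((cfc s A) f) := by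
    rw [ContinuousLinearMap.mul_apply, star_eq_adjoint]
  rw [h2, adjoint_inner_right, inner_self_eq_norm_sq_to_K]
  exact_mod_cast sq_nonneg ‖(cfc s A) f‖

set_option maxHeartbeats 1000000 in
/-- Let `A` be a bounded normal operator with a simple eigenvalue `z₀` (eigenvector `φ`) with
`z₀ ∉ C := cvh(spec(A) \ {z₀})`, let `z₁ ∈ C` achieve the distance from `z₀` to `C`, let `P`
be an orthogonal projection and `w₁ ≠ w₂` two eigenvalues of `PAP` restricted to `ran P`.
Then `|w₁ − z₀| + |w₂ − z₀| ≥ |z₁ − z₀|`; in particular `w₁, w₂` cannot both lie in the open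
disc of radius `|z₁ − z₀|/2` about `z₀`. -/
theorem stmt_5 {H : Type*} [NormedAddCommGroup H] [InnerProductSpace ℂ H] [CompleteSpace H]
    (A : H →L[ℂ] H) (hA : IsStarNormal A)
    (z₀ : ℂ) (φ : H) (hφ : φ ≠ 0) (hAφ : A φ = z₀ • φ)
    (hsimple : ∀ ψ : H, A ψ = z₀ • ψ → ∃ c : ℂ, ψ = c • φ)
    (C : Set ℂ) (hC : C = closure (convexHull ℝ (spectrum ℂ A \ {z₀})))
    (hCne : C.Nonempty) (hz₀C : z₀ ∉ C)
    (z₁ : ℂ) (hz₁ : z₁ ∈ C) (hz₁min : ∀ w ∈ C, ‖z₀ - z₁‖ ≤ ‖z₀ - w‖)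
    (P : H →L[ℂ] H) (hPidem : P ∘L P = P) (hPsa : ContinuousLinearMap.adjoint P = P)
    (w₁ w₂ : ℂ) (hw : w₁ ≠ w₂)
    (η₁ : H) (hη₁ : η₁ ≠ 0) (hPη₁ : P η₁ = η₁) (heig₁ : P (A η₁) = w₁ • η₁)
    (η₂ : H) (hη₂ : η₂ ≠ 0) (hPη₂ : P η₂ = η₂) (heig₂ : P (A η₂) = w₂ • η₂) :
    ‖z₁ - z₀‖ ≤ ‖w₁ - z₀‖ + ‖w₂ - z₀‖ ∧
      ¬(‖w₁ - z₀‖ < ‖z₁ - z₀‖ / 2 ∧ ‖w₂ - z₀‖ < ‖z₁ - z₀‖ / 2) := by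
  classical
  set u : ℂ := z₀ - z₁ with hu
  set d : ℝ := ‖z₀ - z₁‖ with hd
  have hd0 : 0 < d := by
    rw [hd, norm_pos_iff, sub_ne_zero]
    rintro rfl; exact hz₀C hz₁
  have hCconv : Convex ℝ C := hC ▸ (convex_convexHull ℝ _).closure
  -- nearest-point / separation inequality
  have hLC : ∀ c ∈ C, d ^ 2 ≤ ((starRingEnd ℂ) u * (z₀ - c)).re := by
    intro c hc
    set w : ℂ := c - z₁ with hwdef
    have key : ((starRingEnd ℂ) u * w).re ≤ 0 := by
      by_contra hpos
      push_neg at hpos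
      set r : ℝ := ((starRingEnd ℂ) u * w).re with hr
      have hwne : w ≠ 0 := by
        intro h0; rw [h0, mul_zero] at hr; simp [hr] at hpos
      set K : ℝ := Complex.normSq w with hK
      have hK0 : 0 < K := by rw [hK]; exact Complex.normSq_pos.mpr hwne
      set t : ℝ := min 1 (r / K) with ht
      have ht0 : 0 < t := lt_min one_pos (div_pos hpos hK0)
      have ht1 : t ≤ 1 := min_le_left _ _
      have htr : t * K ≤ r := by
        calc t * K ≤ (r / K) * K := by
              have := min_le_right 1 (r / K); nlinarith
        _ = r := by field_simp
      have hmem : (1 - t) • z₁ + t • c ∈ C :=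
        hCconv hz₁ hc (by linarith) (le_of_lt ht0) (by ring)
      have hdist := hz₁min _ hmem
      have hpt : z₀ - ((1 - t) • z₁ + t • c) = u - (t : ℂ) * w := by
        simp only [Complex.real_smul, hu, hwdef]
        push_cast
        ring
      rw [hpt] at hdist
      have hsq : d ^ 2 ≤ ‖u - (t : ℂ) * w‖ ^ 2 := by
        nlinarith [norm_nonneg (u - (t : ℂ) * w)]
      have hexp : ‖u - (t : ℂ) * w‖ ^ 2 = d ^ 2 - 2 * t * r + t ^ 2 * K := by
        have hnu : Complex.normSq u = d ^ 2 := by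
          rw [hd, hu, Complex.normSq_eq_norm_sq]
        have e1 : ‖u - (t : ℂ) * w‖ ^ 2 = Complex.normSq (u - (t : ℂ) * w) := by
          rw [Complex.sq_norm]
        have e2 : (u * (starRingEnd ℂ) ((t : ℂ) * w)).re = t * r := by
          rw [map_mul, Complex.conj_ofReal]
          have e3 : u * ((t : ℂ) * (starRingEnd ℂ) w)
              = (t : ℂ) * (u * (starRingEnd ℂ) w) := by ring
          have e4 : u * (starRingEnd ℂ) w = (starRingEnd ℂ) ((starRingEnd ℂ) u * w) := by
            rw [map_mul, Complex.conj_conj]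
          rw [e3, e4, Complex.re_ofReal_mul, Complex.conj_re, hr]
        rw [e1, Complex.normSq_sub, hnu, e2, Complex.normSq_mul, Complex.normSq_ofReal, ← hK]
        ring
      nlinarith
    have h2 : (starRingEnd ℂ) u * (z₀ - c)
        = (starRingEnd ℂ) u * u - (starRingEnd ℂ) u * w := by
      rw [hu, hwdef]; ring
    have h3 : ((starRingEnd ℂ) u * u).re = d ^ 2 := by
      rw [mul_comm, Complex.mul_conj]
      norm_cast
      rw [hd, hu, Complex.normSq_eq_norm_sq]
    rw [h2, Complex.sub_re, h3]
    linarith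
  -- spectrum facts
  have hspecC : ∀ z ∈ spectrum ℂ A, z ≠ z₀ → z ∈ C := fun z hz hzne =>
    hC ▸ subset_closure (subset_convexHull ℝ _ ⟨hz, hzne⟩)
  have hdistspec : ∀ z ∈ spectrum ℂ A, z ≠ z₀ → d ≤ ‖z - z₀‖ := by
    intro z hz hne
    calc d ≤ ‖z₀ - z‖ := hz₁min z (hspecC z hz hne)
    _ = ‖z - z₀‖ := norm_sub_rev _ _
  -- the functions used in the functional calculus
  set g : ℂ → ℂ := fun z => ((((starRingEnd ℂ) u * (z₀ - z)).re : ℝ) : ℂ) with hgdef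
  set qq : ℂ → ℂ := fun z => ((max 0 (1 - ‖z - z₀‖ / d) : ℝ) : ℂ) with hqqdef
  set hh : ℂ → ℂ := fun z => g z - ((d : ℂ)) ^ 2 * (1 - qq z) with hhdef
  have hgcont : Continuous g := by
    apply Complex.continuous_ofReal.comp
    apply Complex.continuous_re.comp
    exact continuous_const.mul (continuous_const.sub continuous_id)
  have hqqcont : Continuous qq := by
    apply Complex.continuous_ofReal.comp
    exact continuous_const.max (continuous_const.sub
      (((continuous_id.sub continuous_const).norm).div_const d))
  have hhcont : Continuous hh :=
    hgcont.sub (continuous_const.mul (continuous_const.sub hqqcont))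
  -- the operator BB with cfc (conj u * (z₀ - ·)) A = BB
  set BB : H →L[ℂ] H := ((starRingEnd ℂ) u * z₀) • (1 : H →L[ℂ] H)
      - (starRingEnd ℂ) u • A with hBBdef
  have hq : cfc (fun z : ℂ => (starRingEnd ℂ) u * (z₀ - z)) A = BB := by
    have e1 : (fun z : ℂ => (starRingEnd ℂ) u * (z₀ - z))
        = fun z : ℂ => (fun _ : ℂ => (starRingEnd ℂ) u * z₀) z
            - (fun z : ℂ => (starRingEnd ℂ) u * z) z := by
      funext z; ring
    rw [e1, cfc_sub _ _ A (by fun_prop) (by fun_prop), cfc_const _ A,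
      cfc_const_mul_id _ A, Algebra.algebraMap_eq_smul_one]
  have hT : cfc g A = (2⁻¹ : ℂ) • (BB + star BB) := by
    have hp1 : ContinuousOn (fun z : ℂ => (starRingEnd ℂ) u * (z₀ - z)) (spectrum ℂ A) := by
      fun_prop
    have hp2 : ContinuousOn (fun z : ℂ => star ((starRingEnd ℂ) u * (z₀ - z)))
        (spectrum ℂ A) := by fun_prop
    have hgeq : g = fun z : ℂ => (2⁻¹ : ℂ)
        * ((starRingEnd ℂ) u * (z₀ - z) + star ((starRingEnd ℂ) u * (z₀ - z))) := by
      funext z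
      rw [hgdef]
      simp only [Complex.re_eq_add_conj, Complex.star_def]
      ring
    calc cfc g A
        = cfc (fun z : ℂ => (2⁻¹ : ℂ) * ((starRingEnd ℂ) u * (z₀ - z)
            + star ((starRingEnd ℂ) u * (z₀ - z)))) A := by rw [← hgeq]
      _ = (2⁻¹ : ℂ) • cfc (fun z : ℂ => (starRingEnd ℂ) u * (z₀ - z)
            + star ((starRingEnd ℂ) u * (z₀ - z))) A :=
          cfc_const_mul _ _ A (hp1.add hp2)
      _ = (2⁻¹ : ℂ) • (cfc (fun z : ℂ => (starRingEnd ℂ) u * (z₀ - z)) A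
            + cfc (fun z : ℂ => star ((starRingEnd ℂ) u * (z₀ - z))) A) := by
          rw [cfc_add (a := A) _ _ hp1 hp2]
      _ = (2⁻¹ : ℂ) • (BB + star BB) := by rw [cfc_star (fun z : ℂ => (starRingEnd ℂ) u * (z₀ - z)) A, hq]
  have hTform : ∀ f : H, (⟪f, (cfc g A) f⟫).re
      = ((starRingEnd ℂ) u * (z₀ * ((‖f‖ : ℂ)) ^ 2 - ⟪f, A f⟫)).re := by
    intro f
    have hBf : ⟪f, BB f⟫ = (starRingEnd ℂ) u * (z₀ * ((‖f‖ : ℂ)) ^ 2 - ⟪f, A f⟫) := by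
      rw [hBBdef]
      simp only [ContinuousLinearMap.sub_apply, ContinuousLinearMap.smul_apply,
        ContinuousLinearMap.one_apply, inner_sub_right, inner_smul_right,
        inner_self_eq_norm_sq_to_K]
      ring_nf
      rfl
    have h5 : ⟪f, (cfc g A) f⟫ = (2⁻¹ : ℂ) * (⟪f, BB f⟫ + (starRingEnd ℂ) ⟪f, BB f⟫) := by
      rw [hT]
      simp only [ContinuousLinearMap.smul_apply, ContinuousLinearMap.add_apply,
        inner_smul_right, inner_add_right]
      congr 1
      rw [star_eq_adjoint, adjoint_inner_right, inner_conj_symm]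
    rw [h5, hBf]
    set W : ℂ := (starRingEnd ℂ) u * (z₀ * ((‖f‖ : ℂ)) ^ 2 - ⟪f, A f⟫)
    rw [Complex.add_conj]
    simp [Complex.mul_re]
  have hgvals : ∀ z ∈ spectrum ℂ A, ∃ r : ℝ, 0 ≤ r ∧ g z = r := by
    intro z hz
    refine ⟨((starRingEnd ℂ) u * (z₀ - z)).re, ?_, rfl⟩
    by_cases hz0 : z = z₀
    · simp [hz0]
    · linarith [hLC z (hspecC z hz hz0), sq_nonneg d]
  have hT0 : ∀ f : H, 0 ≤ (⟪f, (cfc g A) f⟫).re :=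
    stmt5_aux_nonneg A hA g hgcont.continuousOn hgvals
  -- the quasi-projection Q
  have hqq0 : ∀ z ∈ spectrum ℂ A, z ≠ z₀ → qq z = 0 := by
    intro z hz hne
    have h1 : 1 ≤ ‖z - z₀‖ / d := (one_le_div hd0).mpr (hdistspec z hz hne)
    have hm : max 0 (1 - ‖z - z₀‖ / d) = 0 := max_eq_left (by linarith)
    simp only [hqqdef, hm, Complex.ofReal_zero]
  have hqq1 : qq z₀ = 1 := by
    simp only [hqqdef]
    norm_num
  have hQker : ∀ f : H, ⟪φ, f⟫ = 0 → ⟪f, (cfc qq A) f⟫ = 0 := by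
    intro f hf
    have hzero : cfc (fun z : ℂ => (z - z₀) * qq z) A = 0 := by
      have e0 : (0 : H →L[ℂ] H) = cfc (fun _ : ℂ => (0 : ℂ)) A := by
        rw [cfc_const_zero]
      rw [e0]
      apply cfc_congr
      intro z hz
      by_cases hz0 : z = z₀
      · simp [hz0]
      · simp [hqq0 z hz hz0]
    have hid : cfc (fun z : ℂ => z - z₀) A = A - z₀ • (1 : H →L[ℂ] H) := by
      have e1 : (fun z : ℂ => z - z₀)
          = fun z : ℂ => (fun w : ℂ => w) z - (fun _ : ℂ => z₀) z := rfl
      rw [e1, cfc_sub _ _ A (by fun_prop) (by fun_prop), cfc_id' ℂ A, cfc_const _ A,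
        Algebra.algebraMap_eq_smul_one]
    have hsplit : cfc (fun z : ℂ => (z - z₀) * qq z) A
        = (A - z₀ • (1 : H →L[ℂ] H)) * cfc qq A := by
      rw [cfc_mul _ _ A (by fun_prop) hqqcont.continuousOn, hid]
    have happ : (A - z₀ • (1 : H →L[ℂ] H)) ((cfc qq A) f) = 0 := by
      have := congrArg (fun (T : H →L[ℂ] H) => T f) (hsplit.symm.trans hzero)
      simpa [ContinuousLinearMap.mul_apply] using this
    have hAQ : A ((cfc qq A) f) = z₀ • ((cfc qq A) f) := by
      rw [ContinuousLinearMap.sub_apply, ContinuousLinearMap.smul_apply,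
        ContinuousLinearMap.one_apply, sub_eq_zero] at happ
      exact happ
    obtain ⟨c, hc⟩ := hsimple _ hAQ
    rw [hc, inner_smul_right, ← inner_conj_symm, hf, map_zero, mul_zero]
  -- positivity inequalities for the quadratic forms
  have hhvals : ∀ z ∈ spectrum ℂ A, ∃ r : ℝ, 0 ≤ r ∧ hh z = r := by
    intro z hz
    by_cases hz0 : z = z₀
    · refine ⟨0, le_refl _, ?_⟩
      simp only [hhdef, hgdef, hz0, hqq1, sub_self, mul_zero, Complex.ofReal_zero, sub_zero,
        mul_zero]
      simp
    · refine ⟨((starRingEnd ℂ) u * (z₀ - z)).re - d ^ 2, ?_, ?_⟩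
      · linarith [hLC z (hspecC z hz hz0)]
      · simp only [hhdef, hgdef, hqq0 z hz hz0, sub_zero, mul_one]
        push_cast
        ring
  have hH0 : ∀ f : H, 0 ≤ (⟪f, (cfc hh A) f⟫).re :=
    stmt5_aux_nonneg A hA hh hhcont.continuousOn hhvals
  have hHsplit : cfc hh A = cfc g A - ((d : ℂ)) ^ 2 • ((1 : H →L[ℂ] H) - cfc qq A) := by
    have h2 : cfc (fun z : ℂ => (1 : ℂ) - qq z) A = 1 - cfc qq A := by
      rw [cfc_sub (fun _ : ℂ => (1 : ℂ)) qq A continuousOn_const hqqcont.continuousOn,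
        cfc_const_one ℂ A]
    calc cfc hh A
        = cfc (fun z : ℂ => g z - ((d : ℂ)) ^ 2 * ((fun z : ℂ => 1 - qq z) z)) A := by
          rw [hhdef]
      _ = cfc g A - cfc (fun z : ℂ => ((d : ℂ)) ^ 2 * ((fun z : ℂ => 1 - qq z) z)) A := by
          rw [cfc_sub (a := A) _ _ hgcont.continuousOn
            (by exact (continuousOn_const.mul (continuousOn_const.sub
              hqqcont.continuousOn)))]
      _ = cfc g A - ((d : ℂ)) ^ 2 • cfc (fun z : ℂ => (1 : ℂ) - qq z) A := by
          rw [cfc_const_mul (a := A) _ (fun z : ℂ => 1 - qq z) (continuousOn_const.sub hqqcont.continuousOn)]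
      _ = cfc g A - ((d : ℂ)) ^ 2 • ((1 : H →L[ℂ] H) - cfc qq A) := by rw [h2]
  have hMain : ∀ f : H, ⟪φ, f⟫ = 0 → d ^ 2 * ‖f‖ ^ 2 ≤ (⟪f, (cfc g A) f⟫).re := by
    intro f hf
    have h1 := hH0 f
    rw [hHsplit] at h1
    have h2 : ⟪f, (cfc g A - ((d : ℂ)) ^ 2 • ((1 : H →L[ℂ] H) - cfc qq A)) f⟫
        = ⟪f, (cfc g A) f⟫ - ((d : ℂ)) ^ 2 * (⟪f, f⟫ - ⟪f, (cfc qq A) f⟫) := by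
      simp only [ContinuousLinearMap.sub_apply, ContinuousLinearMap.smul_apply,
        ContinuousLinearMap.one_apply, inner_sub_right, inner_smul_right]
    rw [h2, hQker f hf] at h1
    have h4 : (⟪f, f⟫ : ℂ) = ((‖f‖ ^ 2 : ℝ) : ℂ) := by
      rw [inner_self_eq_norm_sq_to_K]
      norm_cast
    rw [sub_zero, h4] at h1
    have h3 : (((d : ℂ)) ^ 2 * ((‖f‖ ^ 2 : ℝ) : ℂ)).re = d ^ 2 * ‖f‖ ^ 2 := by
      rw [← Complex.ofReal_pow, ← Complex.ofReal_mul, Complex.ofReal_re]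
    rw [Complex.sub_re, h3] at h1
    linarith
  -- linear independence of the two eigenvectors
  have hind : ∀ x y : ℂ, x • η₁ + y • η₂ = 0 → x = 0 ∧ y = 0 := by
    intro x y hxy
    have h1 : (x * w₁) • η₁ + (y * w₂) • η₂ = 0 := by
      have := congrArg (fun v : H => P (A v)) hxy
      simp only [map_add, ContinuousLinearMap.map_smul, heig₁, heig₂, map_zero] at this
      simpa [smul_smul] using this
    have h2 : (x * w₂) • η₁ + (y * w₂) • η₂ = 0 := by
      have := congrArg (fun v : H => w₂ • v) hxy
      simp only [smul_add, smul_zero, smul_smul] at this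
      simpa [mul_comm] using this
    have h3 : (x * (w₁ - w₂)) • η₁ = 0 := by
      have h4 : (x * (w₁ - w₂)) • η₁
          = ((x * w₁) • η₁ + (y * w₂) • η₂) - ((x * w₂) • η₁ + (y * w₂) • η₂) := by
        module
      rw [h1, h2, sub_zero] at h4
      exact h4
    have hx : x = 0 := by
      rcases smul_eq_zero.mp h3 with h | h
      · rcases mul_eq_zero.mp h with h' | h'
        · exact h'
        · exact absurd (sub_eq_zero.mp h') hw
      · exact absurd h hη₁
    refine ⟨hx, ?_⟩
    rw [hx, zero_smul, zero_add] at hxy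
    rcases smul_eq_zero.mp hxy with h | h
    · exact h
    · exact absurd h hη₂
  -- pick a combination orthogonal to any given vector
  have hpick : ∀ ψ : H, ∃ x y : ℂ, x • η₁ + y • η₂ ≠ 0 ∧ ⟪ψ, x • η₁ + y • η₂⟫ = 0 := by
    intro ψ
    by_cases hc : (⟪ψ, η₁⟫ : ℂ) = 0
    · refine ⟨1, 0, ?_, ?_⟩
      · simpa using hη₁
      · simpa using hc
    · refine ⟨⟪ψ, η₂⟫, -⟪ψ, η₁⟫, ?_, ?_⟩
      · intro h0
        obtain ⟨-, h2⟩ := hind _ _ h0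
        rw [neg_eq_zero] at h2
        exact hc h2
      · rw [inner_add_right, inner_smul_right, inner_smul_right]
        ring
  -- construct the orthonormal pair f₁, f₂
  obtain ⟨x₁, y₁, hv0, hvφ⟩ := hpick φ
  set v : H := x₁ • η₁ + y₁ • η₂ with hvdef
  set c₁ : ℂ := ((‖v‖⁻¹ : ℝ) : ℂ) with hc₁
  set f₁ : H := c₁ • v with hf₁def
  have hf₁n : ‖f₁‖ = 1 := by
    rw [hf₁def, hc₁, Complex.ofReal_inv]
    exact norm_smul_inv_norm hv0
  have hf₁φ : (⟪φ, f₁⟫ : ℂ) = 0 := by rw [hf₁def, inner_smul_right, hvφ, mul_zero]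
  set α : ℂ := c₁ * x₁ with hα
  set β : ℂ := c₁ * y₁ with hβ
  have hf₁v : f₁ = α • η₁ + β • η₂ := by
    rw [hf₁def, hvdef, hα, hβ]
    simp [smul_add, smul_smul]
  obtain ⟨x₂, y₂, hw0, hwf⟩ := hpick f₁
  set ww : H := x₂ • η₁ + y₂ • η₂ with hwwdef
  set c₂ : ℂ := ((‖ww‖⁻¹ : ℝ) : ℂ) with hc₂
  set f₂ : H := c₂ • ww with hf₂def
  have hf₂n : ‖f₂‖ = 1 := by
    rw [hf₂def, hc₂, Complex.ofReal_inv]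
    exact norm_smul_inv_norm hw0
  have o12 : (⟪f₁, f₂⟫ : ℂ) = 0 := by rw [hf₂def, inner_smul_right, hwf, mul_zero]
  set γ : ℂ := c₂ * x₂ with hγ
  set δ : ℂ := c₂ * y₂ with hδ
  have hf₂v : f₂ = γ • η₁ + δ • η₂ := by
    rw [hf₂def, hwwdef, hγ, hδ]
    simp [smul_add, smul_smul]
  have n1 : (⟪f₁, f₁⟫ : ℂ) = 1 := by
    rw [inner_self_eq_norm_sq_to_K, hf₁n]
    norm_num
  have n2 : (⟪f₂, f₂⟫ : ℂ) = 1 := by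
    rw [inner_self_eq_norm_sq_to_K, hf₂n]
    norm_num
  have o21 : (⟪f₂, f₁⟫ : ℂ) = 0 := by rw [← inner_conj_symm, o12, map_zero]
  -- the determinant is nonzero
  set D : ℂ := α * δ - β * γ with hD
  have hDne : D ≠ 0 := by
    intro h0
    have e1 : δ • f₁ - β • f₂ = (0 : H) := by
      rw [hf₁v, hf₂v]
      have e : δ • (α • η₁ + β • η₂) - β • (γ • η₁ + δ • η₂)
          = (δ * α - β * γ) • η₁ + (δ * β - β * δ) • η₂ := by module
      rw [e, show δ * α - β * γ = 0 by rw [hD] at h0; linear_combination h0,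
        show δ * β - β * δ = 0 by ring]
      simp
    have e2 : γ • f₁ - α • f₂ = (0 : H) := by
      rw [hf₁v, hf₂v]
      have e : γ • (α • η₁ + β • η₂) - α • (γ • η₁ + δ • η₂)
          = (γ * α - α * γ) • η₁ + (γ * β - α * δ) • η₂ := by module
      rw [e, show γ * α - α * γ = 0 by ring,
        show γ * β - α * δ = 0 by rw [hD] at h0; linear_combination -h0]
      simp
    have hδ0 : δ = 0 := by
      have := congrArg (fun z : H => (⟪f₁, z⟫ : ℂ)) e1
      simpa [inner_sub_right, inner_smul_right, n1, o12, (norm_ne_zero_iff.mp (by rw [hf₁n]; norm_num) : f₁ ≠ 0)] using this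
    have hβ0 : β = 0 := by
      have := congrArg (fun z : H => (⟪f₂, z⟫ : ℂ)) e1
      simpa [inner_sub_right, inner_smul_right, n2, o21, neg_eq_zero, (norm_ne_zero_iff.mp (by rw [hf₂n]; norm_num) : f₂ ≠ 0)] using this
    have hγ0 : γ = 0 := by
      have := congrArg (fun z : H => (⟪f₁, z⟫ : ℂ)) e2
      simpa [inner_sub_right, inner_smul_right, n1, o12, (norm_ne_zero_iff.mp (by rw [hf₁n]; norm_num) : f₁ ≠ 0)] using this
    have hα0 : α = 0 := by
      have := congrArg (fun z : H => (⟪f₂, z⟫ : ℂ)) e2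
      simpa [inner_sub_right, inner_smul_right, n2, o21, neg_eq_zero, (norm_ne_zero_iff.mp (by rw [hf₂n]; norm_num) : f₂ ≠ 0)] using this
    have : f₁ = 0 := by rw [hf₁v, hα0, hβ0]; simp
    rw [this, norm_zero] at hf₁n
    norm_num at hf₁n
  -- expansions of η₁, η₂ in terms of f₁, f₂
  have he1 : δ • f₁ - β • f₂ = D • η₁ := by
    rw [hf₁v, hf₂v, hD]
    module
  have he2 : (-γ) • f₁ + α • f₂ = D • η₂ := by
    rw [hf₁v, hf₂v, hD]
    module
  have ha₁ : D * ⟪f₁, η₁⟫ = δ := by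
    have := congrArg (fun z : H => (⟪f₁, z⟫ : ℂ)) he1
    simp only [inner_sub_right, inner_smul_right, n1, o12, mul_one, mul_zero, sub_zero] at this
    exact this.symm
  have hb₁ : D * ⟪f₂, η₁⟫ = -β := by
    have := congrArg (fun z : H => (⟪f₂, z⟫ : ℂ)) he1
    simp only [inner_sub_right, inner_smul_right, n2, o21, mul_one, mul_zero, zero_sub] at this
    exact this.symm
  have ha₂ : D * ⟪f₁, η₂⟫ = -γ := by
    have := congrArg (fun z : H => (⟪f₁, z⟫ : ℂ)) he2
    simp only [inner_add_right, inner_smul_right, n1, o12, mul_one, mul_zero, add_zero,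
      neg_mul, neg_zero] at this
    exact this.symm
  have hb₂ : D * ⟪f₂, η₂⟫ = α := by
    have := congrArg (fun z : H => (⟪f₂, z⟫ : ℂ)) he2
    simp only [inner_add_right, inner_smul_right, n2, o21, mul_one, mul_zero, zero_add,
      neg_mul, neg_zero] at this
    exact this.symm
  -- trace identity
  have hiPA : ∀ f : H, P f = f → (⟪f, P (A f)⟫ : ℂ) = ⟪f, A f⟫ := by
    intro f hPf
    conv_lhs => rw [← hPsa]
    rw [adjoint_inner_right, hPf]
  have hPf₁ : P f₁ = f₁ := by
    rw [hf₁v]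
    simp [map_add, ContinuousLinearMap.map_smul, hPη₁, hPη₂]
  have hPf₂ : P f₂ = f₂ := by
    rw [hf₂v]
    simp [map_add, ContinuousLinearMap.map_smul, hPη₁, hPη₂]
  have t1 : (⟪f₁, A f₁⟫ : ℂ) = α * w₁ * ⟪f₁, η₁⟫ + β * w₂ * ⟪f₁, η₂⟫ := by
    rw [← hiPA f₁ hPf₁]
    have : P (A f₁) = (α * w₁) • η₁ + (β * w₂) • η₂ := by
      rw [hf₁v]
      simp only [map_add, ContinuousLinearMap.map_smul, heig₁, heig₂, smul_smul]
    rw [this, inner_add_right, inner_smul_right, inner_smul_right]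
  have t2 : (⟪f₂, A f₂⟫ : ℂ) = γ * w₁ * ⟪f₂, η₁⟫ + δ * w₂ * ⟪f₂, η₂⟫ := by
    rw [← hiPA f₂ hPf₂]
    have : P (A f₂) = (γ * w₁) • η₁ + (δ * w₂) • η₂ := by
      rw [hf₂v]
      simp only [map_add, ContinuousLinearMap.map_smul, heig₁, heig₂, smul_smul]
    rw [this, inner_add_right, inner_smul_right, inner_smul_right]
  have htr : (⟪f₁, A f₁⟫ : ℂ) + ⟪f₂, A f₂⟫ = w₁ + w₂ := by
    have hsum : D * ((⟪f₁, A f₁⟫ : ℂ) + ⟪f₂, A f₂⟫) = D * (w₁ + w₂) := by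
      rw [t1, t2, hD]
      rw [hD] at ha₁ ha₂ hb₁ hb₂
      linear_combination (α * w₁) * ha₁ + (β * w₂) * ha₂ + (γ * w₁) * hb₁ + (δ * w₂) * hb₂
    exact mul_left_cancel₀ hDne hsum
  -- final assembly
  have hT1 : d ^ 2 ≤ (⟪f₁, (cfc g A) f₁⟫).re := by
    have := hMain f₁ hf₁φ
    rwa [hf₁n, one_pow, mul_one] at this
  have hT2 : (0 : ℝ) ≤ (⟪f₂, (cfc g A) f₂⟫).re := hT0 f₂
  rw [hTform f₁] at hT1
  rw [hTform f₂] at hT2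
  have key : d ^ 2 ≤ ((starRingEnd ℂ) u * (z₀ - w₁)).re
      + ((starRingEnd ℂ) u * (z₀ - w₂)).re := by
    have e1 : (starRingEnd ℂ) u * (z₀ * ((‖f₁‖ : ℂ)) ^ 2 - ⟪f₁, A f₁⟫)
        + (starRingEnd ℂ) u * (z₀ * ((‖f₂‖ : ℂ)) ^ 2 - ⟪f₂, A f₂⟫)
        = (starRingEnd ℂ) u * (z₀ - w₁) + (starRingEnd ℂ) u * (z₀ - w₂) := by
      rw [hf₁n, hf₂n]
      push_cast
      linear_combination (-(starRingEnd ℂ) u) * htr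
    have e2 := congrArg Complex.re e1
    rw [Complex.add_re, Complex.add_re] at e2
    linarith
  have hnormu : ‖u‖ = d := by rw [hu, hd]
  have habs : ∀ w : ℂ, ((starRingEnd ℂ) u * (z₀ - w)).re ≤ d * ‖w - z₀‖ := by
    intro w
    calc ((starRingEnd ℂ) u * (z₀ - w)).re ≤ ‖(starRingEnd ℂ) u * (z₀ - w)‖ :=
          Complex.re_le_norm _
    _ = ‖(starRingEnd ℂ) u‖ * ‖z₀ - w‖ := norm_mul _ _
    _ = d * ‖w - z₀‖ := by rw [RCLike.norm_conj, hnormu, norm_sub_rev]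
  have hfin : d ≤ ‖w₁ - z₀‖ + ‖w₂ - z₀‖ := by
    have h2 := habs w₁
    have h3 := habs w₂
    nlinarith [key, h2, h3, hd0]
  have hz₁z₀ : ‖z₁ - z₀‖ = d := by rw [norm_sub_rev, ← hd]
  constructor
  · rw [hz₁z₀]
    exact hfin
  · rintro ⟨hx, hy⟩
    rw [hz₁z₀] at hx hy
    linarith
end

section
/- Zeros of orthogonal polynomials near an isolated mass point: let μ be a probability measure on ℂ with all moments finite, z₀ a pure point of μ, and δ = dist(z₀, cvh(supp(μ)\{z₀})) > 0. Then for every n, the monic orthogonal polynomial Φ_n has at most one zero in the open disc {z : |z − z₀| < δ/2}. -/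
open MeasureTheory Polynomial ComplexConjugate

/-- The support of a measure: points all of whose neighborhoods have positive measure. -/
def measSupport (μ : Measure ℂ) : Set ℂ := {x | ∀ U ∈ nhds x, 0 < μ U}

/-- Almost every point lies in the support. -/
lemma ae_mem_measSupport (μ : Measure ℂ) : ∀ᵐ x ∂μ, x ∈ measSupport μ := by
  have hx : ∀ x : ((measSupport μ)ᶜ : Set ℂ), ∃ V : Set ℂ, IsOpen V ∧ (x : ℂ) ∈ V ∧ μ V = 0 := by
    rintro ⟨x, hx⟩
    simp only [Set.mem_compl_iff, measSupport, Set.mem_setOf_eq] at hx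
    push_neg at hx
    obtain ⟨U, hU, hU0⟩ := hx
    obtain ⟨V, hVU, hVopen, hxV⟩ := mem_nhds_iff.mp hU
    exact ⟨V, hVopen, hxV,
      le_antisymm (le_trans (measure_mono hVU) hU0) zero_le⟩
  choose V hVo hxV hV0 using hx
  obtain ⟨T, hTc, hTU⟩ := TopologicalSpace.isOpen_iUnion_countable V hVo
  have hSsub : (measSupport μ)ᶜ ⊆ ⋃ i ∈ T, V i := by
    intro x hxS
    rw [hTU]
    exact Set.mem_iUnion.mpr ⟨⟨x, hxS⟩, hxV _⟩
  have hnull : μ (⋃ i ∈ T, V i) = 0 := (measure_biUnion_null_iff hTc).mpr fun i _ => hV0 i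
  have hc : μ ((measSupport μ)ᶜ) = 0 := measure_mono_null hSsub hnull
  rw [ae_iff]
  exact hc

/-- The measure of the complement of any finite set is positive when the support is infinite. -/
lemma measSupport_compl_finite_pos (μ : Measure ℂ) (hinf : (measSupport μ).Infinite)
    {F : Set ℂ} (hF : F.Finite) : 0 < μ Fᶜ := by
  obtain ⟨s, hs⟩ := (hinf.diff hF).nonempty
  exact hs.1 Fᶜ (hF.isClosed.isOpen_compl.mem_nhds hs.2)

/-- Integrability of polynomial-type integrands. -/
lemma integrable_eval_mul_conj {μ : Measure ℂ}
    (hmom : ∀ n : ℕ, Integrable (fun z : ℂ => ‖z‖ ^ n) μ) (P R : Polynomial ℂ) :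
    Integrable (fun x => P.eval x * conj (R.eval x)) μ := by
  have key : ∀ (i j : ℕ) (c : ℂ), Integrable (fun x : ℂ => c * (x ^ i * conj x ^ j)) μ := by
    intro i j c
    have hm : AEStronglyMeasurable (fun x : ℂ => c * (x ^ i * conj x ^ j)) μ :=
      (continuous_const.mul ((continuous_pow i).mul
        (Complex.continuous_conj.pow j))).aestronglyMeasurable
    refine Integrable.mono' ((hmom (i + j)).const_mul ‖c‖) hm
      (Filter.Eventually.of_forall fun x => ?_)
    rw [norm_mul, norm_mul, norm_pow, norm_pow, RCLike.norm_conj, ← pow_add]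
  have heq : (fun x : ℂ => P.eval x * conj (R.eval x)) =
      fun x => ∑ i ∈ Finset.range (P.natDegree + 1), ∑ j ∈ Finset.range (R.natDegree + 1),
        (P.coeff i * conj (R.coeff j)) * (x ^ i * conj x ^ j) := by
    funext x
    rw [eval_eq_sum_range (p := P) x, eval_eq_sum_range (p := R) x, map_sum, Finset.sum_mul_sum]
    refine Finset.sum_congr rfl fun i _ => Finset.sum_congr rfl fun j _ => ?_
    rw [map_mul, map_pow]
    ring
  rw [heq]
  exact integrable_finset_sum _ fun i _ => integrable_finset_sum _ fun j _ => key i j _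

/-- Separating functional for a point at positive distance from a closed convex set. -/
lemma sep_lemma {K : Set ℂ} (hconv : Convex ℝ K) (hclosed : IsClosed K) (hne : K.Nonempty)
    {z₀ : ℂ} {δ : ℝ} (hδ : δ = Metric.infDist z₀ K) (hδpos : 0 < δ) :
    ∃ u : ℂ, ‖u‖ = 1 ∧ ∀ y ∈ K, δ ≤ (conj u * (y - z₀)).re := by
  obtain ⟨p, hpK, hdist⟩ := hclosed.exists_infDist_eq_dist hne z₀
  have hpz : ‖p - z₀‖ = δ := by rw [hδ, hdist, dist_eq_norm']
  have key : ∀ y ∈ K, 0 ≤ (conj (p - z₀) * (y - p)).re := by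
    intro y hy
    by_contra hneg
    push_neg at hneg
    set r : ℝ := -((conj (p - z₀)) * (y - p)).re with hr
    have hrpos : 0 < r := by simp only [hr]; linarith
    have hbne : y - p ≠ 0 := by
      intro h0
      rw [h0, mul_zero] at hneg
      simp at hneg
    set s := Complex.normSq (y - p) with hs
    have hspos : 0 < s := Complex.normSq_pos.mpr hbne
    set t := min 1 (r / s) with ht
    have htpos : 0 < t := lt_min one_pos (div_pos hrpos hspos)
    have ht1 : t ≤ 1 := min_le_left _ _
    have hmem : ((1 : ℝ) - t) • p + t • y ∈ K := hconv hpK hy (by linarith) htpos.le (by ring)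
    have hq : δ ≤ dist z₀ (((1 : ℝ) - t) • p + t • y) :=
      le_trans (le_of_eq hδ) (Metric.infDist_le_dist_of_mem hmem)
    have hpt : ((1 : ℝ) - t) • p + t • y = p + (t : ℂ) * (y - p) := by
      simp only [Complex.real_smul]
      push_cast
      ring
    have hsq : δ ^ 2 ≤ Complex.normSq ((z₀ - p) - (t : ℂ) * (y - p)) := by
      have h1 : δ ≤ ‖(z₀ - p) - (t : ℂ) * (y - p)‖ := by
        rw [hpt, dist_eq_norm] at hq
        calc δ ≤ ‖z₀ - (p + (t : ℂ) * (y - p))‖ := hq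
        _ = ‖(z₀ - p) - (t : ℂ) * (y - p)‖ := by congr 1; ring
      calc δ ^ 2 ≤ ‖(z₀ - p) - (t : ℂ) * (y - p)‖ ^ 2 := pow_le_pow_left₀ hδpos.le h1 2
      _ = Complex.normSq ((z₀ - p) - (t : ℂ) * (y - p)) := by
            rw [Complex.sq_norm]
    rw [Complex.normSq_sub] at hsq
    have h3 : Complex.normSq (z₀ - p) = δ ^ 2 := by
      rw [← Complex.sq_norm, norm_sub_rev, hpz]
    have h4 : Complex.normSq ((t : ℂ) * (y - p)) = t ^ 2 * s := by
      rw [Complex.normSq_mul, Complex.normSq_ofReal, hs]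
      ring
    have hA : ((z₀ - p) * conj (y - p)).re = r := by
      have e : (z₀ - p) * conj (y - p) = conj (-(conj (p - z₀) * (y - p))) := by
        rw [map_neg, map_mul, Complex.conj_conj]
        ring
      rw [e, Complex.conj_re, Complex.neg_re]
    have h5 : ((z₀ - p) * conj ((t : ℂ) * (y - p))).re = t * r := by
      have e : (z₀ - p) * conj ((t : ℂ) * (y - p)) = (t : ℂ) * ((z₀ - p) * conj (y - p)) := by
        rw [map_mul, Complex.conj_ofReal]
        ring
      rw [e, Complex.mul_re, Complex.ofReal_re, Complex.ofReal_im, hA]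
      ring
    rw [h3, h4, h5] at hsq
    have hts : t * s ≤ r := by
      calc t * s ≤ (r / s) * s := mul_le_mul_of_nonneg_right (min_le_right 1 (r / s)) hspos.le
      _ = r := div_mul_cancel₀ r hspos.ne'
    nlinarith [mul_le_mul_of_nonneg_left hts htpos.le, mul_pos htpos hrpos]
  refine ⟨(p - z₀) / (δ : ℂ), ?_, ?_⟩
  · rw [norm_div, hpz, Complex.norm_real, Real.norm_eq_abs, abs_of_pos hδpos,
      div_self hδpos.ne']
  · intro y hy
    have hδC : (δ : ℂ) ≠ 0 := by exact_mod_cast hδpos.ne'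
    have h8 : (conj (p - z₀) * (p - z₀)).re = δ ^ 2 := by
      rw [mul_comm, Complex.mul_conj', ← Complex.ofReal_pow, Complex.ofReal_re, hpz]
    have expand : conj ((p - z₀) / (δ : ℂ)) * (y - z₀) =
        (conj (p - z₀) * (y - p)) / (δ : ℂ) + (conj (p - z₀) * (p - z₀)) / (δ : ℂ) := by
      rw [map_div₀, Complex.conj_ofReal]
      field_simp
      ring
    rw [expand, Complex.add_re, Complex.div_ofReal_re, Complex.div_ofReal_re, h8]
    have h9 : δ ^ 2 / δ = δ := by rw [sq, mul_div_assoc, div_self hδpos.ne', mul_one]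
    rw [h9]
    have hk := div_nonneg (key y hy) hδpos.le
    linarith

/-- The barycenter step: if the mass off the atom sees the linear functional `≥ δ` while the
barycenter of `‖c‖²·μ` is within `δ/2` of `z₀`, most of the mass is at the atom. -/
lemma avg_step {μ : Measure ℂ} {c : ℂ → ℂ} {z₀ u wpt : ℂ} {δ : ℝ}
    (hu : ‖u‖ = 1)
    (hae : ∀ᵐ x ∂μ, x ≠ z₀ → δ ≤ (conj u * (x - z₀)).re)
    (hδpos : 0 < δ)
    (hkey : ∫ x, (x - wpt) * (c x * conj (c x)) ∂μ = 0)
    (hIc : Integrable (fun x => (x - z₀) * (c x * conj (c x))) μ)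
    (hIc' : Integrable (fun x => (x - wpt) * (c x * conj (c x))) μ)
    (hIH : Integrable (fun x => ‖c x‖ ^ 2) μ)
    (hIlH : Integrable (fun x => (conj u * (x - z₀)).re * ‖c x‖ ^ 2) μ)
    (hT : 0 < ∫ x, ‖c x‖ ^ 2 ∂μ)
    (hw : ‖wpt - z₀‖ < δ / 2) :
    ∫ x in {z₀}ᶜ, ‖c x‖ ^ 2 ∂μ < (μ {z₀}).toReal * ‖c z₀‖ ^ 2 := by
  have hms : MeasurableSet ({z₀} : Set ℂ) := measurableSet_singleton z₀
  have hccH : ∀ x, c x * conj (c x) = ((‖c x‖ ^ 2 : ℝ) : ℂ) := fun x => by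
    rw [Complex.ofReal_pow]; exact Complex.mul_conj' _
  have hIcc : Integrable (fun x => c x * conj (c x)) μ := by
    refine (hIH.ofReal (𝕜 := ℂ)).congr (Filter.Eventually.of_forall fun x => ?_)
    exact (hccH x).symm
  have splitC : ∀ (F : ℂ → ℂ), Integrable F μ →
      ∫ x, F x ∂μ = (μ {z₀}).toReal • F z₀ + ∫ x in {z₀}ᶜ, F x ∂μ := by
    intro F hF
    rw [← integral_add_compl hms hF, Measure.restrict_singleton, integral_smul_measure,
      integral_dirac]
  have splitR : ∀ (F : ℂ → ℝ), Integrable F μ →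
      ∫ x, F x ∂μ = (μ {z₀}).toReal • F z₀ + ∫ x in {z₀}ᶜ, F x ∂μ := by
    intro F hF
    rw [← integral_add_compl hms hF, Measure.restrict_singleton, integral_smul_measure,
      integral_dirac]
  set T := ∫ x, ‖c x‖ ^ 2 ∂μ with hTT
  have hTc : ∫ x, c x * conj (c x) ∂μ = ((T : ℝ) : ℂ) := by
    rw [integral_congr_ae (Filter.Eventually.of_forall hccH)]
    exact integral_ofReal
  have step1 : ∫ x, (x - z₀) * (c x * conj (c x)) ∂μ = (wpt - z₀) * ((T : ℝ) : ℂ) := by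
    have e : ∀ x : ℂ, (x - z₀) * (c x * conj (c x)) =
        (x - wpt) * (c x * conj (c x)) + (wpt - z₀) * (c x * conj (c x)) := fun x => by ring
    rw [integral_congr_ae (Filter.Eventually.of_forall e),
      integral_add hIc' (hIcc.const_mul _), hkey, zero_add, integral_const_mul, hTc]
  have step2 : ∫ x in {z₀}ᶜ, (x - z₀) * (c x * conj (c x)) ∂μ = (wpt - z₀) * ((T : ℝ) : ℂ) := by
    have h := splitC _ hIc
    rw [step1] at h
    simp only [sub_self, zero_mul, smul_zero, zero_add] at h
    exact h.symm
  have hre := integral_re ((hIc.restrict (s := {z₀}ᶜ)).const_mul (conj u))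
  simp only [RCLike.re_to_complex] at hre
  have step3 : ∫ x in {z₀}ᶜ, (conj u * (x - z₀)).re * ‖c x‖ ^ 2 ∂μ =
      (conj u * ((wpt - z₀) * ((T : ℝ) : ℂ))).re := by
    rw [← step2, ← integral_const_mul, ← hre]
    refine integral_congr_ae (Filter.Eventually.of_forall fun x => ?_)
    show (conj u * (x - z₀)).re * ‖c x‖ ^ 2 =
      (conj u * ((x - z₀) * (c x * conj (c x)))).re
    rw [hccH x, show conj u * ((x - z₀) * ((‖c x‖ ^ 2 : ℝ) : ℂ)) =
        (conj u * (x - z₀)) * ((‖c x‖ ^ 2 : ℝ) : ℂ) from by ring]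
    simp only [Complex.mul_re, Complex.ofReal_re, Complex.ofReal_im]
    ring
  have hbound : δ * (∫ x in {z₀}ᶜ, ‖c x‖ ^ 2 ∂μ) ≤
      ∫ x in {z₀}ᶜ, (conj u * (x - z₀)).re * ‖c x‖ ^ 2 ∂μ := by
    rw [← integral_const_mul]
    refine integral_mono_ae ((hIH.restrict (s := {z₀}ᶜ)).const_mul δ)
      (hIlH.restrict (s := {z₀}ᶜ)) ?_
    have h1 := ae_restrict_mem (μ := μ) hms.compl
    have h2 := ae_restrict_of_ae (s := {z₀}ᶜ) hae
    filter_upwards [h1, h2] with x hx1 hx2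
    exact mul_le_mul_of_nonneg_right (hx2 (by simpa using hx1)) (by positivity)
  have hub : (conj u * ((wpt - z₀) * ((T : ℝ) : ℂ))).re < (δ / 2) * T := by
    rw [show conj u * ((wpt - z₀) * ((T : ℝ) : ℂ)) =
        (conj u * (wpt - z₀)) * ((T : ℝ) : ℂ) from by ring,
      Complex.mul_re, Complex.ofReal_re, Complex.ofReal_im, mul_zero, sub_zero]
    have h1 : (conj u * (wpt - z₀)).re ≤ ‖wpt - z₀‖ := by
      calc (conj u * (wpt - z₀)).re ≤ ‖conj u * (wpt - z₀)‖ := Complex.re_le_norm _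
      _ = ‖conj u * (wpt - z₀)‖ := rfl
      _ = ‖wpt - z₀‖ := by rw [norm_mul, RCLike.norm_conj, hu, one_mul]
    calc (conj u * (wpt - z₀)).re * T ≤ ‖wpt - z₀‖ * T :=
          mul_le_mul_of_nonneg_right h1 hT.le
    _ < (δ / 2) * T := mul_lt_mul_of_pos_right hw hT
  have hTsplit : T = (μ {z₀}).toReal * ‖c z₀‖ ^ 2 + ∫ x in {z₀}ᶜ, ‖c x‖ ^ 2 ∂μ := by
    have h := splitR (fun x => ‖c x‖ ^ 2) hIH
    rw [smul_eq_mul] at h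
    exact h
  have final : δ * (∫ x in {z₀}ᶜ, ‖c x‖ ^ 2 ∂μ) < (δ / 2) * T :=
    lt_of_le_of_lt (hbound.trans_eq step3) hub
  nlinarith [final, hTsplit, hδpos]

/-- Zeros of orthogonal polynomials near an isolated mass point: if `z₀` is an atom of `μ`
at distance `δ > 0` from the closed convex hull of `supp(μ) \ {z₀}`, then each monic
orthogonal polynomial `Φₙ` has at most one zero in the open disc of radius `δ/2` about `z₀`. -/
theorem stmt_7 (μ : Measure ℂ) [IsProbabilityMeasure μ]
    (hmom : ∀ n : ℕ, Integrable (fun z : ℂ => ‖z‖ ^ n) μ)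
    (hinf : (measSupport μ).Infinite)
    (z₀ : ℂ) (hatom : 0 < μ {z₀})
    (δ : ℝ) (hδ : δ = Metric.infDist z₀ (closure (convexHull ℝ (measSupport μ \ {z₀}))))
    (hδpos : 0 < δ)
    (n : ℕ) (Φ : Polynomial ℂ) (hmonic : Φ.Monic) (hdeg : Φ.natDegree = n)
    (horth : ∀ Q : Polynomial ℂ, Q.degree < n →
      ∫ z, Φ.eval z * conj (Q.eval z) ∂μ = 0) :
    ∀ z w : ℂ, Φ.eval z = 0 → Φ.eval w = 0 →
      ‖z - z₀‖ < δ / 2 → ‖w - z₀‖ < δ / 2 → z = w := by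
  intro z w hz hw hzd hwd
  by_contra hzw
  -- separation
  have hKconv : Convex ℝ (closure (convexHull ℝ (measSupport μ \ {z₀}))) :=
    (convex_convexHull ℝ _).closure
  have hKne : (closure (convexHull ℝ (measSupport μ \ {z₀}))).Nonempty := by
    obtain ⟨s, hs⟩ := (hinf.diff (Set.finite_singleton z₀)).nonempty
    exact ⟨s, subset_closure (subset_convexHull ℝ _ hs)⟩
  obtain ⟨u, hu1, husep⟩ := sep_lemma hKconv isClosed_closure hKne hδ hδpos
  have hae : ∀ᵐ x ∂μ, x ≠ z₀ → δ ≤ (conj u * (x - z₀)).re := by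
    filter_upwards [ae_mem_measSupport μ] with x hx hxne
    exact husep x (subset_closure (subset_convexHull ℝ _ ⟨hx, hxne⟩))
  -- factorization
  have hΦne : Φ ≠ 0 := hmonic.ne_zero
  obtain ⟨Q, hQ⟩ : (X - C z) * (X - C w) ∣ Φ :=
    (isCoprime_X_sub_C_of_isUnit_sub ((sub_ne_zero.mpr hzw).isUnit)).mul_dvd
      (dvd_iff_isRoot.mpr hz) (dvd_iff_isRoot.mpr hw)
  have hQne : Q ≠ 0 := by rintro rfl; rw [mul_zero] at hQ; exact hΦne hQ
  have hdeg2 : n = 2 + Q.natDegree := by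
    have h1 := natDegree_mul (mul_ne_zero (X_sub_C_ne_zero z) (X_sub_C_ne_zero w)) hQne
    rw [← hQ, hdeg, natDegree_mul (X_sub_C_ne_zero z) (X_sub_C_ne_zero w),
      natDegree_X_sub_C, natDegree_X_sub_C] at h1
    exact h1
  have hbnd : ∀ R : Polynomial ℂ, R.natDegree < n → R.degree < (n : WithBot ℕ) :=
    fun R hR => lt_of_le_of_lt degree_le_natDegree (by exact_mod_cast hR)
  have horthQ := horth Q (hbnd Q (by omega))
  have horth1 := horth ((X - C z) * Q)
    (hbnd _ (by rw [natDegree_mul (X_sub_C_ne_zero z) hQne, natDegree_X_sub_C]; omega))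
  have horth2 := horth ((X - C w) * Q)
    (hbnd _ (by rw [natDegree_mul (X_sub_C_ne_zero w) hQne, natDegree_X_sub_C]; omega))
  -- key orthogonality identities
  have key₀ : ∫ x, (x - z) * ((x - w) * (Q.eval x * conj (Q.eval x))) ∂μ = 0 := by
    rw [← horthQ]
    refine integral_congr_ae (Filter.Eventually.of_forall fun x => ?_)
    rw [hQ]
    simp only [eval_mul, eval_sub, eval_X, eval_C]
    ring
  have key₁ : ∫ x, (x - w) * (((x - z) * Q.eval x) * conj ((x - z) * Q.eval x)) ∂μ = 0 := by
    rw [← horth1]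
    refine integral_congr_ae (Filter.Eventually.of_forall fun x => ?_)
    rw [hQ]
    simp only [eval_mul, eval_sub, eval_X, eval_C, map_mul, map_sub]
    ring
  have key₂ : ∫ x, (x - z) * (((x - w) * Q.eval x) * conj ((x - w) * Q.eval x)) ∂μ = 0 := by
    rw [← horth2]
    refine integral_congr_ae (Filter.Eventually.of_forall fun x => ?_)
    rw [hQ]
    simp only [eval_mul, eval_sub, eval_X, eval_C, map_mul, map_sub]
    ring
  -- integrability
  have master := integrable_eval_mul_conj hmom
  have I₀ : Integrable (fun x => (x - z) * ((x - w) * (Q.eval x * conj (Q.eval x)))) μ := by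
    refine (master ((X - C z) * ((X - C w) * Q)) Q).congr
      (Filter.Eventually.of_forall fun x => ?_)
    simp only [eval_mul, eval_sub, eval_X, eval_C]
    ring
  have I₁z₀ : Integrable
      (fun x => (x - z₀) * (((x - z) * Q.eval x) * conj ((x - z) * Q.eval x))) μ := by
    refine (master ((X - C z₀) * ((X - C z) * Q)) ((X - C z) * Q)).congr
      (Filter.Eventually.of_forall fun x => ?_)
    simp only [eval_mul, eval_sub, eval_X, eval_C]
    ring
  have I₁w : Integrable
      (fun x => (x - w) * (((x - z) * Q.eval x) * conj ((x - z) * Q.eval x))) μ := by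
    refine (master ((X - C w) * ((X - C z) * Q)) ((X - C z) * Q)).congr
      (Filter.Eventually.of_forall fun x => ?_)
    simp only [eval_mul, eval_sub, eval_X, eval_C]
    ring
  have I₂z₀ : Integrable
      (fun x => (x - z₀) * (((x - w) * Q.eval x) * conj ((x - w) * Q.eval x))) μ := by
    refine (master ((X - C z₀) * ((X - C w) * Q)) ((X - C w) * Q)).congr
      (Filter.Eventually.of_forall fun x => ?_)
    simp only [eval_mul, eval_sub, eval_X, eval_C]
    ring
  have I₂z : Integrable
      (fun x => (x - z) * (((x - w) * Q.eval x) * conj ((x - w) * Q.eval x))) μ := by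
    refine (master ((X - C z) * ((X - C w) * Q)) ((X - C w) * Q)).congr
      (Filter.Eventually.of_forall fun x => ?_)
    simp only [eval_mul, eval_sub, eval_X, eval_C]
    ring
  have IH₁ : Integrable (fun x => ‖(x - z) * Q.eval x‖ ^ 2) μ := by
    refine ((master ((X - C z) * Q) ((X - C z) * Q)).re).congr
      (Filter.Eventually.of_forall fun x => ?_)
    simp only [eval_mul, eval_sub, eval_X, eval_C, RCLike.re_to_complex]
    rw [Complex.mul_conj', ← Complex.ofReal_pow, Complex.ofReal_re]
  have IH₂ : Integrable (fun x => ‖(x - w) * Q.eval x‖ ^ 2) μ := by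
    refine ((master ((X - C w) * Q) ((X - C w) * Q)).re).congr
      (Filter.Eventually.of_forall fun x => ?_)
    simp only [eval_mul, eval_sub, eval_X, eval_C, RCLike.re_to_complex]
    rw [Complex.mul_conj', ← Complex.ofReal_pow, Complex.ofReal_re]
  have IlH₁ : Integrable
      (fun x => (conj u * (x - z₀)).re * ‖(x - z) * Q.eval x‖ ^ 2) μ := by
    refine (((master ((X - C z₀) * ((X - C z) * Q)) ((X - C z) * Q)).const_mul (conj u)).re).congr
      (Filter.Eventually.of_forall fun x => ?_)
    simp only [eval_mul, eval_sub, eval_X, eval_C, RCLike.re_to_complex]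
    rw [show conj u * ((x - z₀) * ((x - z) * Q.eval x) * conj ((x - z) * Q.eval x)) =
        (conj u * (x - z₀)) * (((x - z) * Q.eval x) * conj ((x - z) * Q.eval x)) from by ring,
      Complex.mul_conj', ← Complex.ofReal_pow, Complex.mul_re, Complex.ofReal_re,
      Complex.ofReal_im]
    ring
  have IlH₂ : Integrable
      (fun x => (conj u * (x - z₀)).re * ‖(x - w) * Q.eval x‖ ^ 2) μ := by
    refine (((master ((X - C z₀) * ((X - C w) * Q)) ((X - C w) * Q)).const_mul (conj u)).re).congr
      (Filter.Eventually.of_forall fun x => ?_)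
    simp only [eval_mul, eval_sub, eval_X, eval_C, RCLike.re_to_complex]
    rw [show conj u * ((x - z₀) * ((x - w) * Q.eval x) * conj ((x - w) * Q.eval x)) =
        (conj u * (x - z₀)) * (((x - w) * Q.eval x) * conj ((x - w) * Q.eval x)) from by ring,
      Complex.mul_conj', ← Complex.ofReal_pow, Complex.mul_re, Complex.ofReal_re,
      Complex.ofReal_im]
    ring
  -- positivity of total masses
  have hposT : ∀ (a : ℂ), 0 < ∫ x, ‖(x - a) * Q.eval x‖ ^ 2 ∂μ → True := fun _ _ => trivial
  have hT₁ : 0 < ∫ x, ‖(x - z) * Q.eval x‖ ^ 2 ∂μ := by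
    rw [integral_pos_iff_support_of_nonneg_ae
      (Filter.Eventually.of_forall fun x => by positivity) IH₁]
    refine lt_of_lt_of_le (measSupport_compl_finite_pos μ hinf
      (finite_setOf_isRoot (mul_ne_zero (X_sub_C_ne_zero z) hQne))) (measure_mono ?_)
    intro x hx
    simp only [Set.mem_compl_iff, Set.mem_setOf_eq, IsRoot, eval_mul, eval_sub, eval_X,
      eval_C] at hx
    simp only [Function.mem_support]
    exact pow_ne_zero _ (norm_ne_zero_iff.mpr hx)
  have hT₂ : 0 < ∫ x, ‖(x - w) * Q.eval x‖ ^ 2 ∂μ := by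
    rw [integral_pos_iff_support_of_nonneg_ae
      (Filter.Eventually.of_forall fun x => by positivity) IH₂]
    refine lt_of_lt_of_le (measSupport_compl_finite_pos μ hinf
      (finite_setOf_isRoot (mul_ne_zero (X_sub_C_ne_zero w) hQne))) (measure_mono ?_)
    intro x hx
    simp only [Set.mem_compl_iff, Set.mem_setOf_eq, IsRoot, eval_mul, eval_sub, eval_X,
      eval_C] at hx
    simp only [Function.mem_support]
    exact pow_ne_zero _ (norm_ne_zero_iff.mpr hx)
  -- the two barycenter inequalities
  have hA₁ : (∫ x in {z₀}ᶜ, ‖(x - z) * Q.eval x‖ ^ 2 ∂μ) <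
      (μ {z₀}).toReal * ‖(z₀ - z) * Q.eval z₀‖ ^ 2 :=
    avg_step (c := fun x => (x - z) * Q.eval x) hu1 hae hδpos key₁ I₁z₀ I₁w IH₁ IlH₁ hT₁ hwd
  have hA₂ : (∫ x in {z₀}ᶜ, ‖(x - w) * Q.eval x‖ ^ 2 ∂μ) <
      (μ {z₀}).toReal * ‖(z₀ - w) * Q.eval z₀‖ ^ 2 :=
    avg_step (c := fun x => (x - w) * Q.eval x) hu1 hae hδpos key₂ I₂z₀ I₂z IH₂ IlH₂ hT₂ hzd
  have hms : MeasurableSet ({z₀} : Set ℂ) := measurableSet_singleton z₀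
  have hmpos : 0 < (μ {z₀}).toReal := ENNReal.toReal_pos hatom.ne' (measure_ne_top μ _)
  have hA₁0 : 0 ≤ ∫ x in {z₀}ᶜ, ‖(x - z) * Q.eval x‖ ^ 2 ∂μ :=
    setIntegral_nonneg hms.compl fun x _ => by positivity
  have hA₂0 : 0 ≤ ∫ x in {z₀}ᶜ, ‖(x - w) * Q.eval x‖ ^ 2 ∂μ :=
    setIntegral_nonneg hms.compl fun x _ => by positivity
  -- split the first orthogonality relation at the atom
  have hsplit0 : (μ {z₀}).toReal • ((z₀ - z) * ((z₀ - w) * (Q.eval z₀ * conj (Q.eval z₀)))) =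
      - ∫ x in {z₀}ᶜ, (x - z) * ((x - w) * (Q.eval x * conj (Q.eval x))) ∂μ := by
    have h := integral_add_compl hms I₀
    rw [key₀, Measure.restrict_singleton, integral_smul_measure, integral_dirac] at h
    exact eq_neg_of_add_eq_zero_left h
  have hpt : ∀ x : ℂ, ‖(x - z) * ((x - w) * (Q.eval x * conj (Q.eval x)))‖ =
      ‖(x - z) * Q.eval x‖ * ‖(x - w) * Q.eval x‖ := by
    intro x
    simp only [norm_mul, RCLike.norm_conj]
    ring
  have hnorm0 : (μ {z₀}).toReal * (‖(z₀ - z) * Q.eval z₀‖ * ‖(z₀ - w) * Q.eval z₀‖) ≤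
      ∫ x in {z₀}ᶜ, ‖(x - z) * Q.eval x‖ * ‖(x - w) * Q.eval x‖ ∂μ := by
    calc (μ {z₀}).toReal * (‖(z₀ - z) * Q.eval z₀‖ * ‖(z₀ - w) * Q.eval z₀‖)
        = ‖(μ {z₀}).toReal • ((z₀ - z) * ((z₀ - w) * (Q.eval z₀ * conj (Q.eval z₀))))‖ := by
          rw [norm_smul, Real.norm_eq_abs, abs_of_pos hmpos, hpt z₀]
    _ = ‖(∫ x in {z₀}ᶜ, (x - z) * ((x - w) * (Q.eval x * conj (Q.eval x))) ∂μ)‖ := by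
          rw [hsplit0, norm_neg]
    _ ≤ ∫ x in {z₀}ᶜ, ‖(x - z) * ((x - w) * (Q.eval x * conj (Q.eval x)))‖ ∂μ :=
          norm_integral_le_integral_norm _
    _ = ∫ x in {z₀}ᶜ, ‖(x - z) * Q.eval x‖ * ‖(x - w) * Q.eval x‖ ∂μ :=
          integral_congr_ae (Filter.Eventually.of_forall fun x => hpt x)
  -- Cauchy-Schwarz
  have hCS : ∫ x in {z₀}ᶜ, ‖(x - z) * Q.eval x‖ * ‖(x - w) * Q.eval x‖ ∂μ ≤
      Real.sqrt (∫ x in {z₀}ᶜ, ‖(x - z) * Q.eval x‖ ^ 2 ∂μ) *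
      Real.sqrt (∫ x in {z₀}ᶜ, ‖(x - w) * Q.eval x‖ ^ 2 ∂μ) := by
    have hconj2 : (2 : ℝ).HolderConjugate 2 :=
      (Real.holderConjugate_iff (p := 2) (q := 2)).mpr ⟨one_lt_two, by norm_num⟩
    have h2e : ENNReal.ofReal (2 : ℝ) = 2 := by
      rw [ENNReal.ofReal_ofNat]
    have hm₁ : MemLp (fun x => ‖(x - z) * Q.eval x‖) (ENNReal.ofReal 2)
        (μ.restrict {z₀}ᶜ) := by
      rw [h2e]
      refine (memLp_two_iff_integrable_sq ?_).mpr (IH₁.restrict (s := {z₀}ᶜ))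
      exact (((continuous_id.sub continuous_const).mul
        (Polynomial.continuous Q)).norm).aestronglyMeasurable
    have hm₂ : MemLp (fun x => ‖(x - w) * Q.eval x‖) (ENNReal.ofReal 2)
        (μ.restrict {z₀}ᶜ) := by
      rw [h2e]
      refine (memLp_two_iff_integrable_sq ?_).mpr (IH₂.restrict (s := {z₀}ᶜ))
      exact (((continuous_id.sub continuous_const).mul
        (Polynomial.continuous Q)).norm).aestronglyMeasurable
    have hH := integral_mul_le_Lp_mul_Lq_of_nonneg hconj2
      (Filter.Eventually.of_forall fun x => norm_nonneg _)
      (Filter.Eventually.of_forall fun x => norm_nonneg _) hm₁ hm₂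
    simp only [Real.rpow_two] at hH
    rw [← Real.sqrt_eq_rpow, ← Real.sqrt_eq_rpow] at hH
    exact hH
  -- combine
  have h1 : (μ {z₀}).toReal * (‖(z₀ - z) * Q.eval z₀‖ * ‖(z₀ - w) * Q.eval z₀‖) ≤
      Real.sqrt (∫ x in {z₀}ᶜ, ‖(x - z) * Q.eval x‖ ^ 2 ∂μ) *
      Real.sqrt (∫ x in {z₀}ᶜ, ‖(x - w) * Q.eval x‖ ^ 2 ∂μ) := le_trans hnorm0 hCS
  have hP0 : 0 ≤ (μ {z₀}).toReal * (‖(z₀ - z) * Q.eval z₀‖ * ‖(z₀ - w) * Q.eval z₀‖) :=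
    mul_nonneg hmpos.le (mul_nonneg (norm_nonneg _) (norm_nonneg _))
  have h2 : ((μ {z₀}).toReal * (‖(z₀ - z) * Q.eval z₀‖ * ‖(z₀ - w) * Q.eval z₀‖)) ^ 2 ≤
      (∫ x in {z₀}ᶜ, ‖(x - z) * Q.eval x‖ ^ 2 ∂μ) *
      (∫ x in {z₀}ᶜ, ‖(x - w) * Q.eval x‖ ^ 2 ∂μ) := by
    have hmm := mul_le_mul h1 h1 hP0 (mul_nonneg (Real.sqrt_nonneg _) (Real.sqrt_nonneg _))
    calc ((μ {z₀}).toReal * (‖(z₀ - z) * Q.eval z₀‖ * ‖(z₀ - w) * Q.eval z₀‖)) ^ 2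
        = ((μ {z₀}).toReal * (‖(z₀ - z) * Q.eval z₀‖ * ‖(z₀ - w) * Q.eval z₀‖)) *
          ((μ {z₀}).toReal * (‖(z₀ - z) * Q.eval z₀‖ * ‖(z₀ - w) * Q.eval z₀‖)) := sq _
    _ ≤ (Real.sqrt (∫ x in {z₀}ᶜ, ‖(x - z) * Q.eval x‖ ^ 2 ∂μ) *
          Real.sqrt (∫ x in {z₀}ᶜ, ‖(x - w) * Q.eval x‖ ^ 2 ∂μ)) *
        (Real.sqrt (∫ x in {z₀}ᶜ, ‖(x - z) * Q.eval x‖ ^ 2 ∂μ) *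
          Real.sqrt (∫ x in {z₀}ᶜ, ‖(x - w) * Q.eval x‖ ^ 2 ∂μ)) := hmm
    _ = (∫ x in {z₀}ᶜ, ‖(x - z) * Q.eval x‖ ^ 2 ∂μ) *
        (∫ x in {z₀}ᶜ, ‖(x - w) * Q.eval x‖ ^ 2 ∂μ) := by
          rw [mul_mul_mul_comm, Real.mul_self_sqrt hA₁0, Real.mul_self_sqrt hA₂0]
  have hPsq : ((μ {z₀}).toReal * (‖(z₀ - z) * Q.eval z₀‖ * ‖(z₀ - w) * Q.eval z₀‖)) ^ 2 =
      ((μ {z₀}).toReal * ‖(z₀ - z) * Q.eval z₀‖ ^ 2) *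
      ((μ {z₀}).toReal * ‖(z₀ - w) * Q.eval z₀‖ ^ 2) := by ring
  have hB₂pos : 0 < (μ {z₀}).toReal * ‖(z₀ - w) * Q.eval z₀‖ ^ 2 := lt_of_le_of_lt hA₂0 hA₂
  have hfin : (∫ x in {z₀}ᶜ, ‖(x - z) * Q.eval x‖ ^ 2 ∂μ) *
      (∫ x in {z₀}ᶜ, ‖(x - w) * Q.eval x‖ ^ 2 ∂μ) <
      ((μ {z₀}).toReal * ‖(z₀ - z) * Q.eval z₀‖ ^ 2) *
      ((μ {z₀}).toReal * ‖(z₀ - w) * Q.eval z₀‖ ^ 2) := by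
    calc (∫ x in {z₀}ᶜ, ‖(x - z) * Q.eval x‖ ^ 2 ∂μ) *
        (∫ x in {z₀}ᶜ, ‖(x - w) * Q.eval x‖ ^ 2 ∂μ)
        ≤ (∫ x in {z₀}ᶜ, ‖(x - z) * Q.eval x‖ ^ 2 ∂μ) *
          ((μ {z₀}).toReal * ‖(z₀ - w) * Q.eval z₀‖ ^ 2) :=
          mul_le_mul_of_nonneg_left hA₂.le hA₁0
    _ < ((μ {z₀}).toReal * ‖(z₀ - z) * Q.eval z₀‖ ^ 2) *
          ((μ {z₀}).toReal * ‖(z₀ - w) * Q.eval z₀‖ ^ 2) :=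
          mul_lt_mul_of_pos_right hA₁ hB₂pos
  linarith [h2, hfin, hPsq.symm.le, hPsq.le]
end

section
/- Zeros of OPUC near an isolated point of the support: let μ be a probability measure on the unit circle ∂𝔻, z₀ an isolated point of supp(μ), and d = dist(z₀, supp(μ)\{z₀}). Then each monic orthogonal polynomial Φ_n (with n less than the cardinality of supp(μ)) has at most one zero in {z : |z − z₀| < d²/4}. -/
open MeasureTheory Polynomial ComplexConjugate

lemma measSupport_compl_null (μ : Measure ℂ) [IsFiniteMeasure μ] :
    μ (measSupport μ)ᶜ = 0 := by
  classical
  have h : ∀ x : ℂ, ∃ U : Set ℂ, IsOpen U ∧ (x ∈ (measSupport μ)ᶜ → (x ∈ U ∧ μ U = 0)) := by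
    intro x
    by_cases hx : x ∈ (measSupport μ)ᶜ
    · simp only [measSupport, Set.mem_compl_iff, Set.mem_setOf_eq, not_forall] at hx
      obtain ⟨U, hU, hμU⟩ := hx
      rw [pos_iff_ne_zero, not_ne_iff] at hμU
      obtain ⟨V, hVU, hVopen, hxV⟩ := mem_nhds_iff.mp hU
      exact ⟨V, hVopen, fun _ => ⟨hxV, le_antisymm (le_trans (measure_mono hVU) hμU.le) (zero_le)⟩⟩
    · exact ⟨∅, isOpen_empty, fun h => absurd h hx⟩
  choose U hUopen hU using h
  obtain ⟨T, hTc, hT⟩ := TopologicalSpace.isOpen_iUnion_countable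
    (fun x : ↥((measSupport μ)ᶜ) => U x) (fun x => hUopen x)
  have hsub : (measSupport μ)ᶜ ⊆ ⋃ x ∈ T, U (x : ℂ) := by
    rw [hT]
    intro y hy
    exact Set.mem_iUnion.mpr ⟨⟨y, hy⟩, (hU y hy).1⟩
  refine le_antisymm (le_trans (measure_mono hsub) ?_) (zero_le)
  rw [(measure_biUnion_null_iff hTc).mpr]
  intro x hx
  exact (hU x x.2).2

lemma integrable_of_ae_sphere {E : Type*} [NormedAddCommGroup E] {μ : Measure ℂ}
    [IsFiniteMeasure μ]
    (hae : ∀ᵐ z ∂μ, z ∈ Metric.sphere (0:ℂ) 1) {f : ℂ → E} (hf : Continuous f) :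
    Integrable f μ := by
  obtain ⟨C, hC⟩ := (isCompact_sphere (0:ℂ) 1).exists_bound_of_continuousOn hf.continuousOn
  exact Integrable.mono' (integrable_const C) hf.aestronglyMeasurable (hae.mono fun z hz => hC z hz)

lemma eval_eq_zero_of_integral_eq_zero {μ : Measure ℂ} [IsFiniteMeasure μ] {f : ℂ → ℝ}
    (hc : Continuous f) (hnn : ∀ z, 0 ≤ f z) (hint : Integrable f μ)
    (hI : ∫ z, f z ∂μ = 0) {x : ℂ} (hx : x ∈ measSupport μ) : f x = 0 := by
  by_contra h
  have hfx : 0 < f x := (hnn x).lt_of_ne (Ne.symm h)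
  set U := f ⁻¹' (Set.Ioi (f x / 2)) with hUdef
  have hUopen : IsOpen U := isOpen_Ioi.preimage hc
  have hxU : x ∈ U := by simp only [hUdef, Set.mem_preimage, Set.mem_Ioi]; linarith
  have hμU : 0 < μ U := hx U (hUopen.mem_nhds hxU)
  have h1 : f x / 2 * (μ U).toReal ≤ ∫ z in U, f z ∂μ :=
    setIntegral_ge_of_const_le_real hUopen.measurableSet (measure_ne_top μ U)
      (fun z hz => le_of_lt hz) hint.integrableOn
  have h2 : ∫ z in U, f z ∂μ ≤ ∫ z, f z ∂μ :=
    setIntegral_le_integral hint (Filter.Eventually.of_forall hnn)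
  have h3 : 0 < (μ U).toReal := ENNReal.toReal_pos hμU.ne' (measure_ne_top μ U)
  nlinarith

lemma re_conj_mul (x y : ℂ) (hx : ‖x‖ = 1) (hy : ‖y‖ = 1) :
    ((conj x) * (x - y)).re = Complex.normSq (y - x) / 2 := by
  have hx' : x.re * x.re + x.im * x.im = 1 := by
    have := Complex.normSq_eq_norm_sq x
    rw [hx] at this
    simpa [Complex.normSq_apply] using this
  have hy' : y.re * y.re + y.im * y.im = 1 := by
    have := Complex.normSq_eq_norm_sq y
    rw [hy] at this
    simpa [Complex.normSq_apply] using this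
  simp only [Complex.mul_re, Complex.normSq_apply, Complex.conj_re, Complex.conj_im,
    Complex.sub_re, Complex.sub_im]
  ring_nf
  nlinarith [hx', hy']

lemma integral_split {E : Type*} [NormedAddCommGroup E] [NormedSpace ℝ E] [CompleteSpace E]
    {μ : Measure ℂ} [IsFiniteMeasure μ] {f : ℂ → E} (hsm : StronglyMeasurable f)
    (hint : Integrable f μ) (z₀ : ℂ) :
    ∫ z, f z ∂μ = (μ {z₀}).toReal • f z₀ + ∫ z in ({z₀}ᶜ : Set ℂ), f z ∂μ := by
  rw [← integral_add_compl (measurableSet_singleton z₀) hint]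
  congr 1
  rw [Measure.restrict_singleton, integral_smul_measure, integral_dirac' _ _ hsm]

lemma norm_sq_eq_normSq (z : ℂ) : ‖z‖ ^ 2 = Complex.normSq z := by
  rw [Complex.normSq_eq_norm_sq]

set_option maxHeartbeats 2000000

lemma bound_A (μ : Measure ℂ) [IsProbabilityMeasure μ]
    (hcirc : measSupport μ ⊆ Metric.sphere (0 : ℂ) 1)
    (z₀ : ℂ) (hz₀ : z₀ ∈ measSupport μ)
    (d : ℝ) (hdnn : 0 ≤ d)
    (hfar : ∀ z ∈ measSupport μ, z ≠ z₀ → d ≤ ‖z - z₀‖)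
    (z₁ z₂ : ℂ) (q : Polynomial ℂ)
    (E : ∫ z, (z - z₂) * ((Complex.normSq (z - z₁) * Complex.normSq (q.eval z) : ℝ) : ℂ) ∂μ
        = 0) :
    (∫ z in ({z₀}ᶜ : Set ℂ), Complex.normSq (z - z₁) * Complex.normSq (q.eval z) ∂μ)
        * (d ^ 2 / 2 - ‖z₀ - z₂‖)
      ≤ ‖z₀ - z₂‖ * ((Complex.normSq (z₀ - z₁) * Complex.normSq (q.eval z₀))
          * (μ {z₀}).toReal) := by
  have hμc : μ (measSupport μ)ᶜ = 0 := measSupport_compl_null μ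
  have hae_supp : ∀ᵐ z ∂μ, z ∈ measSupport μ := by
    rw [MeasureTheory.ae_iff]; exact hμc
  have hae_sph : ∀ᵐ z ∂μ, z ∈ Metric.sphere (0:ℂ) 1 := hae_supp.mono fun z hz => hcirc hz
  have hz₀n : ‖z₀‖ = 1 := by simpa using hcirc hz₀
  set g : ℂ → ℝ := fun z => Complex.normSq (z - z₁) * Complex.normSq (q.eval z) with hg
  have hgc : Continuous g :=
    (Complex.continuous_normSq.comp (continuous_id.sub continuous_const)).mul
      (Complex.continuous_normSq.comp q.continuous)
  have hgnn : ∀ z, 0 ≤ g z := fun z => mul_nonneg (Complex.normSq_nonneg _) (Complex.normSq_nonneg _)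
  have hig : Integrable g μ := integrable_of_ae_sphere hae_sph hgc
  have hF1c : Continuous fun z : ℂ => ((g z : ℝ) : ℂ) := Complex.continuous_ofReal.comp hgc
  have hiOf : Integrable (fun z : ℂ => ((g z : ℝ) : ℂ)) μ := integrable_of_ae_sphere hae_sph hF1c
  have hiF : Integrable (fun z => (conj z₀ * (z₀ - z)) * ((g z : ℝ) : ℂ)) μ :=
    integrable_of_ae_sphere hae_sph
      ((continuous_const.mul (continuous_const.sub continuous_id)).mul hF1c)
  have hiG : Integrable (fun z => (z - z₂) * ((g z : ℝ) : ℂ)) μ :=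
    integrable_of_ae_sphere hae_sph ((continuous_id.sub continuous_const).mul hF1c)
  -- step 1
  have e1 : ∫ z, (conj z₀ * (z₀ - z)) * ((g z : ℝ) : ℂ) ∂μ
      = conj z₀ * (z₀ - z₂) * ((∫ z, g z ∂μ : ℝ) : ℂ) := by
    have hpt : (fun z : ℂ => (conj z₀ * (z₀ - z)) * ((g z : ℝ) : ℂ))
        = fun z => (conj z₀ * (z₀ - z₂)) * ((g z : ℝ) : ℂ)
            - conj z₀ * ((z - z₂) * ((g z : ℝ) : ℂ)) := by
      funext z; ring
    rw [hpt, integral_sub (hiOf.const_mul _) (hiG.const_mul _), integral_const_mul,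
      integral_const_mul, E, mul_zero, sub_zero]
    congr 1
    exact Complex.ofRealLI.integral_comp_comm g
  -- step 2
  have e2 : ∫ z, (conj z₀ * (z₀ - z)).re * g z ∂μ
      = (conj z₀ * (z₀ - z₂)).re * ∫ z, g z ∂μ := by
    have h := Complex.reCLM.integral_comp_comm hiF
    rw [e1] at h
    simpa [Complex.mul_re, Complex.ofReal_re, Complex.ofReal_im] using h
  -- step 3
  have hfc : Continuous fun z => (conj z₀ * (z₀ - z)).re * g z :=
    (Complex.continuous_re.comp (continuous_const.mul (continuous_const.sub continuous_id))).mul hgc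
  have hif : Integrable (fun z => (conj z₀ * (z₀ - z)).re * g z) μ :=
    integrable_of_ae_sphere hae_sph hfc
  have split1 := integral_split hfc.stronglyMeasurable hif z₀
  have hatom : (μ {z₀}).toReal • ((conj z₀ * (z₀ - z₀)).re * g z₀) = 0 := by
    simp
  -- step 4
  have hd2 : ∀ᵐ z ∂(μ.restrict ({z₀}ᶜ : Set ℂ)),
      d ^ 2 / 2 * g z ≤ (conj z₀ * (z₀ - z)).re * g z := by
    have h1 : ∀ᵐ z ∂(μ.restrict ({z₀}ᶜ : Set ℂ)), z ∈ measSupport μ := ae_restrict_of_ae hae_supp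
    have h2 : ∀ᵐ z ∂(μ.restrict ({z₀}ᶜ : Set ℂ)), z ∈ ({z₀}ᶜ : Set ℂ) :=
      ae_restrict_mem (measurableSet_singleton z₀).compl
    filter_upwards [h1, h2] with z hzs hzc
    have hz1 : ‖z‖ = 1 := by simpa using hcirc hzs
    have hzz : z ≠ z₀ := by simpa using hzc
    have hdist : d ≤ ‖z - z₀‖ := hfar z hzs hzz
    have hre : (conj z₀ * (z₀ - z)).re = Complex.normSq (z - z₀) / 2 := re_conj_mul z₀ z hz₀n hz1
    have hkey : d ^ 2 / 2 ≤ (conj z₀ * (z₀ - z)).re := by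
      rw [hre, ← norm_sq_eq_normSq]
      nlinarith [norm_nonneg (z - z₀), hdnn, hdist]
    exact mul_le_mul_of_nonneg_right hkey (hgnn z)
  have e4 : d ^ 2 / 2 * (∫ z in ({z₀}ᶜ : Set ℂ), g z ∂μ)
      ≤ ∫ z in ({z₀}ᶜ : Set ℂ), (conj z₀ * (z₀ - z)).re * g z ∂μ := by
    calc d ^ 2 / 2 * (∫ z in ({z₀}ᶜ : Set ℂ), g z ∂μ)
        = ∫ z in ({z₀}ᶜ : Set ℂ), d ^ 2 / 2 * g z ∂μ := (integral_const_mul _ _).symm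
      _ ≤ _ := integral_mono_ae (hig.integrableOn.const_mul _) hif.integrableOn hd2
  -- step 5
  have e5 : (conj z₀ * (z₀ - z₂)).re ≤ ‖z₀ - z₂‖ := by
    calc (conj z₀ * (z₀ - z₂)).re ≤ ‖conj z₀ * (z₀ - z₂)‖ := Complex.re_le_norm _
      _ = ‖z₀ - z₂‖ := by
        rw [norm_mul, Complex.norm_conj, hz₀n, one_mul]
  have hM : (0:ℝ) ≤ ∫ z, g z ∂μ := integral_nonneg hgnn
  have splitg := integral_split hgc.stronglyMeasurable hig z₀
  have hA1nn : 0 ≤ ∫ z in ({z₀}ᶜ : Set ℂ), g z ∂μ :=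
    setIntegral_nonneg_of_ae (Filter.Eventually.of_forall hgnn)
  have hb' : (conj z₀ * (z₀ - z₂)).re * (∫ z, g z ∂μ) ≤ ‖z₀ - z₂‖ * (∫ z, g z ∂μ) :=
    mul_le_mul_of_nonneg_right e5 hM
  rw [hatom, zero_add] at split1
  rw [smul_eq_mul] at splitg
  have final : (∫ z in ({z₀}ᶜ : Set ℂ), g z ∂μ) * (d ^ 2 / 2)
      ≤ ‖z₀ - z₂‖ * ((μ {z₀}).toReal * g z₀) + ‖z₀ - z₂‖ * ∫ z in ({z₀}ᶜ : Set ℂ), g z ∂μ := by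
    calc (∫ z in ({z₀}ᶜ : Set ℂ), g z ∂μ) * (d ^ 2 / 2)
        = d ^ 2 / 2 * ∫ z in ({z₀}ᶜ : Set ℂ), g z ∂μ := by ring
      _ ≤ ∫ z in ({z₀}ᶜ : Set ℂ), (conj z₀ * (z₀ - z)).re * g z ∂μ := e4
      _ = (conj z₀ * (z₀ - z₂)).re * ∫ z, g z ∂μ := by rw [← split1, e2]
      _ ≤ ‖z₀ - z₂‖ * ∫ z, g z ∂μ := hb'
      _ = ‖z₀ - z₂‖ * ((μ {z₀}).toReal * g z₀) + ‖z₀ - z₂‖ * ∫ z in ({z₀}ᶜ : Set ℂ), g z ∂μ := by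
          rw [splitg]; ring
  have hgz : g z₀ = Complex.normSq (z₀ - z₁) * Complex.normSq (q.eval z₀) := rfl
  rw [hgz] at final
  nlinarith [final]

lemma no_vanish (μ : Measure ℂ) [IsProbabilityMeasure μ]
    (hcirc : measSupport μ ⊆ Metric.sphere (0:ℂ) 1)
    (n : ℕ) (hn : ∃ s : Finset ℂ, ↑s ⊆ measSupport μ ∧ n < s.card)
    (z₁ : ℂ) (q : Polynomial ℂ) (hq0 : q ≠ 0) (hdeg : q.natDegree + 2 = n)
    (hM : ∫ z, Complex.normSq (z - z₁) * Complex.normSq (q.eval z) ∂μ = 0) : False := by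
  obtain ⟨s, hs, hcard⟩ := hn
  have hμc := measSupport_compl_null μ
  have hae_supp : ∀ᵐ z ∂μ, z ∈ measSupport μ := by rw [MeasureTheory.ae_iff]; exact hμc
  have hae_sph : ∀ᵐ z ∂μ, z ∈ Metric.sphere (0:ℂ) 1 := hae_supp.mono fun z hz => hcirc hz
  set P : Polynomial ℂ := (X - C z₁) * q with hP
  have hP0 : P ≠ 0 := mul_ne_zero (X_sub_C_ne_zero z₁) hq0
  have hPdeg : P.natDegree = q.natDegree + 1 := by
    rw [hP, natDegree_mul (X_sub_C_ne_zero z₁) hq0, natDegree_X_sub_C]; ring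
  have hgc : Continuous fun z : ℂ =>
      Complex.normSq (z - z₁) * Complex.normSq (q.eval z) :=
    (Complex.continuous_normSq.comp (continuous_id.sub continuous_const)).mul
      (Complex.continuous_normSq.comp q.continuous)
  have hroot : ∀ x ∈ s, P.eval x = 0 := by
    intro x hx
    have h0 := eval_eq_zero_of_integral_eq_zero hgc
      (fun z => mul_nonneg (Complex.normSq_nonneg _) (Complex.normSq_nonneg _))
      (integrable_of_ae_sphere hae_sph hgc) hM (hs hx)
    have : Complex.normSq (P.eval x) = 0 := by
      rw [hP, eval_mul, map_mul, eval_sub, eval_X, eval_C]; exact h0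
    exact Complex.normSq_eq_zero.mp this
  have hsub : s ⊆ P.roots.toFinset := by
    intro x hx
    rw [Multiset.mem_toFinset, mem_roots hP0]
    exact hroot x hx
  have hch : s.card ≤ q.natDegree + 1 :=
    le_trans (Finset.card_le_card hsub)
      (le_trans (Multiset.toFinset_card_le _) (le_trans (card_roots' P) (le_of_eq hPdeg)))
  omega

/-- Zeros of OPUC near an isolated point of the support: if `z₀` is an isolated point of the
support of a probability measure `μ` on the unit circle, at distance `d > 0` from the rest of
the support, then each monic orthogonal polynomial `Φₙ` (with `n` less than the number of
points of the support) has at most one zero in the open disc `{z : |z − z₀| < d²/4}`. -/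
theorem stmt_8 (μ : Measure ℂ) [IsProbabilityMeasure μ]
    (hcirc : measSupport μ ⊆ Metric.sphere (0 : ℂ) 1)
    (z₀ : ℂ) (hz₀ : z₀ ∈ measSupport μ)
    (d : ℝ) (hd : d = Metric.infDist z₀ (measSupport μ \ {z₀})) (hdpos : 0 < d)
    (n : ℕ) (hn : ∃ s : Finset ℂ, ↑s ⊆ measSupport μ ∧ n < s.card)
    (Φ : Polynomial ℂ) (hmonic : Φ.Monic) (hdeg : Φ.natDegree = n)
    (horth : ∀ Q : Polynomial ℂ, Q.degree < n →
      ∫ z, Φ.eval z * conj (Q.eval z) ∂μ = 0) :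
    ∀ z w : ℂ, Φ.eval z = 0 → Φ.eval w = 0 →
      ‖z - z₀‖ < d ^ 2 / 4 → ‖w - z₀‖ < d ^ 2 / 4 → z = w := by
  intro z₁ z₂ h1 h2 hz1 hz2
  by_contra hne
  have hΦ0 : Φ ≠ 0 := hmonic.ne_zero
  have hμc : μ (measSupport μ)ᶜ = 0 := measSupport_compl_null μ
  have hae_supp : ∀ᵐ z ∂μ, z ∈ measSupport μ := by rw [MeasureTheory.ae_iff]; exact hμc
  have hae_sph : ∀ᵐ z ∂μ, z ∈ Metric.sphere (0:ℂ) 1 := hae_supp.mono fun z hz => hcirc hz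
  -- factor Φ
  have hdvd : (X - C z₁) * (X - C z₂) ∣ Φ :=
    (isCoprime_X_sub_C_of_isUnit_sub ((sub_ne_zero.mpr hne).isUnit)).mul_dvd
      (dvd_iff_isRoot.mpr h1) (dvd_iff_isRoot.mpr h2)
  obtain ⟨q, hq⟩ := hdvd
  have hq0 : q ≠ 0 := by
    rintro rfl
    rw [mul_zero] at hq
    exact hΦ0 hq
  have hnd : q.natDegree + 2 = n := by
    have h2' : Φ.natDegree = ((X - C z₁) * (X - C z₂)).natDegree + q.natDegree :=
      hq ▸ natDegree_mul (mul_ne_zero (X_sub_C_ne_zero z₁) (X_sub_C_ne_zero z₂)) hq0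
    rw [natDegree_mul (X_sub_C_ne_zero z₁) (X_sub_C_ne_zero z₂), natDegree_X_sub_C,
      natDegree_X_sub_C, hdeg] at h2'
    omega
  have hfar : ∀ z ∈ measSupport μ, z ≠ z₀ → d ≤ ‖z - z₀‖ := by
    intro z hz hzz
    rw [hd]
    calc Metric.infDist z₀ (measSupport μ \ {z₀}) ≤ dist z₀ z :=
      Metric.infDist_le_dist_of_mem ⟨hz, by simpa using hzz⟩
    _ = ‖z - z₀‖ := by rw [dist_comm, dist_eq_norm]
  -- orthogonality relations
  have horth' : ∀ Q : Polynomial ℂ, Q.natDegree < n →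
      ∫ z, Φ.eval z * conj (Q.eval z) ∂μ = 0 := by
    intro Q hQ
    exact horth Q (lt_of_le_of_lt degree_le_natDegree (by exact_mod_cast hQ))
  have E2 : ∫ z, (z - z₂) * ((Complex.normSq (z - z₁) * Complex.normSq (q.eval z) : ℝ) : ℂ) ∂μ
      = 0 := by
    have hdQ : ((X - C z₁) * q).natDegree < n := by
      rw [natDegree_mul (X_sub_C_ne_zero z₁) hq0, natDegree_X_sub_C]; omega
    have h0 := horth' _ hdQ
    calc ∫ z, (z - z₂) * ((Complex.normSq (z - z₁) * Complex.normSq (q.eval z) : ℝ) : ℂ) ∂μ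
        = ∫ z, Φ.eval z * conj (((X - C z₁) * q).eval z) ∂μ := by
          refine integral_congr_ae (Filter.Eventually.of_forall fun z => ?_)
          rw [hq]
          simp only [eval_mul, eval_sub, eval_X, eval_C, map_mul]
          rw [Complex.ofReal_mul, ← Complex.mul_conj, ← Complex.mul_conj]
          ring
      _ = 0 := h0
  have E1 : ∫ z, (z - z₁) * ((Complex.normSq (z - z₂) * Complex.normSq (q.eval z) : ℝ) : ℂ) ∂μ
      = 0 := by
    have hdQ : ((X - C z₂) * q).natDegree < n := by
      rw [natDegree_mul (X_sub_C_ne_zero z₂) hq0, natDegree_X_sub_C]; omega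
    have h0 := horth' _ hdQ
    calc ∫ z, (z - z₁) * ((Complex.normSq (z - z₂) * Complex.normSq (q.eval z) : ℝ) : ℂ) ∂μ
        = ∫ z, Φ.eval z * conj (((X - C z₂) * q).eval z) ∂μ := by
          refine integral_congr_ae (Filter.Eventually.of_forall fun z => ?_)
          rw [hq]
          simp only [eval_mul, eval_sub, eval_X, eval_C, map_mul]
          rw [Complex.ofReal_mul, ← Complex.mul_conj, ← Complex.mul_conj]
          ring
      _ = 0 := h0
  have E3 : ∫ z, ((z - z₁) * (z - z₂)) * ((Complex.normSq (q.eval z) : ℝ) : ℂ) ∂μ = 0 := by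
    have hdQ : q.natDegree < n := by omega
    have h0 := horth' _ hdQ
    calc ∫ z, ((z - z₁) * (z - z₂)) * ((Complex.normSq (q.eval z) : ℝ) : ℂ) ∂μ
        = ∫ z, Φ.eval z * conj (q.eval z) ∂μ := by
          refine integral_congr_ae (Filter.Eventually.of_forall fun z => ?_)
          rw [hq]
          simp only [eval_mul, eval_sub, eval_X, eval_C]
          rw [← Complex.mul_conj]
          ring
      _ = 0 := h0
  have B1 := bound_A μ hcirc z₀ hz₀ d hdpos.le hfar z₁ z₂ q E2
  have B2 := bound_A μ hcirc z₀ hz₀ d hdpos.le hfar z₂ z₁ q E1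
  -- notation
  set a := ‖z₀ - z₁‖ with hadef
  set b := ‖z₀ - z₂‖ with hbdef
  set m0 := (μ {z₀}).toReal with hm0def
  set w₀ := Complex.normSq (q.eval z₀) with hw₀def
  set A₁ := ∫ z in ({z₀}ᶜ : Set ℂ), Complex.normSq (z - z₁) * Complex.normSq (q.eval z) ∂μ
    with hA₁def
  set A₂ := ∫ z in ({z₀}ᶜ : Set ℂ), Complex.normSq (z - z₂) * Complex.normSq (q.eval z) ∂μ
    with hA₂def
  have hA1nn : 0 ≤ A₁ := setIntegral_nonneg_of_ae (Filter.Eventually.of_forall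
    fun z => mul_nonneg (Complex.normSq_nonneg _) (Complex.normSq_nonneg _))
  have hA2nn : 0 ≤ A₂ := setIntegral_nonneg_of_ae (Filter.Eventually.of_forall
    fun z => mul_nonneg (Complex.normSq_nonneg _) (Complex.normSq_nonneg _))
  have ha : a < d ^ 2 / 4 := by rw [hadef, norm_sub_rev]; exact hz1
  have hb : b < d ^ 2 / 4 := by rw [hbdef, norm_sub_rev]; exact hz2
  have hanneg : 0 ≤ a := norm_nonneg _
  have hbnneg : 0 ≤ b := norm_nonneg _
  have hm0nn : 0 ≤ m0 := ENNReal.toReal_nonneg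
  have hw0nn : 0 ≤ w₀ := Complex.normSq_nonneg _
  have hd2 : 0 < d ^ 2 := by positivity
  have ha2 : Complex.normSq (z₀ - z₁) = a ^ 2 := (norm_sq_eq_normSq _).symm
  have hb2 : Complex.normSq (z₀ - z₂) = b ^ 2 := (norm_sq_eq_normSq _).symm
  rw [ha2] at B1
  rw [hb2] at B2
  -- M splits
  have hg1c : Continuous fun z : ℂ => Complex.normSq (z - z₁) * Complex.normSq (q.eval z) :=
    (Complex.continuous_normSq.comp (continuous_id.sub continuous_const)).mul
      (Complex.continuous_normSq.comp q.continuous)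
  have hg2c : Continuous fun z : ℂ => Complex.normSq (z - z₂) * Complex.normSq (q.eval z) :=
    (Complex.continuous_normSq.comp (continuous_id.sub continuous_const)).mul
      (Complex.continuous_normSq.comp q.continuous)
  have hig1 : Integrable (fun z : ℂ => Complex.normSq (z - z₁) * Complex.normSq (q.eval z)) μ :=
    integrable_of_ae_sphere hae_sph hg1c
  have hig2 : Integrable (fun z : ℂ => Complex.normSq (z - z₂) * Complex.normSq (q.eval z)) μ :=
    integrable_of_ae_sphere hae_sph hg2c
  have M1split := integral_split hg1c.stronglyMeasurable hig1 z₀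
  have M2split := integral_split hg2c.stronglyMeasurable hig2 z₀
  rw [smul_eq_mul, ha2, ← hw₀def, ← hm0def, ← hA₁def] at M1split
  rw [smul_eq_mul, hb2, ← hw₀def, ← hm0def, ← hA₂def] at M2split
  -- third relation: AM-GM bound
  have h3 : m0 * (a * b * w₀) ≤ (A₁ + A₂) / 2 := by
    have hFc : Continuous fun z : ℂ =>
        ((z - z₁) * (z - z₂)) * ((Complex.normSq (q.eval z) : ℝ) : ℂ) :=
      ((continuous_id.sub continuous_const).mul (continuous_id.sub continuous_const)).mul
        (Complex.continuous_ofReal.comp (Complex.continuous_normSq.comp q.continuous))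
    have hiF : Integrable (fun z : ℂ =>
        ((z - z₁) * (z - z₂)) * ((Complex.normSq (q.eval z) : ℝ) : ℂ)) μ :=
      integrable_of_ae_sphere hae_sph hFc
    have split3 := integral_split hFc.stronglyMeasurable hiF z₀
    rw [E3] at split3
    have hrest : ‖∫ z in ({z₀}ᶜ : Set ℂ),
        ((z - z₁) * (z - z₂)) * ((Complex.normSq (q.eval z) : ℝ) : ℂ) ∂μ‖ = m0 * (a * b * w₀) := by
      have hRe : ∫ z in ({z₀}ᶜ : Set ℂ),
          ((z - z₁) * (z - z₂)) * ((Complex.normSq (q.eval z) : ℝ) : ℂ) ∂μ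
          = -(m0 • (((z₀ - z₁) * (z₀ - z₂)) * ((w₀ : ℝ) : ℂ))) :=
        eq_neg_of_add_eq_zero_right split3.symm
      rw [hRe, norm_neg, norm_smul, Real.norm_eq_abs, abs_of_nonneg hm0nn, norm_mul, norm_mul,
        Complex.norm_real, Real.norm_eq_abs, abs_of_nonneg hw0nn, ← hadef, ← hbdef]
    have hptb : ∀ z : ℂ, ‖((z - z₁) * (z - z₂)) * ((Complex.normSq (q.eval z) : ℝ) : ℂ)‖
        ≤ (Complex.normSq (z - z₁) * Complex.normSq (q.eval z)
          + Complex.normSq (z - z₂) * Complex.normSq (q.eval z)) / 2 := by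
      intro z
      have e1 : ‖((z - z₁) * (z - z₂)) * ((Complex.normSq (q.eval z) : ℝ) : ℂ)‖
          = ‖z - z₁‖ * ‖z - z₂‖ * Complex.normSq (q.eval z) := by
        rw [norm_mul, norm_mul, Complex.norm_real, Real.norm_eq_abs,
          abs_of_nonneg (Complex.normSq_nonneg _)]
      have n1 : Complex.normSq (z - z₁) = ‖z - z₁‖ ^ 2 := (norm_sq_eq_normSq _).symm
      have n2 : Complex.normSq (z - z₂) = ‖z - z₂‖ ^ 2 := (norm_sq_eq_normSq _).symm
      rw [e1, n1, n2]
      nlinarith [Complex.normSq_nonneg (q.eval z),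
        mul_nonneg (Complex.normSq_nonneg (q.eval z)) (sq_nonneg (‖z - z₁‖ - ‖z - z₂‖))]
    have hnorm_le : ‖∫ z in ({z₀}ᶜ : Set ℂ),
        ((z - z₁) * (z - z₂)) * ((Complex.normSq (q.eval z) : ℝ) : ℂ) ∂μ‖ ≤ (A₁ + A₂) / 2 := by
      calc ‖∫ z in ({z₀}ᶜ : Set ℂ),
          ((z - z₁) * (z - z₂)) * ((Complex.normSq (q.eval z) : ℝ) : ℂ) ∂μ‖
          ≤ ∫ z in ({z₀}ᶜ : Set ℂ),
            ‖((z - z₁) * (z - z₂)) * ((Complex.normSq (q.eval z) : ℝ) : ℂ)‖ ∂μ :=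
            norm_integral_le_integral_norm _
        _ ≤ ∫ z in ({z₀}ᶜ : Set ℂ), (Complex.normSq (z - z₁) * Complex.normSq (q.eval z)
              + Complex.normSq (z - z₂) * Complex.normSq (q.eval z)) / 2 ∂μ := by
            refine integral_mono_ae hiF.norm.integrableOn ?_
              (Filter.Eventually.of_forall hptb)
            exact ((hig1.integrableOn.add hig2.integrableOn).div_const 2)
        _ = (A₁ + A₂) / 2 := by
            rw [integral_div, integral_add hig1.integrableOn hig2.integrableOn]
    rw [hrest] at hnorm_le
    exact hnorm_le
  -- final arithmetic
  have hDb : 0 < d ^ 2 / 2 - b := by linarith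
  have hDa : 0 < d ^ 2 / 2 - a := by linarith
  by_cases ha0 : a = 0
  · have hA1z : A₁ = 0 := by nlinarith [B1]
    refine no_vanish μ hcirc n hn z₁ q hq0 hnd ?_
    rw [M1split, ha0, hA1z]; ring
  by_cases hb0 : b = 0
  · have hA2z : A₂ = 0 := by nlinarith [B2]
    refine no_vanish μ hcirc n hn z₂ q hq0 hnd ?_
    rw [M2split, hb0, hA2z]; ring
  by_cases hc0 : w₀ * m0 = 0
  · have hz : a ^ 2 * w₀ * m0 = 0 := by
      rw [mul_assoc, hc0, mul_zero]
    have hA1z : A₁ = 0 := by nlinarith [B1]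
    refine no_vanish μ hcirc n hn z₁ q hq0 hnd ?_
    rw [M1split, hA1z]
    nlinarith [hz]
  -- main case
  have hapos : 0 < a := lt_of_le_of_ne hanneg (Ne.symm ha0)
  have hbpos : 0 < b := lt_of_le_of_ne hbnneg (Ne.symm hb0)
  have hcpos : 0 < w₀ * m0 :=
    lt_of_le_of_ne (mul_nonneg hw0nn hm0nn) (Ne.symm hc0)
  have hK : 0 < a * b * (w₀ * m0) := by positivity
  have hA1lt : A₁ < a * b * (w₀ * m0) := by
    have k1 : A₁ * (d ^ 2 / 2 - b) < (a * b * (w₀ * m0)) * (d ^ 2 / 2 - b) := by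
      calc A₁ * (d ^ 2 / 2 - b) ≤ b * (a ^ 2 * w₀ * m0) := B1
        _ = (a * b * (w₀ * m0)) * a := by ring
        _ < (a * b * (w₀ * m0)) * (d ^ 2 / 2 - b) := by
            apply mul_lt_mul_of_pos_left (by linarith) hK
    exact lt_of_mul_lt_mul_right k1 hDb.le
  have hA2lt : A₂ < a * b * (w₀ * m0) := by
    have k1 : A₂ * (d ^ 2 / 2 - a) < (a * b * (w₀ * m0)) * (d ^ 2 / 2 - a) := by
      calc A₂ * (d ^ 2 / 2 - a) ≤ a * (b ^ 2 * w₀ * m0) := B2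
        _ = (a * b * (w₀ * m0)) * b := by ring
        _ < (a * b * (w₀ * m0)) * (d ^ 2 / 2 - a) := by
            apply mul_lt_mul_of_pos_left (by linarith) hK
    exact lt_of_mul_lt_mul_right k1 hDa.le
  nlinarith [h3, hA1lt, hA2lt]
end

section
/- For z₀ on the unit circle and K a nonempty closed subset of the unit circle with dist(z₀, K) = d, the distance from z₀ to the convex hull of K is at least d²/2. -/
/-!
Every `w ∈ K` is a unit vector at distance at least `d` from `z₀`, so `⟪z₀, w⟫ ≤ 1 - d² / 2`.
This half-space is closed and convex, hence contains the closed convex hull of `K`, and any `x`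
in it satisfies `‖z₀ - x‖ ≥ ⟪z₀, z₀ - x⟫ ≥ d² / 2`.
-/

open Metric
open scoped InnerProductSpace

variable {E : Type*} [NormedAddCommGroup E] [InnerProductSpace ℝ E]

lemma real_inner_eq_one_sub_dist_sq_div_two {u w : E} (hu : ‖u‖ = 1) (hw : ‖w‖ = 1) :
    ⟪u, w⟫_ℝ = 1 - dist u w ^ 2 / 2 := by
  rw [dist_eq_norm, norm_sub_sq_real, hu, hw]
  ring

lemma closure_convexHull_subset_halfSpace {K : Set E} {u : E} {c : ℝ}
    (hK : ∀ w ∈ K, ⟪u, w⟫_ℝ ≤ c) : closure (convexHull ℝ K) ⊆ {x | ⟪u, x⟫_ℝ ≤ c} :=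
  closure_minimal (convexHull_min hK (convex_halfSpace_le (innerₛₗ ℝ u).isLinear c))
    (isClosed_le (continuous_const.inner continuous_id) continuous_const)

lemma one_sub_le_dist_of_real_inner_le {u x : E} {c : ℝ} (hu : ‖u‖ = 1) (hx : ⟪u, x⟫_ℝ ≤ c) :
    1 - c ≤ dist u x :=
  calc 1 - c ≤ ⟪u, u - x⟫_ℝ := by
        rw [inner_sub_right, real_inner_self_eq_norm_sq, hu]; linarith
    _ ≤ ‖u‖ * ‖u - x‖ := real_inner_le_norm _ _
    _ = dist u x := by rw [hu, one_mul, dist_eq_norm]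

theorem infDist_sq_div_two_le_infDist_closure_convexHull {u : E} (hu : ‖u‖ = 1) {K : Set E}
    (hK : K ⊆ sphere 0 1) (hKne : K.Nonempty) :
    infDist u K ^ 2 / 2 ≤ infDist u (closure (convexHull ℝ K)) := by
  have hK_half : ∀ w ∈ K, ⟪u, w⟫_ℝ ≤ 1 - infDist u K ^ 2 / 2 := fun w hw => by
    rw [real_inner_eq_one_sub_dist_sq_div_two hu (mem_sphere_zero_iff_norm.mp (hK hw))]
    gcongr
    · exact infDist_nonneg
    · exact infDist_le_dist_of_mem hw
  rw [le_infDist (hKne.convexHull.closure)]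
  intro x hx
  simpa using one_sub_le_dist_of_real_inner_le hu (closure_convexHull_subset_halfSpace hK_half hx)

theorem stmt_9_general (z₀ : ℂ) (hz₀ : ‖z₀‖ = 1) (K : Set ℂ)
    (hK : K ⊆ Metric.sphere (0 : ℂ) 1) (hKne : K.Nonempty) :
    Metric.infDist z₀ K ^ 2 / 2 ≤ Metric.infDist z₀ (closure (convexHull ℝ K)) :=
  infDist_sq_div_two_le_infDist_closure_convexHull hz₀ hK hKne

/-- For `z₀` on the unit circle and `K` a nonempty closed subset of the unit circle with
`dist(z₀, K) = d`, the distance from `z₀` to the closed convex hull of `K` is at least `d²/2`. -/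
theorem stmt_9 (z₀ : ℂ) (hz₀ : ‖z₀‖ = 1) (K : Set ℂ)
    (hK : K ⊆ Metric.sphere (0 : ℂ) 1) (hKclosed : IsClosed K) (hKne : K.Nonempty) :
    Metric.infDist z₀ K ^ 2 / 2 ≤ Metric.infDist z₀ (closure (convexHull ℝ K)) :=
  stmt_9_general z₀ hz₀ K hK hKne
end

section
/- Consequence of the variational formula: with notation as above, for any y ∈ ℝ, |x_k^{(j)} − y| ≤ (∫ |x − y| ∏_{ℓ≠k}|x − x_ℓ^{(j)}|² dρ(x)) / (∫ ∏_{ℓ≠k}|x − x_ℓ^{(j)}|² dρ(x)). -/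
open MeasureTheory Polynomial

/-- The support of a measure on ℝ: points all of whose neighborhoods have positive measure. -/
def measSupportR (ρ : Measure ℝ) : Set ℝ := {x | ∀ U ∈ nhds x, 0 < ρ U}

lemma integ_poly (ρ : Measure ℝ)
    (hmom : ∀ n : ℕ, Integrable (fun x : ℝ => |x| ^ n) ρ)
    (P : Polynomial ℝ) : Integrable (fun x => P.eval x) ρ := by
  have hmono : ∀ n : ℕ, Integrable (fun x : ℝ => x ^ n) ρ := by
    intro n
    have h : Integrable (fun x : ℝ => ‖x ^ n‖) ρ := by
      simpa [abs_pow] using hmom n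
    exact (integrable_norm_iff (by fun_prop)).mp h
  have h : (fun x => P.eval x)
      = fun x => ∑ i ∈ Finset.range (P.natDegree + 1), P.coeff i * x ^ i := by
    funext x; exact P.eval_eq_sum_range x
  rw [h]
  exact integrable_finset_sum _ fun i _ => (hmono i).const_mul _

/-- Variational characterization of OPRL zeros: if `x₁,…,x_j` are the zeros of the degree-`j`
monic orthogonal polynomial of `ρ`, then for any `y`,
`|x_k − y|` is at most the `ρ`-average of `|x − y|` against the weight `∏_{ℓ≠k} |x − x_ℓ|²`. -/
theorem stmt_11 (ρ : Measure ℝ) [IsFiniteMeasure ρ]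
    (hmom : ∀ n : ℕ, Integrable (fun x : ℝ => |x| ^ n) ρ)
    (j : ℕ) (hsupp : ∃ s : Finset ℝ, ↑s ⊆ measSupportR ρ ∧ j < s.card)
    (ξ : Fin j → ℝ)
    (horth : ∀ Q : Polynomial ℝ, Q.degree < j →
      ∫ x, (∏ ℓ, (x - ξ ℓ)) * Q.eval x ∂ρ = 0)
    (k : Fin j) (y : ℝ) :
    |ξ k - y| ≤ (∫ x, |x - y| * ∏ ℓ ∈ Finset.univ.erase k, (x - ξ ℓ) ^ 2 ∂ρ) /
        (∫ x, ∏ ℓ ∈ Finset.univ.erase k, (x - ξ ℓ) ^ 2 ∂ρ) := by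
  set W : ℝ → ℝ := fun x => ∏ ℓ ∈ Finset.univ.erase k, (x - ξ ℓ) ^ 2 with hWdef
  set Wp : Polynomial ℝ := ∏ ℓ ∈ Finset.univ.erase k, (X - C (ξ ℓ)) ^ 2 with hWpdef
  have hWeval : ∀ x, Wp.eval x = W x := by
    intro x; simp [hWpdef, hWdef, eval_prod]
  have hWcont : Continuous W := by
    have : Continuous fun x => Wp.eval x := Wp.continuous
    simpa [funext hWeval] using this
  have hWnn : ∀ x, 0 ≤ W x := fun x => Finset.prod_nonneg fun ℓ _ => sq_nonneg _
  have hWint : Integrable W ρ := by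
    have := integ_poly ρ hmom Wp
    simpa [funext hWeval] using this
  -- positivity of ∫ W
  obtain ⟨s, hs, hcard⟩ := hsupp
  have hIpos : 0 < ∫ x, W x ∂ρ := by
    set T : Finset ℝ := (Finset.univ.erase k).image ξ with hT
    have hTcard : T.card < s.card := by
      calc T.card ≤ (Finset.univ.erase k).card := Finset.card_image_le
        _ ≤ j := by simpa using Finset.card_erase_le.trans (by simp)
        _ < s.card := hcard
    have hnsub : ¬ s ⊆ T := fun h => absurd (Finset.card_le_card h) (by omega)
    obtain ⟨x₀, hx₀s, hx₀T⟩ := Finset.not_subset.mp hnsub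
    have hWx₀ : 0 < W x₀ := by
      apply Finset.prod_pos
      intro ℓ hℓ
      have : x₀ ≠ ξ ℓ := by
        intro h
        exact hx₀T (Finset.mem_image.mpr ⟨ℓ, hℓ, h.symm⟩)
      have hne' : x₀ - ξ ℓ ≠ 0 := sub_ne_zero.mpr this
      positivity
    -- the set where W > 0 is an open neighborhood of x₀
    have hUopen : IsOpen (W ⁻¹' Set.Ioi 0) := isOpen_Ioi.preimage hWcont
    have hUnhds : W ⁻¹' Set.Ioi 0 ∈ nhds x₀ := hUopen.mem_nhds hWx₀
    have hρU : 0 < ρ (W ⁻¹' Set.Ioi 0) := hs hx₀s _ hUnhds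
    have hsub : W ⁻¹' Set.Ioi 0 ⊆ Function.support W := fun x hx => ne_of_gt hx
    have hρsupp : 0 < ρ (Function.support W) := hρU.trans_le (measure_mono hsub)
    exact (integral_pos_iff_support_of_nonneg_ae
      (Filter.Eventually.of_forall hWnn) hWint).mpr hρsupp
  -- orthogonality: ∫ (x - ξ k) * W x = 0
  set Q : Polynomial ℝ := ∏ ℓ ∈ Finset.univ.erase k, (X - C (ξ ℓ)) with hQ
  have hQeval : ∀ x, Q.eval x = ∏ ℓ ∈ Finset.univ.erase k, (x - ξ ℓ) := by
    intro x; simp [hQ, eval_prod]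
  have hQdeg : Q.degree < j := by
    have h1 : Q.natDegree ≤ (Finset.univ.erase k).card := by
      refine (Polynomial.natDegree_prod_le _ _).trans ?_
      have heq : ∀ ℓ ∈ Finset.univ.erase k, (X - C (ξ ℓ)).natDegree = 1 :=
        fun ℓ _ => natDegree_X_sub_C _
      rw [Finset.sum_congr rfl heq]
      simp
    have h2 : (Finset.univ.erase k).card < j := by
      have := Finset.card_erase_of_mem (Finset.mem_univ k)
      rw [this]
      have : 0 < j := k.pos
      simp only [Finset.card_univ, Fintype.card_fin]
      omega
    calc Q.degree ≤ Q.natDegree := degree_le_natDegree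
      _ < (j : WithBot ℕ) := by exact_mod_cast Nat.cast_lt.mpr (lt_of_le_of_lt h1 h2)
  have h0 : ∫ x, (x - ξ k) * W x ∂ρ = 0 := by
    have := horth Q hQdeg
    rw [show (fun x => (∏ ℓ, (x - ξ ℓ)) * Q.eval x) = fun x => (x - ξ k) * W x from ?_] at this
    · exact this
    funext x
    rw [hQeval, ← Finset.mul_prod_erase Finset.univ _ (Finset.mem_univ k)]
    simp only [hWdef]
    rw [Finset.prod_pow]
    ring
  -- integrability of the pieces
  have hint1 : Integrable (fun x => (x - ξ k) * W x) ρ := by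
    have := integ_poly ρ hmom ((X - C (ξ k)) * Wp)
    simpa [hWeval] using this
  have hint2 : Integrable (fun x => (ξ k - y) * W x) ρ := hWint.const_mul _
  have hkey : ∫ x, (x - y) * W x ∂ρ = (ξ k - y) * ∫ x, W x ∂ρ := by
    have : (fun x => (x - y) * W x) = fun x => (x - ξ k) * W x + (ξ k - y) * W x := by
      funext x; ring
    rw [this, integral_add hint1 hint2, h0, zero_add, integral_const_mul]
  -- main inequality
  rw [le_div_iff₀ hIpos]
  calc |ξ k - y| * ∫ x, W x ∂ρ = |(ξ k - y) * ∫ x, W x ∂ρ| := by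
        rw [abs_mul, abs_of_nonneg (le_of_lt hIpos)]
    _ = |∫ x, (x - y) * W x ∂ρ| := by rw [hkey]
    _ ≤ ∫ x, |(x - y) * W x| ∂ρ := by
        simpa only [Real.norm_eq_abs] using
          norm_integral_le_integral_norm (μ := ρ) (fun x => (x - y) * W x)
    _ = ∫ x, |x - y| * W x ∂ρ := by
        congr 1; funext x; rw [abs_mul, abs_of_nonneg (hWnn x)]
end

section
/- Variational characterization of OPUC zeros: let μ be a nontrivial probability measure on the unit circle and let z₁^{(n)}, ..., z_n^{(n)} be the zeros of the monic orthogonal polynomial Φ_n(z; μ). Then for each k, z_k^{(n)} = (∫ z ∏_{ℓ≠k}|z − z_ℓ^{(n)}|² dμ(θ)) / (∫ ∏_{ℓ≠k}|z − z_ℓ^{(n)}|² dμ(θ)), where z = e^{iθ} in the integrals. -/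
open MeasureTheory Polynomial ComplexConjugate

lemma compl_measSupport_null (μ : Measure ℂ) : μ (measSupport μ)ᶜ = 0 := by
  have h : ∀ x : ((measSupport μ)ᶜ : Set ℂ), ∃ O : Set ℂ, IsOpen O ∧ (x : ℂ) ∈ O ∧ μ O = 0 := by
    rintro ⟨x, hx⟩
    simp only [Set.mem_compl_iff, measSupport, Set.mem_setOf_eq, not_forall] at hx
    obtain ⟨U, hU, hμU⟩ := hx
    obtain ⟨O, hOU, hO, hxO⟩ := mem_nhds_iff.mp hU
    have hU0 : μ U = 0 := by simpa using hμU
    exact ⟨O, hO, hxO, le_antisymm ((measure_mono hOU).trans hU0.le) bot_le⟩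
  choose O hOopen hxO hOnull using h
  obtain ⟨T, hTc, hTU⟩ := TopologicalSpace.isOpen_iUnion_countable O hOopen
  have hsub : (measSupport μ)ᶜ ⊆ ⋃ i ∈ T, O i := by
    rw [hTU]
    intro x hx
    exact Set.mem_iUnion.mpr ⟨⟨x, hx⟩, hxO ⟨x, hx⟩⟩
  refine measure_mono_null hsub ?_
  haveI := hTc.to_subtype
  rw [Set.biUnion_eq_iUnion]
  exact measure_iUnion_null fun i => hOnull i

/-- Variational characterization of OPUC zeros: if `z₁,…,z_n` are the zeros of the monic
orthogonal polynomial `Φₙ(·;μ)` of a nontrivial probability measure on the unit circle, then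
`z_k = (∫ z ∏_{ℓ≠k}|z − z_ℓ|² dμ) / (∫ ∏_{ℓ≠k}|z − z_ℓ|² dμ)`. -/
theorem stmt_12 (μ : Measure ℂ) [IsProbabilityMeasure μ]
    (hcirc : measSupport μ ⊆ Metric.sphere (0 : ℂ) 1)
    (hinf : (measSupport μ).Infinite)
    (n : ℕ) (ζ : Fin n → ℂ)
    (horth : ∀ Q : Polynomial ℂ, Q.degree < n →
      ∫ z, (∏ ℓ, (z - ζ ℓ)) * conj (Q.eval z) ∂μ = 0)
    (k : Fin n) :
    ζ k = (∫ z, z * ∏ ℓ ∈ Finset.univ.erase k, ((‖z - ζ ℓ‖ : ℂ)) ^ 2 ∂μ) /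
        ((∫ z, ∏ ℓ ∈ Finset.univ.erase k, ‖z - ζ ℓ‖ ^ 2 ∂μ : ℝ) : ℂ) := by
  set s : Finset (Fin n) := Finset.univ.erase k with hs
  set W : ℂ → ℝ := fun z => ∏ ℓ ∈ s, ‖z - ζ ℓ‖ ^ 2 with hW
  -- a.e. norm one
  have haes : ∀ᵐ z ∂μ, z ∈ measSupport μ := by
    rw [MeasureTheory.ae_iff]
    exact compl_measSupport_null μ
  have hae : ∀ᵐ z ∂μ, ‖z‖ = 1 := by
    filter_upwards [haes] with z hz
    simpa [mem_sphere_iff_norm] using hcirc hz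
  set C : ℝ := ∏ ℓ ∈ s, (1 + ‖ζ ℓ‖) ^ 2 with hC
  have hWnonneg : ∀ z, 0 ≤ W z := fun z =>
    Finset.prod_nonneg fun ℓ _ => sq_nonneg _
  have hWbound : ∀ z, ‖z‖ = 1 → W z ≤ C := by
    intro z hz
    refine Finset.prod_le_prod (fun ℓ _ => sq_nonneg _) fun ℓ _ => ?_
    have h1 : ‖z - ζ ℓ‖ ≤ 1 + ‖ζ ℓ‖ := by
      calc ‖z - ζ ℓ‖ ≤ ‖z‖ + ‖ζ ℓ‖ := norm_sub_le _ _
        _ = 1 + ‖ζ ℓ‖ := by rw [hz]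
    exact pow_le_pow_left₀ (norm_nonneg _) h1 2
  have hWcont : Continuous W := by
    apply continuous_finset_prod
    intro ℓ _
    exact ((continuous_id.sub continuous_const).norm).pow 2
  have hWint : Integrable W μ := by
    refine Integrable.mono' (integrable_const C) hWcont.aestronglyMeasurable ?_
    filter_upwards [hae] with z hz
    rw [Real.norm_eq_abs, abs_of_nonneg (hWnonneg z)]
    exact hWbound z hz
  have hWc : ∀ z : ℂ, ((W z : ℝ) : ℂ) = ∏ ℓ ∈ s, ((‖z - ζ ℓ‖ : ℂ)) ^ 2 := by
    intro z
    rw [hW]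
    push_cast
    ring
  have hzWint : Integrable (fun z => z * ((W z : ℝ) : ℂ)) μ := by
    refine Integrable.mono' (integrable_const C) ?_ ?_
    · exact (continuous_id.mul (Complex.continuous_ofReal.comp hWcont)).aestronglyMeasurable
    · filter_upwards [hae] with z hz
      rw [norm_mul, hz, one_mul, Complex.norm_real, Real.norm_eq_abs,
        abs_of_nonneg (hWnonneg z)]
      exact hWbound z hz
  have hWcint : Integrable (fun z => ((W z : ℝ) : ℂ)) μ := hWint.ofReal
  -- orthogonality with Q = ∏_{ℓ≠k}(X - ζ ℓ)
  have hkey : ∫ z, (z - ζ k) * ((W z : ℝ) : ℂ) ∂μ = 0 := by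
    have hdeg : (∏ ℓ ∈ s, (Polynomial.X - Polynomial.C (ζ ℓ))).degree < (n : WithBot ℕ) := by
      have hd : (∏ ℓ ∈ s, (Polynomial.X - Polynomial.C (ζ ℓ))).degree
          = (s.card : WithBot ℕ) := by
        rw [Polynomial.degree_prod]
        simp [Polynomial.degree_X_sub_C]
      have hcard : s.card = n - 1 := by
        rw [hs, Finset.card_erase_of_mem (Finset.mem_univ k), Finset.card_univ,
          Fintype.card_fin]
      rw [hd, hcard]
      exact_mod_cast Nat.sub_lt k.pos one_pos
    have h := horth _ hdeg
    rw [← h]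
    apply integral_congr_ae
    filter_upwards with z
    have hev : conj ((∏ ℓ ∈ s, (Polynomial.X - Polynomial.C (ζ ℓ))).eval z)
        = ∏ ℓ ∈ s, (starRingEnd ℂ) (z - ζ ℓ) := by
      rw [Polynomial.eval_prod, map_prod]
      simp
    have hsplit : (∏ ℓ, (z - ζ ℓ)) = (z - ζ k) * ∏ ℓ ∈ s, (z - ζ ℓ) := by
      rw [hs]
      exact (Finset.mul_prod_erase _ _ (Finset.mem_univ k)).symm
    rw [hev, hsplit, mul_assoc, ← Finset.prod_mul_distrib]
    congr 1
    rw [hWc]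
    refine Finset.prod_congr rfl fun ℓ _ => ?_
    rw [Complex.mul_conj, Complex.normSq_eq_norm_sq]
    push_cast
    ring
  -- split the integral
  have hmain : (∫ z, z * ((W z : ℝ) : ℂ) ∂μ) = ζ k * ((∫ z, W z ∂μ : ℝ) : ℂ) := by
    have hsub : ∫ z, (z - ζ k) * ((W z : ℝ) : ℂ) ∂μ
        = (∫ z, z * ((W z : ℝ) : ℂ) ∂μ) - ζ k * ∫ z, ((W z : ℝ) : ℂ) ∂μ := by
      rw [← integral_const_mul, ← integral_sub hzWint (hWcint.const_mul _)]
      apply integral_congr_ae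
      filter_upwards with z
      ring
    rw [hsub, sub_eq_zero] at hkey
    rw [hkey]
    congr 1
    exact integral_ofReal
  -- denominator nonzero
  have hWne : (∫ z, W z ∂μ) ≠ 0 := by
    intro h0
    have hW0 : W =ᵐ[μ] 0 := by
      rw [← integral_eq_zero_iff_of_nonneg (fun z => hWnonneg z) hWint]
      exact h0
    set Z : Set ℂ := ↑(s.image ζ) with hZ
    have hZc : μ Zᶜ = 0 := by
      have h1 : μ {z | W z ≠ 0} = 0 := by
        have h2 := hW0
        rw [Filter.EventuallyEq, ae_iff] at h2
        simpa using h2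
      refine measure_mono_null ?_ h1
      intro z hz
      simp only [Set.mem_compl_iff, hZ, Finset.coe_image, Set.mem_image] at hz
      simp only [Set.mem_setOf_eq, hW]
      intro h0'
      obtain ⟨ℓ, hℓ, hfz⟩ := Finset.prod_eq_zero_iff.mp h0'
      exact hz ⟨ℓ, hℓ,
        (sub_eq_zero.mp (norm_eq_zero.mp ((pow_eq_zero_iff two_ne_zero).mp hfz))).symm⟩
    have hsupZ : measSupport μ ⊆ Z := by
      intro x hx
      by_contra hxZ
      have hopen : IsOpen Zᶜ := (Set.Finite.isClosed (Finset.finite_toSet _)).isOpen_compl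
      have hpos := hx Zᶜ (hopen.mem_nhds hxZ)
      rw [hZc] at hpos
      exact lt_irrefl 0 hpos
    exact hinf (Set.Finite.subset (Finset.finite_toSet _) hsupZ)
  -- conclude
  have hgoal : (∫ z, z * ∏ ℓ ∈ Finset.univ.erase k, ((‖z - ζ ℓ‖ : ℂ)) ^ 2 ∂μ)
      = ζ k * ((∫ z, ∏ ℓ ∈ Finset.univ.erase k, ‖z - ζ ℓ‖ ^ 2 ∂μ : ℝ) : ℂ) := by
    rw [← hmain]
    apply integral_congr_ae
    filter_upwards with z
    rw [hWc]
  rw [hgoal, mul_div_assoc, div_self (by exact_mod_cast hWne), mul_one]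
end

section
/- Szegő variational factorization: let μ be a nontrivial measure on the unit circle and let z₁, ..., z_k be among the zeros of Φ_n(z; μ) (counted with multiplicity). Then Φ_n(z; μ) = ∏_{j=1}^k (z − z_j) · Φ_{n−k}(z; ∏_{j=1}^k |z − z_j|² dμ), i.e., Φ_n(z; μ)/∏_{j=1}^k (z−z_j) is the degree-(n−k) monic orthogonal polynomial for the modified measure ∏_{j=1}^k |z − z_j|² dμ. -/
open MeasureTheory Polynomial ComplexConjugate

/-- Szegő variational factorization: if `z₁,…,z_k` are among the zeros (with multiplicity) of
the degree-`n` monic orthogonal polynomial `Φₙ(·;μ)` of a nontrivial measure `μ` on the unit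
circle, then `Φₙ(z;μ) = ∏_{j}(z − z_j) · Φ_{n−k}(z; ∏_j |z − z_j|² dμ)`, i.e. the quotient is
the degree-`(n−k)` monic orthogonal polynomial of the modified measure `∏_j |z−z_j|² dμ`. -/
theorem stmt_13 (μ : Measure ℂ) [IsFiniteMeasure μ]
    (hcirc : measSupport μ ⊆ Metric.sphere (0 : ℂ) 1)
    (hinf : (measSupport μ).Infinite)
    (n : ℕ) (Φ : Polynomial ℂ) (hmonic : Φ.Monic) (hdeg : Φ.natDegree = n)
    (horth : ∀ Q : Polynomial ℂ, Q.degree < n →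
      ∫ z, Φ.eval z * conj (Q.eval z) ∂μ = 0)
    (k : ℕ) (hk : k ≤ n) (ζ : Fin k → ℂ)
    (hdvd : (∏ j, (X - C (ζ j))) ∣ Φ) :
    ∃ Ψ : Polynomial ℂ, Φ = (∏ j, (X - C (ζ j))) * Ψ ∧ Ψ.Monic ∧ Ψ.natDegree = n - k ∧
      ∀ Q : Polynomial ℂ, Q.degree < (n - k : ℕ) →
        ∫ z, Ψ.eval z * conj (Q.eval z)
          ∂(μ.withDensity fun w => ENNReal.ofReal (∏ j, ‖w - ζ j‖ ^ 2)) = 0 := by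
  classical
  obtain ⟨Ψ, hΨ⟩ := hdvd
  set P : Polynomial ℂ := ∏ j, (X - C (ζ j)) with hP
  have hPmonic : P.Monic := monic_prod_of_monic _ _ fun j _ => monic_X_sub_C _
  have hPdeg : P.natDegree = k := by
    rw [hP, natDegree_prod_of_monic _ _ fun j _ => monic_X_sub_C _]
    simp [natDegree_X_sub_C]
  have hΨmonic : Ψ.Monic := hPmonic.of_mul_monic_left (hΨ ▸ hmonic)
  have hΨdeg : Ψ.natDegree = n - k := by
    have : Φ.natDegree = P.natDegree + Ψ.natDegree := by
      rw [hΨ]; exact natDegree_mul hPmonic.ne_zero hΨmonic.ne_zero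
    omega
  refine ⟨Ψ, hΨ, hΨmonic, hΨdeg, ?_⟩
  intro Q hQ
  have hcont : Continuous fun z : ℂ => (∏ j, ‖z - ζ j‖ ^ 2) := by
    continuity
  have hmeas : Measurable fun z : ℂ => (∏ j, ‖z - ζ j‖ ^ 2).toNNReal :=
    hcont.measurable.real_toNNReal
  have hrw : (fun w : ℂ => ENNReal.ofReal (∏ j, ‖w - ζ j‖ ^ 2)) =
      fun w : ℂ => ((∏ j, ‖w - ζ j‖ ^ 2).toNNReal : ENNReal) := rfl
  rw [hrw, integral_withDensity_eq_integral_smul hmeas]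
  have hpt : ∀ z : ℂ, (∏ j, ‖z - ζ j‖ ^ 2).toNNReal • (Ψ.eval z * conj (Q.eval z)) =
      Φ.eval z * conj ((P * Q).eval z) := by
    intro z
    have hnonneg : 0 ≤ ∏ j, ‖z - ζ j‖ ^ 2 :=
      Finset.prod_nonneg fun j _ => sq_nonneg _
    have h1 : ((∏ j, ‖z - ζ j‖ ^ 2 : ℝ) : ℂ) = P.eval z * conj (P.eval z) := by
      rw [hP, eval_prod, map_prod, ← Finset.prod_mul_distrib]
      push_cast
      refine Finset.prod_congr rfl fun j _ => ?_
      simp only [eval_sub, eval_X, eval_C, Complex.mul_conj, Complex.normSq_eq_norm_sq]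
      push_cast
      ring
    calc (∏ j, ‖z - ζ j‖ ^ 2).toNNReal • (Ψ.eval z * conj (Q.eval z))
        = ((∏ j, ‖z - ζ j‖ ^ 2 : ℝ) : ℂ) * (Ψ.eval z * conj (Q.eval z)) := by
          rw [NNReal.smul_def, Real.coe_toNNReal _ hnonneg, Complex.real_smul]
      _ = (P.eval z * Ψ.eval z) * (conj (P.eval z) * conj (Q.eval z)) := by
          rw [h1]; ring
      _ = Φ.eval z * conj ((P * Q).eval z) := by
          rw [hΨ, eval_mul, eval_mul, map_mul]
  simp_rw [hpt]
  apply horth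
  calc (P * Q).degree ≤ P.degree + Q.degree := degree_mul_le _ _
    _ < n := by
        rw [degree_eq_natDegree hPmonic.ne_zero, hPdeg]
        rcases eq_or_ne Q 0 with rfl | hQ0
        · exact lt_of_eq_of_lt (by simp) (WithBot.bot_lt_coe n)
        · have h2 : Q.natDegree < n - k := by
            rw [degree_eq_natDegree hQ0] at hQ; exact_mod_cast hQ
          rw [degree_eq_natDegree hQ0, ← Nat.cast_add]
          exact_mod_cast (by omega : k + Q.natDegree < n)
end

section
/- Persistence of zero limits: let (μ_t) be a family of probability measures on ∂𝔻 indexed by t ∈ (0,∞), and suppose that for some fixed N the zeros {z_j^{(N)}(t)} of Φ_N(z; μ_t) converge as t → ∞ to points {z_j^{(∞)}}_{j=1}^N all lying on the unit circle. Then for every ℓ > N, Φ_ℓ(z_j^{(∞)}; μ_t) → 0 as t → ∞ for each j; consequently N zeros of Φ_ℓ(z; μ_t) approach {z_j^{(∞)}}_{j=1}^N. -/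
set_option linter.unusedSectionVars false
set_option maxHeartbeats 1000000


open MeasureTheory Polynomial Filter Topology ComplexConjugate

namespace Stmt15

noncomputable def Ip (μ : Measure ℂ) (P Q : Polynomial ℂ) : ℂ :=
  ∫ z, P.eval z * conj (Q.eval z) ∂μ

lemma ae_measSupport (μ : Measure ℂ) [IsProbabilityMeasure μ] :
    ∀ᵐ z ∂μ, z ∈ measSupport μ := by
  have h := Measure.everywherePosSubset_ae_eq_of_measure_ne_top
      (μ := μ) (s := Set.univ) MeasurableSet.univ (by simp)
  have he : μ.everywherePosSubset Set.univ = measSupport μ := by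
    ext x
    simp [Measure.everywherePosSubset, measSupport, nhdsWithin_univ]
  rw [he] at h
  have h0 : μ (measSupport μ)ᶜ = 0 := by
    have := (MeasureTheory.ae_eq_set.1 h).2
    rw [Set.compl_eq_univ_diff]; exact this
  rw [MeasureTheory.ae_iff]
  exact h0

lemma ae_norm_one (μ : Measure ℂ) [IsProbabilityMeasure μ]
    (hc : measSupport μ ⊆ Metric.sphere (0 : ℂ) 1) : ∀ᵐ z ∂μ, ‖z‖ = 1 := by
  filter_upwards [ae_measSupport μ] with z hz
  simpa using hc hz

lemma integrable_PQ (μ : Measure ℂ) [IsProbabilityMeasure μ]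
    (hae : ∀ᵐ z ∂μ, ‖z‖ = 1) (P Q : Polynomial ℂ) :
    Integrable (fun z => P.eval z * conj (Q.eval z)) μ := by
  have hcont : Continuous fun z : ℂ => P.eval z * conj (Q.eval z) :=
    (P.continuous).mul (continuous_star.comp Q.continuous)
  obtain ⟨C, hC⟩ := (isCompact_sphere (0:ℂ) 1).exists_bound_of_continuousOn
    hcont.continuousOn
  refine ⟨hcont.aestronglyMeasurable, HasFiniteIntegral.of_bounded (C := C) ?_⟩
  filter_upwards [hae] with z hz
  exact hC z (by simpa using hz)

lemma integrable_normSq (μ : Measure ℂ) [IsProbabilityMeasure μ]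
    (hae : ∀ᵐ z ∂μ, ‖z‖ = 1) (P : Polynomial ℂ) :
    Integrable (fun z => Complex.normSq (P.eval z)) μ := by
  have hcont : Continuous fun z : ℂ => Complex.normSq (P.eval z) :=
    Complex.continuous_normSq.comp P.continuous
  obtain ⟨C, hC⟩ := (isCompact_sphere (0:ℂ) 1).exists_bound_of_continuousOn
    hcont.continuousOn
  refine ⟨hcont.aestronglyMeasurable, HasFiniteIntegral.of_bounded (C := C) ?_⟩
  filter_upwards [hae] with z hz
  exact hC z (by simpa using hz)

variable (μ : Measure ℂ) [IsProbabilityMeasure μ]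

variable {P P₁ P₂ Q Q₁ Q₂ : Polynomial ℂ}

lemma Ip_add_left (hae : ∀ᵐ z ∂μ, ‖z‖ = 1) : Ip μ (P₁ + P₂) Q = Ip μ P₁ Q + Ip μ P₂ Q := by
  unfold Ip
  simp only [eval_add, add_mul]
  exact integral_add (integrable_PQ μ hae P₁ Q) (integrable_PQ μ hae P₂ Q)

lemma Ip_sub_left (hae : ∀ᵐ z ∂μ, ‖z‖ = 1) : Ip μ (P₁ - P₂) Q = Ip μ P₁ Q - Ip μ P₂ Q := by
  unfold Ip
  simp only [eval_sub, sub_mul]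
  exact integral_sub (integrable_PQ μ hae P₁ Q) (integrable_PQ μ hae P₂ Q)

lemma Ip_add_right (hae : ∀ᵐ z ∂μ, ‖z‖ = 1) : Ip μ P (Q₁ + Q₂) = Ip μ P Q₁ + Ip μ P Q₂ := by
  unfold Ip
  simp only [eval_add, map_add, mul_add]
  exact integral_add (integrable_PQ μ hae P Q₁) (integrable_PQ μ hae P Q₂)

lemma Ip_smul_left (a : ℂ) : Ip μ (Polynomial.C a * P) Q = a * Ip μ P Q := by
  unfold Ip
  simp only [eval_mul, eval_C, mul_assoc]
  exact integral_const_mul a _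

lemma Ip_smul_right (a : ℂ) : Ip μ P (Polynomial.C a * Q) = conj a * Ip μ P Q := by
  unfold Ip
  simp only [eval_mul, eval_C, map_mul]
  rw [← integral_const_mul (conj a)]
  congr 1; ext z; ring

/-- Expansion lemma: if `P ⊥ X^k` for `1 ≤ k ≤ n` then `P ⊥ X*Q` whenever `deg Q < n`. -/
lemma Ip_mulX_eq_zero (hae : ∀ᵐ z ∂μ, ‖z‖ = 1) {n : ℕ} (h : ∀ k, 1 ≤ k → k ≤ n → Ip μ P (X ^ k) = 0)
    (hQ : Q.degree < (n : WithBot ℕ)) : Ip μ P (X * Q) = 0 := by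
  classical
  by_cases hQ0 : Q = 0
  · subst hQ0; simp [Ip]
  have hnd : Q.natDegree < n := by
    exact (Polynomial.natDegree_lt_iff_degree_lt hQ0).2 hQ
  have hQsum : X * Q = ∑ k ∈ Finset.range n, Polynomial.C (Q.coeff k) * X ^ (k + 1) := by
    conv_lhs => rw [Polynomial.as_sum_range' Q n hnd]
    rw [Finset.mul_sum]
    refine Finset.sum_congr rfl fun k _ => ?_
    rw [← Polynomial.C_mul_X_pow_eq_monomial]; ring
  rw [hQsum]
  have : ∀ s : Finset ℕ, (∀ k ∈ s, k < n) →
      Ip μ P (∑ k ∈ s, Polynomial.C (Q.coeff k) * X ^ (k + 1)) = 0 := by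
    intro s
    induction s using Finset.induction with
    | empty => intro _; simp [Ip]
    | @insert a s ha ih =>
      intro hs
      rw [Finset.sum_insert ha, Ip_add_right μ hae, Ip_smul_right μ, ih (fun k hk => hs k (Finset.mem_insert_of_mem hk)),
        h (a+1) (Nat.succ_le_succ (Nat.zero_le a)) (hs a (Finset.mem_insert_self a s))]
      simp
  exact this _ (fun k hk => Finset.mem_range.1 hk)

/-- The reversed-conjugated polynomial `P* (z) = ∑ conj(a_{n-k}) z^k`. -/
noncomputable def pstar (P : Polynomial ℂ) (n : ℕ) : Polynomial ℂ :=
  ∑ k ∈ Finset.range (n + 1), Polynomial.C (conj (P.coeff (n - k))) * X ^ k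

lemma pstar_coeff_zero (P : Polynomial ℂ) (n : ℕ) :
    (pstar P n).coeff 0 = conj (P.coeff n) := by
  unfold pstar
  rw [Polynomial.finset_sum_coeff]
  rw [Finset.sum_eq_single 0]
  · simp
  · intro k _ hk
    simp [Polynomial.coeff_C_mul, Polynomial.coeff_X_pow, (Ne.symm hk)]
  · simp

lemma pstar_degree (P : Polynomial ℂ) (n : ℕ) :
    (pstar P n).degree < ((n + 1 : ℕ) : WithBot ℕ) := by
  refine lt_of_le_of_lt (Polynomial.degree_sum_le _ _) ?_
  rw [Finset.sup_lt_iff (by exact_mod_cast WithBot.bot_lt_coe (n+1))]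
  intro k hk
  refine lt_of_le_of_lt (Polynomial.degree_mul_le _ _) ?_
  refine lt_of_le_of_lt (add_le_add Polynomial.degree_C_le le_rfl) ?_
  rw [zero_add, Polynomial.degree_X_pow]
  exact_mod_cast Finset.mem_range.1 hk

lemma zpow_conj {z : ℂ} (hz : ‖z‖ = 1) {m n : ℕ} (h : m ≤ n) :
    z ^ n * (conj z) ^ m = z ^ (n - m) := by
  have h1 : z * conj z = 1 := by
    have hn : Complex.normSq z = 1 := by
      rw [Complex.normSq_eq_norm_sq, hz, one_pow]
    rw [Complex.mul_conj, hn, Complex.ofReal_one]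
  calc z ^ n * (conj z) ^ m = z ^ (n - m) * ((z * conj z) ^ m) := by
        rw [mul_pow, ← mul_assoc, ← pow_add, Nat.sub_add_cancel h]
    _ = z ^ (n - m) := by rw [h1, one_pow, mul_one]

lemma pstar_eval {P : Polynomial ℂ} {n : ℕ} (hP : P.natDegree ≤ n) {z : ℂ} (hz : ‖z‖ = 1) :
    (pstar P n).eval z = z ^ n * conj (P.eval z) := by
  unfold pstar
  rw [Polynomial.eval_finset_sum]
  simp only [Polynomial.eval_mul, Polynomial.eval_C, Polynomial.eval_pow, Polynomial.eval_X]
  rw [Polynomial.eval_eq_sum_range' (Nat.lt_succ_of_le hP) z, map_sum, Finset.mul_sum]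
  rw [← Finset.sum_range_reflect]
  refine Finset.sum_congr rfl fun k hk => ?_
  have hk' : k ≤ n := Nat.lt_succ_iff.1 (Finset.mem_range.1 hk)
  have : n + 1 - 1 - k = n - k := by omega
  rw [this, Nat.sub_sub_self hk']
  rw [map_mul, map_pow]
  rw [← mul_assoc, mul_comm (z ^ n) (conj (P.coeff k)), mul_assoc]
  rw [zpow_conj hz hk']


lemma Ip_sub_right (hae : ∀ᵐ z ∂μ, ‖z‖ = 1) :
    Ip μ P (Q₁ - Q₂) = Ip μ P Q₁ - Ip μ P Q₂ := by
  unfold Ip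
  simp only [eval_sub, map_sub, mul_sub]
  exact integral_sub (integrable_PQ μ hae P Q₁) (integrable_PQ μ hae P Q₂)

lemma Ip_conj_symm : Ip μ P Q = conj (Ip μ Q P) := by
  unfold Ip
  rw [← integral_conj]
  congr 1; funext z
  simp only [map_mul, Complex.conj_conj]
  ring

lemma Ip_self_eq (P : Polynomial ℂ) :
    Ip μ P P = ((∫ z, Complex.normSq (P.eval z) ∂μ : ℝ) : ℂ) := by
  unfold Ip
  calc ∫ z, P.eval z * conj (P.eval z) ∂μ
      = ∫ z, ((Complex.normSq (P.eval z) : ℝ) : ℂ) ∂μ := by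
        congr 1; funext z; rw [Complex.mul_conj]
    _ = _ := integral_ofReal

lemma unit_mul_conj {z : ℂ} (hz : ‖z‖ = 1) : z * conj z = 1 := by
  have hn : Complex.normSq z = 1 := by
    rw [Complex.normSq_eq_norm_sq, hz, one_pow]
  rw [Complex.mul_conj, hn, Complex.ofReal_one]

lemma Ip_self_pos (hae : ∀ᵐ z ∂μ, ‖z‖ = 1) (hinf : (measSupport μ).Infinite)
    {P : Polynomial ℂ} (hP : P ≠ 0) :
    0 < ∫ z, Complex.normSq (P.eval z) ∂μ := by
  obtain ⟨x, hxs, hxr⟩ : ∃ x, x ∈ measSupport μ ∧ ¬ P.IsRoot x := by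
    obtain ⟨x, hx⟩ := (hinf.diff (Polynomial.finite_setOf_isRoot hP)).nonempty
    exact ⟨x, hx.1, hx.2⟩
  set r := Complex.normSq (P.eval x) with hr
  have hrpos : 0 < r := by
    rw [hr]
    exact Complex.normSq_pos.2 hxr
  set U := {z : ℂ | r/2 < Complex.normSq (P.eval z)} with hU
  have hUopen : IsOpen U :=
    isOpen_lt continuous_const (Complex.continuous_normSq.comp P.continuous)
  have hxU : x ∈ U := by
    simp only [hU, Set.mem_setOf_eq]
    linarith
  have hUpos : 0 < μ U := hxs U (hUopen.mem_nhds hxU)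
  have key := mul_meas_ge_le_integral_of_nonneg
    (Filter.Eventually.of_forall fun z => Complex.normSq_nonneg _)
    (integrable_normSq μ hae P) (r/2)
  have hsub : U ⊆ {z | r/2 ≤ Complex.normSq (P.eval z)} := by
    intro z hz
    rw [hU, Set.mem_setOf_eq] at hz
    exact le_of_lt hz
  have h2 : 0 < (μ {z | r/2 ≤ Complex.normSq (P.eval z)}).toReal := by
    apply ENNReal.toReal_pos
    · exact ne_of_gt (lt_of_lt_of_le hUpos (measure_mono hsub))
    · exact measure_ne_top μ _
  rw [measureReal_def] at key
  nlinarith [key]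

lemma eq_zero_of_Ip_self (hae : ∀ᵐ z ∂μ, ‖z‖ = 1) (hinf : (measSupport μ).Infinite)
    {P : Polynomial ℂ} (h : Ip μ P P = 0) : P = 0 := by
  by_contra hP
  have hpos := Ip_self_pos μ hae hinf hP
  rw [Ip_self_eq] at h
  rw [Complex.ofReal_eq_zero] at h
  exact absurd h (ne_of_gt hpos)

lemma natdeg_of_lt {n : ℕ} {p : Polynomial ℂ}
    (hp : p.degree < ((n + 1 : ℕ) : WithBot ℕ)) : p.natDegree ≤ n := by
  by_cases h0 : p = 0
  · simp [h0]
  · exact Nat.lt_succ_iff.1 ((Polynomial.natDegree_lt_iff_degree_lt h0).2 hp)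

/-- The Szegő recursion, derived from orthogonality. -/
lemma szego (hae : ∀ᵐ z ∂μ, ‖z‖ = 1) (hinf : (measSupport μ).Infinite)
    {n : ℕ} {Φn Φn1 : Polynomial ℂ}
    (hmn : Φn.Monic) (hdn : Φn.natDegree = n)
    (hmn1 : Φn1.Monic) (hdn1 : Φn1.natDegree = n + 1)
    (horthn : ∀ Q : Polynomial ℂ, Q.degree < (n : WithBot ℕ) → Ip μ Φn Q = 0)
    (horthn1 : ∀ Q : Polynomial ℂ, Q.degree < ((n + 1 : ℕ) : WithBot ℕ) → Ip μ Φn1 Q = 0) :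
    ∃ c : ℂ, ‖c‖ ≤ 1 ∧ Φn1 = X * Φn + Polynomial.C c * pstar Φn n := by
  set S := pstar Φn n with hSdef
  have hdegS : S.degree < ((n + 1 : ℕ) : WithBot ℕ) := pstar_degree Φn n
  -- (1) orthogonality of S against X^k, 1 ≤ k ≤ n
  have hS_orth : ∀ k, 1 ≤ k → k ≤ n → Ip μ S (X ^ k) = 0 := by
    intro k hk1 hkn
    have key : Ip μ S (X ^ k) = conj (Ip μ Φn (X ^ (n - k))) := by
      unfold Ip
      rw [← integral_conj]
      apply integral_congr_ae
      filter_upwards [hae] with z hz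
      rw [hSdef, pstar_eval (le_of_eq hdn) hz]
      simp only [Polynomial.eval_pow, Polynomial.eval_X, map_mul, map_pow,
        Complex.conj_conj]
      have e := zpow_conj hz hkn
      calc z ^ n * conj (Φn.eval z) * (conj z) ^ k
          = (z ^ n * (conj z) ^ k) * conj (Φn.eval z) := by ring
        _ = conj (Φn.eval z) * z ^ (n - k) := by rw [e]; ring
    rw [key, horthn (X ^ (n - k)) (by
      rw [Polynomial.degree_X_pow]
      exact_mod_cast Nat.sub_lt (lt_of_lt_of_le hk1 hkn) hk1), map_zero]
  -- (2) the recursion polynomial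
  have hXΦm : (X * Φn).Monic := Polynomial.monic_X.mul hmn
  have hdXΦ : (X * Φn).natDegree = n + 1 := by
    rw [Polynomial.natDegree_mul Polynomial.X_ne_zero hmn.ne_zero,
      Polynomial.natDegree_X, add_comm, hdn]
  have hdegΦn1 : Φn1.degree = ((n + 1 : ℕ) : WithBot ℕ) := by
    rw [Polynomial.degree_eq_natDegree hmn1.ne_zero, hdn1]
  have hdegXΦ : (X * Φn).degree = ((n + 1 : ℕ) : WithBot ℕ) := by
    rw [Polynomial.degree_eq_natDegree hXΦm.ne_zero, hdXΦ]
  have hψdeg : (Φn1 - X * Φn).degree < ((n + 1 : ℕ) : WithBot ℕ) := by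
    have := Polynomial.degree_sub_lt (hdegΦn1.trans hdegXΦ.symm)
      hmn1.ne_zero (by rw [hmn1.leadingCoeff, hXΦm.leadingCoeff])
    rwa [hdegΦn1] at this
  have hψ_orth : ∀ k, 1 ≤ k → k ≤ n → Ip μ (Φn1 - X * Φn) (X ^ k) = 0 := by
    intro k hk1 hkn
    obtain ⟨k', rfl⟩ : ∃ k', k = k' + 1 := ⟨k - 1, by omega⟩
    rw [Ip_sub_left μ hae]
    have h1 : Ip μ Φn1 (X ^ (k' + 1)) = 0 := by
      apply horthn1
      rw [Polynomial.degree_X_pow]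
      exact_mod_cast Nat.lt_succ_of_le hkn
    have h2 : Ip μ (X * Φn) (X ^ (k' + 1)) = Ip μ Φn (X ^ k') := by
      unfold Ip
      apply integral_congr_ae
      filter_upwards [hae] with z hz
      simp only [Polynomial.eval_mul, Polynomial.eval_pow, Polynomial.eval_X, map_pow]
      calc z * Φn.eval z * (conj z) ^ (k' + 1)
          = (Φn.eval z * (conj z) ^ k') * (z * conj z) := by rw [pow_succ]; ring
        _ = Φn.eval z * (conj z) ^ k' := by rw [unit_mul_conj hz, mul_one]
    rw [h1, h2, horthn (X ^ k') (by
      rw [Polynomial.degree_X_pow]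
      exact_mod_cast (by omega : k' < n)), sub_zero]
  set c := Φn1.coeff 0 with hc
  set P := Φn1 - X * Φn - Polynomial.C c * S with hPdef
  have hScoeff : S.coeff 0 = 1 := by
    rw [hSdef, pstar_coeff_zero, ← hdn, hmn.coeff_natDegree, map_one]
  have hP0 : P.coeff 0 = 0 := by
    rw [hPdef]
    simp only [Polynomial.coeff_sub, Polynomial.mul_coeff_zero, Polynomial.coeff_X_zero,
      Polynomial.coeff_C_zero, hScoeff, zero_mul, mul_one]
    rw [← hc]; ring
  have hP_orth : ∀ k, 1 ≤ k → k ≤ n → Ip μ P (X ^ k) = 0 := by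
    intro k hk1 hkn
    rw [hPdef, Ip_sub_left μ hae, Ip_smul_left μ, hψ_orth k hk1 hkn, hS_orth k hk1 hkn,
      mul_zero, sub_zero]
  have hPnat : P.natDegree ≤ n := by
    rw [hPdef]
    refine le_trans (Polynomial.natDegree_sub_le _ _) (max_le (natdeg_of_lt hψdeg) ?_)
    exact le_trans (Polynomial.natDegree_C_mul_le _ _) (natdeg_of_lt hdegS)
  have hPzero : P = 0 := by
    by_cases hP' : P = 0
    · exact hP'
    have hPX : P = X * P.divX := by
      have h := Polynomial.X_mul_divX_add P
      rw [hP0, map_zero, add_zero] at h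
      exact h.symm
    have hdivX : P.divX.degree < (n : WithBot ℕ) := by
      refine lt_of_lt_of_le (Polynomial.degree_divX_lt hP') ?_
      exact le_trans (Polynomial.degree_le_natDegree) (by exact_mod_cast hPnat)
    have : Ip μ P P = 0 := by
      conv_lhs => rw [show Ip μ P P = Ip μ P (X * P.divX) by rw [← hPX]]
      exact Ip_mulX_eq_zero μ hae hP_orth hdivX
    exact eq_zero_of_Ip_self μ hae hinf this
  have heq : Φn1 = X * Φn + Polynomial.C c * S := by
    have h : Φn1 - (X * Φn + Polynomial.C c * S) = 0 := by
      rw [← hPzero, hPdef]; ring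
    exact sub_eq_zero.1 h
  refine ⟨c, ?_, heq⟩
  -- (3) the norm bound
  set s := ∫ z, Complex.normSq (Φn.eval z) ∂μ with hs
  have spos : 0 < s := Ip_self_pos μ hae hinf hmn.ne_zero
  have hIpnn : Ip μ Φn Φn = (s : ℂ) := Ip_self_eq μ Φn
  have hdegΦn : Φn.degree = (n : WithBot ℕ) := by
    rw [Polynomial.degree_eq_natDegree hmn.ne_zero, hdn]
  have hsubdeg : (Φn - X ^ n).degree < (n : WithBot ℕ) := by
    have := Polynomial.degree_sub_lt (hdegΦn.trans (Polynomial.degree_X_pow n).symm)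
      hmn.ne_zero (by rw [hmn.leadingCoeff, (Polynomial.monic_X_pow (n := n)).leadingCoeff])
    rwa [hdegΦn] at this
  have hXn : Ip μ Φn (X ^ n) = (s : ℂ) := by
    have h := Ip_sub_right μ hae (P := Φn) (Q₁ := Φn) (Q₂ := X ^ n)
    rw [horthn _ hsubdeg] at h
    have : Ip μ Φn (X ^ n) = Ip μ Φn Φn := by
      have := h.symm
      linear_combination -this
    rw [this, hIpnn]
  have hS1 : Ip μ S (1 : Polynomial ℂ) = (s : ℂ) := by
    have key : Ip μ S (1 : Polynomial ℂ) = conj (Ip μ Φn (X ^ n)) := by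
      unfold Ip
      rw [← integral_conj]
      apply integral_congr_ae
      filter_upwards [hae] with z hz
      rw [hSdef, pstar_eval (le_of_eq hdn) hz]
      simp only [Polynomial.eval_one, map_one, mul_one, Polynomial.eval_pow,
        Polynomial.eval_X, map_mul, map_pow, Complex.conj_conj]
      ring
    rw [key, hXn, Complex.conj_ofReal]
  have hXΦ1 : Ip μ (X * Φn) (1 : Polynomial ℂ) = -(c * (s : ℂ)) := by
    have hre : X * Φn = Φn1 - Polynomial.C c * S := by rw [heq]; ring
    rw [hre, Ip_sub_left μ hae, Ip_smul_left μ, hS1,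
      horthn1 (1 : Polynomial ℂ) (by
        rw [Polynomial.degree_one]
        exact_mod_cast Nat.zero_lt_succ n)]
    ring
  have hSXn1 : Ip μ S (X ^ (n + 1)) = -(conj c * (s : ℂ)) := by
    have key : Ip μ S (X ^ (n + 1)) = conj (Ip μ (X * Φn) (1 : Polynomial ℂ)) := by
      unfold Ip
      rw [← integral_conj]
      apply integral_congr_ae
      filter_upwards [hae] with z hz
      rw [hSdef, pstar_eval (le_of_eq hdn) hz]
      simp only [Polynomial.eval_pow, Polynomial.eval_X, Polynomial.eval_mul,
        Polynomial.eval_one, map_one, mul_one, map_mul, map_pow, Complex.conj_conj]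
      have e := zpow_conj hz (le_refl n)
      rw [Nat.sub_self, pow_zero] at e
      calc z ^ n * conj (Φn.eval z) * (conj z) ^ (n + 1)
          = (z ^ n * (conj z) ^ n) * (conj z * conj (Φn.eval z)) := by rw [pow_succ]; ring
        _ = conj z * conj (Φn.eval z) := by rw [e, one_mul]
    rw [key, hXΦ1, map_neg, map_mul, Complex.conj_ofReal]
  have hSXΦ : Ip μ S (X * Φn) = -(conj c * (s : ℂ)) := by
    have hdecomp : X * Φn = X * (Φn - X ^ n) + X ^ (n + 1) := by ring
    rw [hdecomp, Ip_add_right μ hae, Ip_mulX_eq_zero μ hae hS_orth hsubdeg, hSXn1, zero_add]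
  have hXX : Ip μ (X * Φn) (X * Φn) = (s : ℂ) := by
    have key : Ip μ (X * Φn) (X * Φn) = Ip μ Φn Φn := by
      unfold Ip
      apply integral_congr_ae
      filter_upwards [hae] with z hz
      simp only [Polynomial.eval_mul, Polynomial.eval_X, map_mul]
      calc z * Φn.eval z * (conj z * conj (Φn.eval z))
          = (z * conj z) * (Φn.eval z * conj (Φn.eval z)) := by ring
        _ = Φn.eval z * conj (Φn.eval z) := by rw [unit_mul_conj hz, one_mul]
    rw [key, hIpnn]
  have hSS : Ip μ S S = (s : ℂ) := by
    have key : Ip μ S S = Ip μ Φn Φn := by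
      unfold Ip
      apply integral_congr_ae
      filter_upwards [hae] with z hz
      rw [hSdef, pstar_eval (le_of_eq hdn) hz]
      simp only [map_mul, map_pow, Complex.conj_conj]
      have e := zpow_conj hz (le_refl n)
      rw [Nat.sub_self, pow_zero] at e
      calc z ^ n * conj (Φn.eval z) * ((conj z) ^ n * Φn.eval z)
          = (z ^ n * (conj z) ^ n) * (Φn.eval z * conj (Φn.eval z)) := by ring
        _ = Φn.eval z * conj (Φn.eval z) := by rw [e, one_mul]
    rw [key, hIpnn]
  have hXΦS : Ip μ (X * Φn) S = -(c * (s : ℂ)) := by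
    rw [Ip_conj_symm μ, hSXΦ, map_neg, map_mul, Complex.conj_conj, Complex.conj_ofReal]
  have hfinal : Ip μ Φn1 Φn1 = (s : ℂ) - (c * conj c) * (s : ℂ) := by
    conv_lhs => rw [heq]
    rw [Ip_add_left μ hae, Ip_add_right μ hae, Ip_add_right μ hae,
      Ip_smul_left μ, Ip_smul_right μ, Ip_smul_right μ, Ip_smul_left μ,
      hXX, hXΦS, hSXΦ, hSS]
    ring
  set s1 := ∫ z, Complex.normSq (Φn1.eval z) ∂μ with hs1
  have hs1nn : 0 ≤ s1 := integral_nonneg fun z => Complex.normSq_nonneg _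
  have hIp1 : Ip μ Φn1 Φn1 = (s1 : ℂ) := Ip_self_eq μ Φn1
  rw [hIp1, Complex.mul_conj] at hfinal
  have hreal : s1 = s - Complex.normSq c * s := by
    have : ((s1 : ℂ)) = ((s - Complex.normSq c * s : ℝ) : ℂ) := by
      rw [hfinal]; push_cast; ring
    exact_mod_cast this
  have hnsq : Complex.normSq c ≤ 1 := by nlinarith
  have : ‖c‖ ^ 2 ≤ 1 := by
    rw [← Complex.sq_norm] at hnsq
    exact hnsq
  nlinarith [norm_nonneg c]

lemma step_bound (hae : ∀ᵐ z ∂μ, ‖z‖ = 1) (hinf : (measSupport μ).Infinite)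
    {n : ℕ} {Φn Φn1 : Polynomial ℂ}
    (hmn : Φn.Monic) (hdn : Φn.natDegree = n)
    (hmn1 : Φn1.Monic) (hdn1 : Φn1.natDegree = n + 1)
    (horthn : ∀ Q : Polynomial ℂ, Q.degree < (n : WithBot ℕ) → Ip μ Φn Q = 0)
    (horthn1 : ∀ Q : Polynomial ℂ, Q.degree < ((n + 1 : ℕ) : WithBot ℕ) → Ip μ Φn1 Q = 0)
    {z : ℂ} (hz : ‖z‖ = 1) :
    ‖Φn1.eval z‖ ≤ 2 * ‖Φn.eval z‖ := by
  obtain ⟨c, hc1, heq⟩ := szego μ hae hinf hmn hdn hmn1 hdn1 horthn horthn1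
  have hps : ‖(pstar Φn n).eval z‖ = ‖Φn.eval z‖ := by
    rw [pstar_eval (le_of_eq hdn) hz, norm_mul, norm_pow, hz, one_pow, one_mul,
      RCLike.norm_conj]
  rw [heq]
  simp only [Polynomial.eval_add, Polynomial.eval_mul, Polynomial.eval_X, Polynomial.eval_C]
  calc ‖z * Φn.eval z + c * (pstar Φn n).eval z‖
      ≤ ‖z * Φn.eval z‖ + ‖c * (pstar Φn n).eval z‖ := norm_add_le _ _
    _ = ‖Φn.eval z‖ + ‖c‖ * ‖Φn.eval z‖ := by rw [norm_mul, hz, one_mul, norm_mul, hps]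
    _ ≤ 2 * ‖Φn.eval z‖ := by nlinarith [norm_nonneg (Φn.eval z)]

lemma pow_card_le_prod_real {ε : ℝ} (hε : 0 < ε) :
    ∀ (s : Multiset ℝ), (∀ x ∈ s, ε ≤ x) → ε ^ Multiset.card s ≤ s.prod := by
  intro s
  induction s using Multiset.induction with
  | empty => simp
  | cons a s ih =>
    intro h
    rw [Multiset.prod_cons, Multiset.card_cons, pow_succ]
    have ha := h a (Multiset.mem_cons_self a s)
    have hs := ih (fun x hx => h x (Multiset.mem_cons_of_mem hx))
    have hεn : 0 < ε ^ Multiset.card s := pow_pos hε _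
    nlinarith

end Stmt15

/-- Persistence of zero limits: let `(μ_t)` be a family of nontrivial probability measures on
the unit circle with monic orthogonal polynomials `Φ n t`, and suppose the degree-`N`
polynomials `Φ N t` converge coefficientwise as `t → ∞` to `∏ⱼ (z − zⱼ^∞)` with all
`zⱼ^∞` on the unit circle.  Then for every `ℓ > N` and each `j`, `Φ ℓ t (zⱼ^∞) → 0`;
consequently, for each `j`, zeros of `Φ ℓ t` approach `zⱼ^∞`. -/
theorem stmt_15 (μ : ℝ → Measure ℂ) (hprob : ∀ t, IsProbabilityMeasure (μ t))
    (hcirc : ∀ t, measSupport (μ t) ⊆ Metric.sphere (0 : ℂ) 1)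
    (hinf : ∀ t, (measSupport (μ t)).Infinite)
    (Φ : ℕ → ℝ → Polynomial ℂ)
    (hmonic : ∀ n t, (Φ n t).Monic) (hdeg : ∀ n t, (Φ n t).natDegree = n)
    (horth : ∀ (n : ℕ) (t : ℝ), ∀ Q : Polynomial ℂ, Q.degree < (n : WithBot ℕ) →
      ∫ z, (Φ n t).eval z * conj (Q.eval z) ∂(μ t) = 0)
    (N : ℕ) (zinf : Fin N → ℂ) (hzinf : ∀ j, ‖zinf j‖ = 1)
    (hconv : ∀ k : ℕ, Tendsto (fun t => (Φ N t).coeff k) atTop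
      (nhds ((∏ j, (X - C (zinf j))).coeff k))) :
    ∀ ℓ : ℕ, N < ℓ →
      (∀ j, Tendsto (fun t => (Φ ℓ t).eval (zinf j)) atTop (nhds 0)) ∧
      (∀ j, ∀ ε > (0 : ℝ), ∀ᶠ t in atTop,
        ∃ w : ℂ, (Φ ℓ t).eval w = 0 ∧ ‖w - zinf j‖ < ε) := by
  intro ℓ hℓ
  have hae : ∀ t, ∀ᵐ z ∂(μ t), ‖z‖ = 1 := fun t => by
    haveI := hprob t
    exact Stmt15.ae_norm_one (μ t) (hcirc t)
  have horth' : ∀ (n : ℕ) (t : ℝ), ∀ Q : Polynomial ℂ, Q.degree < (n : WithBot ℕ) →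
      Stmt15.Ip (μ t) (Φ n t) Q = 0 := fun n t Q hQ => horth n t Q hQ
  have hbound : ∀ (m : ℕ) (t : ℝ) (z : ℂ), ‖z‖ = 1 →
      ‖(Φ (N + m) t).eval z‖ ≤ 2 ^ m * ‖(Φ N t).eval z‖ := by
    intro m
    induction m with
    | zero => intro t z _; simp
    | succ m ih =>
      intro t z hz
      haveI := hprob t
      have hstep := Stmt15.step_bound (μ t) (hae t) (hinf t)
        (hmonic (N + m) t) (hdeg (N + m) t) (hmonic (N + m + 1) t)
        (hdeg (N + m + 1) t) (horth' (N + m) t) (horth' (N + m + 1) t) hz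
      calc ‖(Φ (N + (m + 1)) t).eval z‖ = ‖(Φ (N + m + 1) t).eval z‖ := rfl
        _ ≤ 2 * ‖(Φ (N + m) t).eval z‖ := hstep
        _ ≤ 2 * (2 ^ m * ‖(Φ N t).eval z‖) := by
            have := ih t z hz
            nlinarith
        _ = 2 ^ (m + 1) * ‖(Φ N t).eval z‖ := by ring
  have hNconv : ∀ j, Tendsto (fun t => (Φ N t).eval (zinf j)) atTop (nhds 0) := by
    intro j
    have hev : ∀ t, (Φ N t).eval (zinf j) =
        ∑ k ∈ Finset.range (N + 1), (Φ N t).coeff k * (zinf j) ^ k := fun t =>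
      Polynomial.eval_eq_sum_range' (by rw [hdeg]; omega) _
    have hFdeg : (∏ i, (X - C (zinf i))).natDegree < N + 1 := by
      rw [Polynomial.natDegree_prod _ _ (fun i _ => Polynomial.X_sub_C_ne_zero (zinf i))]
      simp [Polynomial.natDegree_X_sub_C]
    have hsum0 : (∑ k ∈ Finset.range (N + 1),
        (∏ i, (X - C (zinf i))).coeff k * (zinf j) ^ k) = 0 := by
      rw [← Polynomial.eval_eq_sum_range' hFdeg, Polynomial.eval_prod]
      exact Finset.prod_eq_zero (Finset.mem_univ j) (by simp)
    have hlim : Tendsto (fun t => ∑ k ∈ Finset.range (N + 1), (Φ N t).coeff k * (zinf j) ^ k)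
        atTop (nhds (∑ k ∈ Finset.range (N + 1),
          (∏ i, (X - C (zinf i))).coeff k * (zinf j) ^ k)) :=
      tendsto_finset_sum _ fun k _ => (hconv k).mul_const _
    rw [hsum0] at hlim
    exact hlim.congr (fun t => (hev t).symm)
  obtain ⟨m, rfl⟩ : ∃ m, ℓ = N + m := ⟨ℓ - N, by omega⟩
  have part1 : ∀ j, Tendsto (fun t => (Φ (N + m) t).eval (zinf j)) atTop (nhds 0) := by
    intro j
    rw [tendsto_zero_iff_norm_tendsto_zero]
    apply squeeze_zero (fun t => norm_nonneg _) (fun t => hbound m t (zinf j) (hzinf j))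
    have := (tendsto_zero_iff_norm_tendsto_zero.1 (hNconv j)).const_mul ((2 : ℝ) ^ m)
    simpa using this
  refine ⟨part1, ?_⟩
  intro j ε hε
  have h1 : ∀ᶠ t in atTop, ‖(Φ (N + m) t).eval (zinf j)‖ < ε ^ (N + m) :=
    (NormedAddCommGroup.tendsto_nhds_zero.1 (part1 j)) _ (pow_pos hε _)
  filter_upwards [h1] with t ht
  by_contra hcon
  push_neg at hcon
  set p := Φ (N + m) t with hp
  have hpm := hmonic (N + m) t
  have hsplit := IsAlgClosed.splits p
  have hcard : p.roots.card = N + m := by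
    rw [Polynomial.splits_iff_card_roots.1 hsplit, hdeg]
  have hfact := Splits.eq_prod_roots_of_monic (f := Φ (N + m) t) hsplit hpm
  rw [← hp] at hfact
  have heval : ‖p.eval (zinf j)‖ = ((p.roots.map (fun a => ‖zinf j - a‖)).prod) := by
    conv_lhs => rw [hfact]
    rw [Polynomial.eval_multiset_prod, Multiset.map_map]
    simpa using map_multiset_prod (normHom : ℂ →*₀ ℝ).toMonoidHom
      (Multiset.map (fun a => zinf j - a) p.roots)
  have hge : ε ^ (N + m) ≤ ‖p.eval (zinf j)‖ := by
    rw [heval, ← hcard, ← Multiset.card_map (fun a => ‖zinf j - a‖) p.roots]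
    apply Stmt15.pow_card_le_prod_real hε
    intro x hx
    obtain ⟨a, ha, rfl⟩ := Multiset.mem_map.1 hx
    have hroot : p.eval a = 0 := Polynomial.isRoot_of_mem_roots ha
    have h4 := hcon a hroot
    rwa [norm_sub_rev] at h4
  exact absurd ht (not_lt.2 hge)
end

section
/- Largest-eigenvalue concentration: let ρ = Σ_{j=1}^N ρ_j δ_{x_j} be a probability measure on ℝ with x₁ > x₂ > ... > x_N and all ρ_j > 0, and set dρ_t(x) = e^{2tx} dρ(x)/∫ e^{2tx}dρ. Then for j ≤ N and q ≤ j, the zeros x_ℓ^{(j)}(t) of the degree-j monic orthogonal polynomial of ρ_t satisfy min_{ℓ≤j} |x_q − x_ℓ^{(j)}(t)|^{2j} ≤ ρ_q^{-1} (x₁ − x_N)^{2j} e^{2t(x_{j+1} − x_q)}; in particular each zero x_q^{(j)}(t) → x_q as t → ∞. -/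
open Polynomial Filter Topology

/-- Largest-eigenvalue concentration for the Toda-reweighted measure
`dρ_t ∝ e^{2tx} dρ`, where `ρ = Σ ρ_i δ_{x_i}` with `x_0 > x_1 > ⋯ > x_{N−1}`:
if `ξ t 0, …, ξ t (j−1)` are the zeros of the degree-`j` monic orthogonal polynomial of
`ρ_t`, then for `q < j`,
`min_ℓ |x_q − ξ_ℓ(t)|^{2j} ≤ ρ_q⁻¹ (x_0 − x_{N−1})^{2j} e^{2t(x_j − x_q)}`;
in particular some zero converges to `x_q` as `t → ∞`. (Indices are 0-based, so the paper's
`x_{j+1}` is `x j` here.) -/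
theorem stmt_19 (N : ℕ) (hN : 2 ≤ N) (x : Fin N → ℝ)
    (hx : ∀ i k : Fin N, i < k → x k < x i)
    (ρ : Fin N → ℝ) (hρ : ∀ i, 0 < ρ i) (hsum : ∑ i, ρ i = 1)
    (j : ℕ) (hj0 : 0 < j) (hjN : j < N)
    (ξ : ℝ → Fin j → ℝ)
    (horth : ∀ t : ℝ, ∀ Q : Polynomial ℝ, Q.degree < (j : WithBot ℕ) →
      ∑ i, Real.exp (2 * t * x i) * ρ i * ((∏ ℓ, (x i - ξ t ℓ)) * Q.eval (x i)) = 0) :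
    (∀ t : ℝ, ∀ q : Fin N, (q : ℕ) < j →
      (⨅ ℓ : Fin j, |x q - ξ t ℓ|) ^ (2 * j) ≤
        (ρ q)⁻¹ * (x ⟨0, by omega⟩ - x ⟨N - 1, by omega⟩) ^ (2 * j) *
          Real.exp (2 * t * (x ⟨j, hjN⟩ - x q))) ∧
      ∀ q : Fin N, (q : ℕ) < j →
        Tendsto (fun t => ⨅ ℓ : Fin j, |x q - ξ t ℓ|) atTop (nhds 0) := by
  have hN0 : 0 < N := by omega
  have hNe : Nonempty (Fin N) := ⟨⟨0, hN0⟩⟩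
  have hje : Nonempty (Fin j) := ⟨⟨0, hj0⟩⟩
  have hmono : ∀ i k : Fin N, i ≤ k → x k ≤ x i := by
    intro i k h
    rcases eq_or_lt_of_le h with h | h
    · rw [h]
    · exact (hx i k h).le
  set xlo : ℝ := x ⟨N - 1, by omega⟩ with hxlo_def
  set xhi : ℝ := x ⟨0, by omega⟩ with hxhi_def
  set xj : ℝ := x ⟨j, hjN⟩ with hxj_def
  have hbounds : ∀ i : Fin N, xlo ≤ x i ∧ x i ≤ xhi := by
    intro i
    constructor
    · exact hmono i ⟨N - 1, by omega⟩ (by simp [Fin.le_def]; omega)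
    · exact hmono ⟨0, by omega⟩ i (by simp [Fin.le_def])
  have hD : 0 < xhi - xlo := by
    have : (⟨0, by omega⟩ : Fin N) < ⟨N - 1, by omega⟩ := by
      simp [Fin.lt_def]; omega
    linarith [hx _ _ this]
  -- each atom has weight ≤ 1
  have hρle : ∀ i : Fin N, ρ i ≤ 1 := by
    intro i
    calc ρ i ≤ ∑ k, ρ k := Finset.single_le_sum (fun k _ => (hρ k).le) (Finset.mem_univ i)
    _ = 1 := hsum
  -- the infimum facts
  have hm_le : ∀ t (q : Fin N) (ℓ : Fin j), (⨅ ℓ : Fin j, |x q - ξ t ℓ|) ≤ |x q - ξ t ℓ| :=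
    fun t q ℓ => ciInf_le (Set.Finite.bddBelow (Set.finite_range _)) ℓ
  have hm0 : ∀ t (q : Fin N), 0 ≤ ⨅ ℓ : Fin j, |x q - ξ t ℓ| :=
    fun t q => le_ciInf fun ℓ => abs_nonneg _
  -- fallback: some zero lies in [xlo, xhi], hence the infimum is ≤ xhi - xlo
  have hfall : ∀ t (q : Fin N), (⨅ ℓ : Fin j, |x q - ξ t ℓ|) ≤ xhi - xlo := by
    intro t q
    by_contra hcon
    push_neg at hcon
    have hout : ∀ ℓ, ξ t ℓ < xlo ∨ xhi < ξ t ℓ := by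
      intro ℓ
      by_contra h
      push_neg at h
      obtain ⟨h1, h2⟩ := h
      have hb := hbounds q
      have : |x q - ξ t ℓ| ≤ xhi - xlo := by
        rw [abs_sub_le_iff]
        constructor <;> linarith
      exact absurd ((hm_le t q ℓ).trans this) (not_le.mpr hcon)
    have hPP : ∀ i : Fin N,
        0 < (∏ ℓ, (x i - ξ t ℓ)) * (∏ ℓ, (xhi - ξ t ℓ)) := by
      intro i
      rw [← Finset.prod_mul_distrib]
      apply Finset.prod_pos
      intro ℓ _
      rcases hout ℓ with h | h
      · have := (hbounds i).1
        exact mul_pos (by linarith) (by linarith)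
      · have := (hbounds i).2
        exact mul_pos_of_neg_of_neg (by linarith) (by linarith)
    have h1 := horth t 1 (by
      rw [Polynomial.degree_one]
      exact_mod_cast hj0)
    simp only [Polynomial.eval_one, mul_one] at h1
    have hpos : (0:ℝ) < ∑ i, (Real.exp (2 * t * x i) * ρ i * (∏ ℓ, (x i - ξ t ℓ)))
        * (∏ ℓ, (xhi - ξ t ℓ)) := by
      apply Finset.sum_pos _ Finset.univ_nonempty
      intro i _
      have h2 := hPP i
      have h3 := Real.exp_pos (2 * t * x i)
      have h4 := hρ i
      calc (0:ℝ) < (Real.exp (2 * t * x i) * ρ i) *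
            ((∏ ℓ, (x i - ξ t ℓ)) * (∏ ℓ, (xhi - ξ t ℓ))) := by positivity
      _ = (Real.exp (2 * t * x i) * ρ i * (∏ ℓ, (x i - ξ t ℓ)))
            * (∏ ℓ, (xhi - ξ t ℓ)) := by ring
    rw [← Finset.sum_mul, h1, zero_mul] at hpos
    exact lt_irrefl 0 hpos
  -- the main inequality
  have main : ∀ t : ℝ, ∀ q : Fin N, (q : ℕ) < j →
      (⨅ ℓ : Fin j, |x q - ξ t ℓ|) ^ (2 * j) ≤
        (ρ q)⁻¹ * (xhi - xlo) ^ (2 * j) * Real.exp (2 * t * (xj - x q)) := by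
    intro t q hq
    set m := ⨅ ℓ : Fin j, |x q - ξ t ℓ| with hm_def
    have hxjq : xj < x q := hx q ⟨j, hjN⟩ (by simp [Fin.lt_def]; omega)
    rcases le_or_gt t 0 with ht | ht
    · -- t ≤ 0 : use the fallback bound
      have h1 : m ^ (2 * j) ≤ (xhi - xlo) ^ (2 * j) :=
        pow_le_pow_left₀ (hm0 t q) (hfall t q) _
      have h2 : (1:ℝ) ≤ (ρ q)⁻¹ := by
        have ha := hρ q
        have hb := hρle q
        have hc := mul_inv_cancel₀ (ne_of_gt ha)
        nlinarith [inv_pos.mpr ha]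
      have h3 : (1:ℝ) ≤ Real.exp (2 * t * (xj - x q)) := by
        rw [Real.one_le_exp_iff]
        nlinarith
      have h4 : (0:ℝ) ≤ (xhi - xlo) ^ (2 * j) := by positivity
      nlinarith [mul_le_mul h2 h3 (by norm_num) (by linarith)]
    · -- t > 0 : variational argument
      -- the polynomial with zeros at the top j atoms
      set Qp : Polynomial ℝ := ∏ ℓ : Fin j, (X - C (x ⟨ℓ, by omega⟩)) with hQp_def
      set Pp : Polynomial ℝ := ∏ ℓ : Fin j, (X - C (ξ t ℓ)) with hPp_def
      have hQm : Qp.Monic := monic_prod_of_monic _ _ fun ℓ _ => monic_X_sub_C _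
      have hPm : Pp.Monic := monic_prod_of_monic _ _ fun ℓ _ => monic_X_sub_C _
      have hQdeg : Qp.degree = (j : WithBot ℕ) := by
        rw [hQp_def, Polynomial.degree_prod]
        simp [Polynomial.degree_X_sub_C]
      have hPdeg : Pp.degree = (j : WithBot ℕ) := by
        rw [hPp_def, Polynomial.degree_prod]
        simp [Polynomial.degree_X_sub_C]
      have hdeg : (Qp - Pp).degree < (j : WithBot ℕ) := by
        rcases eq_or_ne Qp Pp with h | h
        · simp [h]
        · calc (Qp - Pp).degree < Qp.degree := by
                apply Polynomial.degree_sub_lt (by rw [hQdeg, hPdeg]) hQm.ne_zero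
                rw [hQm.leadingCoeff, hPm.leadingCoeff]
          _ = (j : WithBot ℕ) := hQdeg
      have h1 := horth t (Qp - Pp) hdeg
      have hev : ∀ y : ℝ, (Qp - Pp).eval y =
          (∏ ℓ : Fin j, (y - x ⟨ℓ, by omega⟩)) - (∏ ℓ, (y - ξ t ℓ)) := by
        intro y
        simp [hQp_def, hPp_def, Polynomial.eval_prod]
      simp only [hev] at h1
      -- abbreviations
      set w : Fin N → ℝ := fun i => Real.exp (2 * t * x i) * ρ i with hw_def
      set P : Fin N → ℝ := fun i => ∏ ℓ, (x i - ξ t ℓ) with hP_def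
      set Qv : Fin N → ℝ := fun i => ∏ ℓ : Fin j, (x i - x ⟨ℓ, by omega⟩) with hQv_def
      have hwpos : ∀ i, 0 < w i := fun i => mul_pos (Real.exp_pos _) (hρ i)
      have h1' : ∑ i, w i * (P i * (Qv i - P i)) = 0 := h1
      -- variational inequality : ∑ w P² ≤ ∑ w Q²
      have key : ∑ i, w i * P i ^ 2 ≤ ∑ i, w i * Qv i ^ 2 := by
        have hexpand : ∑ i, (w i * Qv i ^ 2 - w i * P i ^ 2)
            = ∑ i, (w i * (Qv i - P i) ^ 2 + 2 * (w i * (P i * (Qv i - P i)))) :=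
          Finset.sum_congr rfl fun i _ => by ring
        rw [Finset.sum_sub_distrib, Finset.sum_add_distrib, ← Finset.mul_sum, h1',
          mul_zero, add_zero] at hexpand
        have hnn : (0:ℝ) ≤ ∑ i, w i * (Qv i - P i) ^ 2 :=
          Finset.sum_nonneg fun i _ => mul_nonneg (hwpos i).le (sq_nonneg _)
        linarith
      -- lower bound for ∑ w P²
      have hmP : m ^ (2 * j) ≤ P q ^ 2 := by
        have e1 : m ^ (2 * j) = ∏ _ℓ : Fin j, m ^ 2 := by
          rw [Finset.prod_const, Finset.card_univ, Fintype.card_fin, ← pow_mul, mul_comm]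
        have e2 : (∏ _ℓ : Fin j, m ^ 2) ≤ ∏ ℓ, (x q - ξ t ℓ) ^ 2 := by
          apply Finset.prod_le_prod (fun _ _ => sq_nonneg m)
          intro ℓ _
          have := pow_le_pow_left₀ (hm0 t q) (hm_le t q ℓ) 2
          rwa [sq_abs] at this
        rw [e1]
        calc (∏ _ℓ : Fin j, m ^ 2) ≤ ∏ ℓ, (x q - ξ t ℓ) ^ 2 := e2
        _ = P q ^ 2 := by rw [hP_def, Finset.prod_pow]
      have hlow : w q * m ^ (2 * j) ≤ ∑ i, w i * P i ^ 2 := by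
        calc w q * m ^ (2 * j) ≤ w q * P q ^ 2 :=
              mul_le_mul_of_nonneg_left hmP (hwpos q).le
        _ ≤ ∑ i, w i * P i ^ 2 :=
              Finset.single_le_sum (fun i _ => mul_nonneg (hwpos i).le (sq_nonneg _))
                (Finset.mem_univ q)
      -- upper bound for ∑ w Q²
      have hup : ∑ i, w i * Qv i ^ 2 ≤ Real.exp (2 * t * xj) * (xhi - xlo) ^ (2 * j) := by
        have hterm : ∀ i : Fin N, w i * Qv i ^ 2 ≤
            Real.exp (2 * t * xj) * (xhi - xlo) ^ (2 * j) * ρ i := by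
          intro i
          by_cases hi : (i : ℕ) < j
          · have hQ0 : Qv i = 0 := by
              rw [hQv_def]
              apply Finset.prod_eq_zero (Finset.mem_univ (⟨(i : ℕ), hi⟩ : Fin j))
              have : (⟨(i : ℕ), by omega⟩ : Fin N) = i := by
                apply Fin.ext; rfl
              rw [this]; ring
            rw [hQ0]
            have h3 := hρ i
            have h4 : (0:ℝ) ≤ (xhi - xlo) ^ (2 * j) := by positivity
            have h5 := Real.exp_pos (2 * t * xj)
            have h6 : (0:ℝ) ≤ Real.exp (2 * t * xj) * (xhi - xlo) ^ (2 * j) * ρ i :=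
              mul_nonneg (mul_nonneg h5.le h4) h3.le
            simpa using h6
          · push_neg at hi
            have hxij : x i ≤ xj :=
              hmono ⟨j, hjN⟩ i (by simp [Fin.le_def]; omega)
            have hE : Real.exp (2 * t * x i) ≤ Real.exp (2 * t * xj) := by
              apply Real.exp_le_exp.mpr
              nlinarith
            have hQb : Qv i ^ 2 ≤ (xhi - xlo) ^ (2 * j) := by
              have e1 : Qv i ^ 2 = ∏ ℓ : Fin j, (x i - x ⟨ℓ, by omega⟩) ^ 2 := by
                rw [hQv_def, Finset.prod_pow]
              have e2 : (∏ _ℓ : Fin j, ((xhi - xlo)) ^ 2) = (xhi - xlo) ^ (2 * j) := by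
                rw [Finset.prod_const, Finset.card_univ, Fintype.card_fin, ← pow_mul,
                  mul_comm]
              rw [e1, ← e2]
              apply Finset.prod_le_prod (fun _ _ => sq_nonneg _)
              intro ℓ _
              have hb1 := hbounds i
              have hb2 := hbounds ⟨ℓ, by omega⟩
              apply sq_le_sq' <;> linarith
            calc w i * Qv i ^ 2 = Real.exp (2 * t * x i) * Qv i ^ 2 * ρ i := by
                  rw [hw_def]; ring
            _ ≤ Real.exp (2 * t * xj) * (xhi - xlo) ^ (2 * j) * ρ i :=
                  mul_le_mul_of_nonneg_right
                    (mul_le_mul hE hQb (sq_nonneg _) (Real.exp_pos _).le) (hρ i).le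
        calc ∑ i, w i * Qv i ^ 2
            ≤ ∑ i, Real.exp (2 * t * xj) * (xhi - xlo) ^ (2 * j) * ρ i :=
              Finset.sum_le_sum fun i _ => hterm i
        _ = Real.exp (2 * t * xj) * (xhi - xlo) ^ (2 * j) * ∑ i, ρ i := by
              rw [Finset.mul_sum]
        _ = Real.exp (2 * t * xj) * (xhi - xlo) ^ (2 * j) := by rw [hsum, mul_one]
      -- combine
      have hchain : Real.exp (2 * t * x q) * ρ q * m ^ (2 * j)
          ≤ Real.exp (2 * t * xj) * (xhi - xlo) ^ (2 * j) := by
        calc Real.exp (2 * t * x q) * ρ q * m ^ (2 * j) = w q * m ^ (2 * j) := by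
              rw [hw_def]
        _ ≤ ∑ i, w i * P i ^ 2 := hlow
        _ ≤ ∑ i, w i * Qv i ^ 2 := key
        _ ≤ _ := hup
      have hpos2 : 0 < Real.exp (2 * t * x q) * ρ q :=
        mul_pos (Real.exp_pos _) (hρ q)
      have hEq : Real.exp (2 * t * (xj - x q))
          = Real.exp (2 * t * xj) / Real.exp (2 * t * x q) := by
        rw [← Real.exp_sub]
        congr 1
        ring
      rw [hEq]
      calc m ^ (2 * j)
          = (Real.exp (2 * t * x q) * ρ q)⁻¹
            * (Real.exp (2 * t * x q) * ρ q * m ^ (2 * j)) := by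
            rw [← mul_assoc, inv_mul_cancel₀ hpos2.ne', one_mul]
      _ ≤ (Real.exp (2 * t * x q) * ρ q)⁻¹
            * (Real.exp (2 * t * xj) * (xhi - xlo) ^ (2 * j)) :=
            mul_le_mul_of_nonneg_left hchain (inv_nonneg.mpr hpos2.le)
      _ = (ρ q)⁻¹ * (xhi - xlo) ^ (2 * j)
            * (Real.exp (2 * t * xj) / Real.exp (2 * t * x q)) := by
            rw [mul_inv, div_eq_mul_inv]
            ring
  refine ⟨main, ?_⟩
  -- convergence
  intro q hq
  have hxjq : xj < x q := hx q ⟨j, hjN⟩ (by simp [Fin.lt_def]; omega)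
  rw [NormedAddCommGroup.tendsto_nhds_zero]
  intro ε hε
  have hB : Tendsto (fun t : ℝ => (ρ q)⁻¹ * (xhi - xlo) ^ (2 * j)
      * Real.exp (2 * t * (xj - x q))) atTop (nhds 0) := by
    rw [show (0:ℝ) = (ρ q)⁻¹ * (xhi - xlo) ^ (2 * j) * 0 by ring]
    apply Tendsto.const_mul
    apply Real.tendsto_exp_atBot.comp
    have : ∀ t : ℝ, 2 * t * (xj - x q) = (2 * (xj - x q)) * t := fun t => by ring
    simp only [this]
    exact tendsto_id.const_mul_atTop_of_neg (by linarith)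
  have hev : ∀ᶠ t : ℝ in atTop, (ρ q)⁻¹ * (xhi - xlo) ^ (2 * j)
      * Real.exp (2 * t * (xj - x q)) < ε ^ (2 * j) := by
    have hεp : (0:ℝ) < ε ^ (2 * j) := by positivity
    exact hB.eventually_lt_const hεp
  filter_upwards [hev] with t ht
  have h1 : (⨅ ℓ : Fin j, |x q - ξ t ℓ|) ^ (2 * j) < ε ^ (2 * j) :=
    lt_of_le_of_lt (main t q hq) ht
  have h2 : (⨅ ℓ : Fin j, |x q - ξ t ℓ|) < ε :=
    lt_of_pow_lt_pow_left₀ _ hε.le h1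
  rw [Real.norm_eq_abs, abs_of_nonneg (hm0 t q)]
  exact h2
end
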